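/- arXiv:1605.02077 — 5 statements merged into one kernel-verified Lean document; each statement's English description precedes it below -/
import Mathlib

section
/- Let ε ∈ (0,1), let T := T_f(ε/2), and suppose the initial distribution π₀ satisfies d_f(π₀ᵀ Pᵗ, π) ≤ ε/2 for every t ∈ {0,1,…,T−1} (this holds automatically for all t ≥ T, and in particular whenever π₀ is the distribution of the chain after a burn-in of at least T steps from an arbitrary start). Let N be a positive integer multiple of T. Then P[ (1/N) · ∑_{n=1}^{N} f(X_n) ≥ μ + ε ] ≤ exp( − ε² N / (8 T) ). -/
open Finset

noncomputable section MarkovSetup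

variable {d : ℕ}

/-- `P` is a transition matrix: nonnegative entries, rows summing to one. -/
def IsTransMat (P : Matrix (Fin d) (Fin d) ℝ) : Prop :=
  (∀ i j, 0 ≤ P i j) ∧ (∀ i, ∑ j, P i j = 1)

/-- Irreducibility of the chain. -/
def IsIrreducibleMat (P : Matrix (Fin d) (Fin d) ℝ) : Prop :=
  ∀ i j, ∃ n : ℕ, 0 < (P ^ n) i j

/-- Aperiodicity of the chain (for each state, eventually positive return probabilities). -/
def IsAperiodicMat (P : Matrix (Fin d) (Fin d) ℝ) : Prop :=
  ∀ i, ∃ N : ℕ, ∀ n, N ≤ n → 0 < (P ^ n) i i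

/-- A probability vector. -/
def IsProbVec (p : Fin d → ℝ) : Prop := (∀ i, 0 ≤ p i) ∧ ∑ i, p i = 1

/-- `π` is the stationary distribution of `P`, with strictly positive entries. -/
def IsStationaryDist (P : Matrix (Fin d) (Fin d) ℝ) (π : Fin d → ℝ) : Prop :=
  (∀ i, 0 < π i) ∧ (∑ i, π i = 1) ∧ (∀ j, ∑ i, π i * P i j = π j)

/-- Reversibility of `P` with respect to `π`. -/
def IsReversibleMat (P : Matrix (Fin d) (Fin d) ℝ) (π : Fin d → ℝ) : Prop :=
  ∀ i j, π i * P i j = π j * P j i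

/-- The `f`-discrepancy `d_f(p, q) = |∑ᵢ pᵢ fᵢ − ∑ᵢ qᵢ fᵢ|`. -/
def fDisc (f p q : Fin d → ℝ) : ℝ := |∑ i, p i * f i - ∑ i, q i * f i|

/-- The `f`-mixing time `T_f(δ) = min {n ≥ 1 : ∀ i, d_f(δᵢᵀ Pⁿ, π) ≤ δ}`. -/
def fMixTime (P : Matrix (Fin d) (Fin d) ℝ) (π f : Fin d → ℝ) (δ : ℝ) : ℕ :=
  sInf {n : ℕ | 1 ≤ n ∧ ∀ i, fDisc f (fun j => (P ^ n) i j) π ≤ δ}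

/-- Total variation distance between probability vectors. -/
def tvDist (p q : Fin d → ℝ) : ℝ := (1 / 2) * ∑ i, |p i - q i|

/-- Mass of a trajectory `(X₀, …, X_N)` under the chain `P` started from `π₀`. -/
def pathMass (P : Matrix (Fin d) (Fin d) ℝ) (π₀ : Fin d → ℝ) (N : ℕ)
    (x : Fin (N + 1) → Fin d) : ℝ :=
  π₀ (x 0) * ∏ n : Fin N, P (x n.castSucc) (x n.succ)

open scoped Classical in
/-- Probability of an event under the trajectory law of `(X₀, …, X_N)`. -/
def pathProb (P : Matrix (Fin d) (Fin d) ℝ) (π₀ : Fin d → ℝ) (N : ℕ)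
    (E : (Fin (N + 1) → Fin d) → Prop) : ℝ :=
  ∑ x : Fin (N + 1) → Fin d, if E x then pathMass P π₀ N x else 0

/-- Expectation of a functional of the trajectory `(X₀, …, X_N)`. -/
def pathExp (P : Matrix (Fin d) (Fin d) ℝ) (π₀ : Fin d → ℝ) (N : ℕ)
    (g : (Fin (N + 1) → Fin d) → ℝ) : ℝ :=
  ∑ x : Fin (N + 1) → Fin d, pathMass P π₀ N x * g x

end MarkovSetup

/-! ### Auxiliary lemmas -/

section Aux

lemma exp_le_quadratic {x : ℝ} (hx : |x| ≤ 1) : Real.exp x ≤ 1 + x + 3/4 * x^2 := by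
  have h := Real.exp_bound hx (n := 2) (by norm_num)
  have h2 : ∑ m ∈ Finset.range 2, x ^ m / m.factorial = 1 + x := by
    simp [Finset.sum_range_succ]
  rw [h2] at h
  have h3 := (abs_sub_le_iff.1 h).1
  norm_num [Nat.factorial] at h3
  nlinarith [sq_abs x]

variable {d : ℕ}

lemma key_step (f : Fin d → ℝ) (hf : ∀ i, f i ∈ Set.Icc (0:ℝ) 1) (μ : ℝ)
    {q : Fin d → ℝ} (hq : IsProbVec q) {ε c : ℝ}
    (hc0 : 0 ≤ c) (hc1 : c ≤ 1) (hclose : |∑ i, q i * f i - μ| ≤ ε/2) :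
    ∑ j, q j * Real.exp (c * (f j - μ - ε/2)) ≤ Real.exp (3/16 * c^2) := by
  obtain ⟨hq0, hq1⟩ := hq
  set m : ℝ := ∑ i, q i * f i with hm
  have hm0 : 0 ≤ m := Finset.sum_nonneg fun i _ => mul_nonneg (hq0 i) (hf i).1
  have hm1 : m ≤ 1 := by
    calc m ≤ ∑ i, q i := Finset.sum_le_sum fun i _ => by
            nlinarith [(hf i).1, (hf i).2, hq0 i]
      _ = 1 := hq1
  have hsplit : ∀ j, Real.exp (c * (f j - μ - ε/2))
      = Real.exp (c * (f j - m)) * Real.exp (c * (m - μ - ε/2)) := by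
    intro j; rw [← Real.exp_add]; ring_nf
  have hfac : Real.exp (c * (m - μ - ε/2)) ≤ 1 := by
    apply Real.exp_le_one_iff.2
    have : m - μ ≤ ε/2 := (abs_le.1 hclose).2
    nlinarith
  have hvar : ∑ j, q j * (f j - m)^2 ≤ 1/4 := by
    have hexp : ∑ j, q j * (f j - m)^2 = (∑ j, q j * (f j)^2) - m^2 := by
      have : ∀ j, q j * (f j - m)^2 = q j * (f j)^2 - 2*m*(q j * f j) + m^2 * q j := by
        intro j; ring
      rw [Finset.sum_congr rfl fun j _ => this j]
      rw [Finset.sum_add_distrib, Finset.sum_sub_distrib, ← Finset.mul_sum, ← Finset.mul_sum,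
        hq1, ← hm]
      ring
    have hsq : ∑ j, q j * (f j)^2 ≤ m := by
      rw [hm]
      apply Finset.sum_le_sum
      intro i _
      nlinarith [mul_nonneg (hq0 i) (mul_nonneg (hf i).1 (sub_nonneg.2 (hf i).2))]
    nlinarith [sq_nonneg (m - 1/2)]
  have hquad : ∑ j, q j * Real.exp (c * (f j - m)) ≤ 1 + 3/4 * c^2 * ∑ j, q j * (f j - m)^2 := by
    have hle : ∀ j, q j * Real.exp (c * (f j - m))
        ≤ q j * (1 + c * (f j - m) + 3/4 * (c * (f j - m))^2) := by
      intro j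
      apply mul_le_mul_of_nonneg_left _ (hq0 j)
      apply exp_le_quadratic
      rw [abs_mul, abs_of_nonneg hc0]
      have h1 : |f j - m| ≤ 1 := by
        rw [abs_le]; constructor <;> nlinarith [(hf j).1, (hf j).2]
      nlinarith [abs_nonneg (f j - m)]
    calc ∑ j, q j * Real.exp (c * (f j - m))
        ≤ ∑ j, q j * (1 + c * (f j - m) + 3/4 * (c * (f j - m))^2) :=
          Finset.sum_le_sum fun j _ => hle j
      _ = 1 + 3/4 * c^2 * ∑ j, q j * (f j - m)^2 := by
          have : ∀ j, q j * (1 + c * (f j - m) + 3/4 * (c * (f j - m))^2)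
              = q j + c * (q j * f j - m * q j) + 3/4 * c^2 * (q j * (f j - m)^2) := by
            intro j; ring
          rw [Finset.sum_congr rfl fun j _ => this j, Finset.sum_add_distrib,
            Finset.sum_add_distrib, hq1]
          have hz : ∑ j, c * (q j * f j - m * q j) = 0 := by
            rw [← Finset.mul_sum, Finset.sum_sub_distrib, ← Finset.mul_sum, hq1, ← hm]
            ring
          rw [hz, ← Finset.mul_sum]
          ring
  calc ∑ j, q j * Real.exp (c * (f j - μ - ε/2))
      = (∑ j, q j * Real.exp (c * (f j - m))) * Real.exp (c * (m - μ - ε/2)) := by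
        rw [Finset.sum_mul]
        exact Finset.sum_congr rfl fun j _ => by rw [hsplit j]; ring
    _ ≤ (1 + 3/16 * c^2) * 1 := by
        apply mul_le_mul _ hfac (Real.exp_nonneg _) (by nlinarith)
        calc ∑ j, q j * Real.exp (c * (f j - m))
            ≤ 1 + 3/4 * c^2 * ∑ j, q j * (f j - m)^2 := hquad
          _ ≤ 1 + 3/16 * c^2 := by nlinarith
    _ ≤ Real.exp (3/16 * c^2) := by
        rw [mul_one]
        have := Real.add_one_le_exp (3/16 * c^2)
        linarith

lemma transMat_pow {P : Matrix (Fin d) (Fin d) ℝ} (hP : IsTransMat P) (n : ℕ) :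
    IsTransMat (P ^ n) := by
  induction n with
  | zero =>
    constructor
    · intro i j
      simp only [pow_zero, Matrix.one_apply]
      split <;> norm_num
    · intro i
      simp [Matrix.one_apply]
  | succ n ih =>
    constructor
    · intro i j
      rw [pow_succ, Matrix.mul_apply]
      exact Finset.sum_nonneg fun k _ => mul_nonneg (ih.1 i k) (hP.1 k j)
    · intro i
      rw [Finset.sum_congr rfl fun j (_ : j ∈ Finset.univ) => by rw [pow_succ, Matrix.mul_apply]]
      rw [Finset.sum_comm]
      calc ∑ k, ∑ j, (P ^ n) i k * P k j = ∑ k, (P ^ n) i k * ∑ j, P k j :=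
            Finset.sum_congr rfl fun k _ => (Finset.mul_sum _ _ _).symm
        _ = 1 := by
            rw [Finset.sum_congr rfl fun k (_ : k ∈ Finset.univ) => by rw [hP.2 k, mul_one]]
            exact ih.2 i

lemma probVec_vecMul {p : Fin d → ℝ} {Q : Matrix (Fin d) (Fin d) ℝ}
    (hp : IsProbVec p) (hQ : IsTransMat Q) : IsProbVec (Matrix.vecMul p Q) := by
  constructor
  · intro j
    rw [Matrix.vecMul, dotProduct]
    exact Finset.sum_nonneg fun i _ => mul_nonneg (hp.1 i) (hQ.1 i j)
  · simp only [Matrix.vecMul, dotProduct]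
    rw [Finset.sum_comm]
    calc ∑ i, ∑ j, p i * Q i j = ∑ i, p i * ∑ j, Q i j :=
          Finset.sum_congr rfl fun i _ => (Finset.mul_sum _ _ _).symm
      _ = 1 := by
          rw [Finset.sum_congr rfl fun i (_ : i ∈ Finset.univ) => by rw [hQ.2 i, mul_one]]
          exact hp.2

lemma mean_vecMul_close {q : Fin d → ℝ} {Q : Matrix (Fin d) (Fin d) ℝ}
    (hq : IsProbVec q) (f : Fin d → ℝ) (μ δ : ℝ)
    (hrows : ∀ i, |(∑ j, Q i j * f j) - μ| ≤ δ) :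
    |(∑ j, Matrix.vecMul q Q j * f j) - μ| ≤ δ := by
  have hswap : ∑ j, Matrix.vecMul q Q j * f j = ∑ i, q i * ∑ j, Q i j * f j := by
    simp only [Matrix.vecMul, dotProduct]
    rw [Finset.sum_congr rfl fun j (_ : j ∈ Finset.univ) => Finset.sum_mul _ _ (f j)]
    rw [Finset.sum_comm]
    apply Finset.sum_congr rfl
    intro i _
    rw [Finset.mul_sum]
    exact Finset.sum_congr rfl fun j _ => by ring
  have hμ : μ = ∑ i, q i * μ := by rw [← Finset.sum_mul, hq.2, one_mul]
  rw [hswap]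
  calc |(∑ i, q i * ∑ j, Q i j * f j) - μ|
      = |∑ i, q i * ((∑ j, Q i j * f j) - μ)| := by
        rw [hμ]
        congr 1
        rw [← Finset.sum_sub_distrib]
        apply Finset.sum_congr rfl
        intro i _
        rw [← hμ]
        ring
    _ ≤ ∑ i, |q i * ((∑ j, Q i j * f j) - μ)| := Finset.abs_sum_le_sum_abs _ _
    _ ≤ ∑ i, q i * δ := by
        apply Finset.sum_le_sum
        intro i _
        rw [abs_mul, abs_of_nonneg (hq.1 i)]
        exact mul_le_mul_of_nonneg_left (hrows i) (hq.1 i)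
    _ = δ := by rw [← Finset.sum_mul, hq.2, one_mul]

/-- The weighted state-vector evolution of the chain. -/
def evolve (P : Matrix (Fin d) (Fin d) ℝ) (π₀ : Fin d → ℝ) (w : ℕ → Fin d → ℝ) :
    ℕ → Fin d → ℝ
  | 0 => fun i => π₀ i * w 0 i
  | n+1 => fun j => (∑ i, evolve P π₀ w n i * P i j) * w (n+1) j

lemma evolve_nonneg {P : Matrix (Fin d) (Fin d) ℝ} {π₀ : Fin d → ℝ} {w : ℕ → Fin d → ℝ}
    (hπ₀ : ∀ i, 0 ≤ π₀ i) (hP : ∀ i j, 0 ≤ P i j) (hw : ∀ n i, 0 ≤ w n i) :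
    ∀ n i, 0 ≤ evolve P π₀ w n i := by
  intro n
  induction n with
  | zero => intro i; exact mul_nonneg (hπ₀ i) (hw 0 i)
  | succ n ih =>
    intro j
    exact mul_nonneg (Finset.sum_nonneg fun i _ => mul_nonneg (ih i) (hP i j)) (hw (n+1) j)

lemma pathSum_eq_evolve (P : Matrix (Fin d) (Fin d) ℝ) (π₀ : Fin d → ℝ)
    (w : ℕ → Fin d → ℝ) :
    ∀ (N : ℕ) (j : Fin d),
      (∑ x : Fin (N+1) → Fin d, if x (Fin.last N) = j then
        pathMass P π₀ N x * ∏ n : Fin (N+1), w ↑n (x n) else 0) = evolve P π₀ w N j := by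
  intro N
  induction N with
  | zero =>
    intro j
    rw [Fintype.sum_equiv (Equiv.funUnique (Fin 1) (Fin d)) _
      (fun i => if i = j then π₀ i * w 0 i else 0) (fun x => by
        simp [pathMass, Equiv.funUnique, Fin.last])]
    rw [Finset.sum_ite_eq' Finset.univ j]
    simp [evolve]
  | succ N ih =>
    intro j
    rw [← Equiv.sum_comp (Fin.snocEquiv (fun _ => Fin d))]
    rw [Fintype.sum_prod_type]
    have hterm : ∀ (a : Fin d) (y : Fin (N+1) → Fin d),
        (if (Fin.snocEquiv (fun _ => Fin d) (a, y)) (Fin.last (N+1)) = j then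
          pathMass P π₀ (N+1) (Fin.snocEquiv (fun _ => Fin d) (a, y)) *
            ∏ n : Fin (N+2), w ↑n ((Fin.snocEquiv (fun _ => Fin d) (a, y)) n) else 0)
        = if a = j then (pathMass P π₀ N y * ∏ n : Fin (N+1), w ↑n (y n)) *
            (P (y (Fin.last N)) a * w (N+1) a) else 0 := by
      intro a y
      have hsnoc : Fin.snocEquiv (fun _ => Fin d) (a, y) = Fin.snoc y a := rfl
      rw [hsnoc]
      have hlast : (Fin.snoc y a : Fin (N+2) → Fin d) (Fin.last (N+1)) = a := by simp
      rw [hlast]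
      congr 1
      have hmass : pathMass P π₀ (N+1) (Fin.snoc y a)
          = pathMass P π₀ N y * P (y (Fin.last N)) a := by
        unfold pathMass
        rw [Fin.prod_univ_castSucc (n := N)]
        have h0 : (Fin.snoc y a : Fin (N+2) → Fin d) 0 = y 0 := by
          have : (0 : Fin (N+2)) = Fin.castSucc 0 := rfl
          rw [this, Fin.snoc_castSucc]
        rw [h0]
        have hfac : ∀ n : Fin N,
            P ((Fin.snoc y a : Fin (N+2) → Fin d) n.castSucc.castSucc)
              ((Fin.snoc y a : Fin (N+2) → Fin d) n.castSucc.succ)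
            = P (y n.castSucc) (y n.succ) := by
          intro n
          rw [Fin.snoc_castSucc]
          have : (n.castSucc.succ : Fin (N+2)) = Fin.castSucc n.succ := by
            rw [Fin.succ_castSucc]
          rw [this, Fin.snoc_castSucc]
        have hlastfac :
            P ((Fin.snoc y a : Fin (N+2) → Fin d) (Fin.last N).castSucc)
              ((Fin.snoc y a : Fin (N+2) → Fin d) (Fin.last N).succ)
            = P (y (Fin.last N)) a := by
          rw [Fin.snoc_castSucc]
          have : ((Fin.last N).succ : Fin (N+2)) = Fin.last (N+1) := rfl
          rw [this, Fin.snoc_last]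
        rw [Finset.prod_congr rfl fun n _ => hfac n, hlastfac]
        ring
      have hprod : ∏ n : Fin (N+2), w ↑n ((Fin.snoc y a : Fin (N+2) → Fin d) n)
          = (∏ n : Fin (N+1), w ↑n (y n)) * w (N+1) a := by
        rw [Fin.prod_univ_castSucc (n := N+1)]
        congr 1
        · apply Finset.prod_congr rfl
          intro n _
          rw [Fin.snoc_castSucc]
          norm_num
        · rw [Fin.snoc_last]
          norm_num [Fin.last]
      rw [hmass, hprod]
      ring
    rw [Finset.sum_congr rfl fun a _ => Finset.sum_congr rfl fun y _ => hterm a y]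
    rw [Finset.sum_comm]
    show (∑ y : Fin (N+1) → Fin d, ∑ a : Fin d, _) = _
    have hcollapse : ∀ y : Fin (N+1) → Fin d,
        (∑ a : Fin d, if a = j then (pathMass P π₀ N y * ∏ n : Fin (N+1), w ↑n (y n)) *
          (P (y (Fin.last N)) a * w (N+1) a) else 0)
        = (pathMass P π₀ N y * ∏ n : Fin (N+1), w ↑n (y n)) *
            (P (y (Fin.last N)) j * w (N+1) j) := by
      intro y
      rw [Finset.sum_ite_eq' Finset.univ j]
      simp
    rw [Finset.sum_congr rfl fun y _ => hcollapse y]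
    show _ = (∑ i, evolve P π₀ w N i * P i j) * w (N+1) j
    rw [Finset.sum_mul]
    have : ∀ i, evolve P π₀ w N i * P i j * w (N+1) j
        = (∑ x : Fin (N+1) → Fin d, if x (Fin.last N) = i then
            pathMass P π₀ N x * ∏ n : Fin (N+1), w ↑n (x n) else 0) * (P i j * w (N+1) j) := by
      intro i; rw [ih i]; ring
    rw [Finset.sum_congr rfl fun i _ => this i]
    rw [Finset.sum_congr rfl fun i (_ : i ∈ Finset.univ) => Finset.sum_mul _ _ _]
    rw [Finset.sum_comm]
    apply Finset.sum_congr rfl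
    intro y _
    rw [Finset.sum_congr rfl (fun i (_ : i ∈ Finset.univ) => ite_mul _ _ _ _)]
    simp only [zero_mul]
    rw [Finset.sum_ite_eq Finset.univ (y (Fin.last N))]
    simp [mul_assoc]

lemma evolve_skip (P : Matrix (Fin d) (Fin d) ℝ) (π₀ : Fin d → ℝ) (w : ℕ → Fin d → ℝ)
    (n : ℕ) : ∀ (s : ℕ), 1 ≤ s → (∀ m, n < m → m < n + s → ∀ i, w m i = 1) →
    ∀ j, evolve P π₀ w (n + s) j = (∑ i, evolve P π₀ w n i * (P ^ s) i j) * w (n + s) j := by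
  intro s
  induction s with
  | zero => omega
  | succ s ih =>
    intro _ hw j
    rcases Nat.eq_zero_or_pos s with hs | hs
    · subst hs
      show evolve P π₀ w (n+1) j = _
      simp only [evolve, pow_one, zero_add]
    · have hmid : ∀ i, w (n + s) i = 1 := hw (n+s) (by omega) (by omega)
      have hstep : n + (s+1) = (n + s) + 1 := by omega
      rw [hstep]
      show (∑ i, evolve P π₀ w (n+s) i * P i j) * w ((n+s)+1) j = _
      have hrw : ∀ i, evolve P π₀ w (n+s) i = ∑ a, evolve P π₀ w n a * (P ^ s) a i := by
        intro i
        rw [ih hs (fun m h1 h2 => hw m h1 (by omega)) i, hmid i, mul_one]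
      rw [Finset.sum_congr rfl fun i _ => by rw [hrw i]]
      congr 1
      rw [Finset.sum_congr rfl fun i (_ : i ∈ Finset.univ) => Finset.sum_mul _ _ _]
      rw [Finset.sum_comm]
      apply Finset.sum_congr rfl
      intro a _
      rw [pow_succ, Matrix.mul_apply, Finset.mul_sum]
      apply Finset.sum_congr rfl
      intro i _
      ring

/-- State at (padded) time `n` along a trajectory. -/
def Xof {d N : ℕ} (x : Fin (N+1) → Fin d) (n : ℕ) : Fin d :=
  x ⟨n % (N+1), Nat.mod_lt _ (Nat.succ_pos N)⟩

lemma Xof_eq {d N : ℕ} (x : Fin (N+1) → Fin d) (n : ℕ) (h : n < N + 1) :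
    Xof x n = x ⟨n, h⟩ := by
  unfold Xof
  congr 1
  exact Fin.ext (Nat.mod_eq_of_lt h)

end Aux

section Aux2

variable {d : ℕ}

lemma sum_range_split (T K : ℕ) (hT1 : 1 ≤ T) (a : ℕ → ℝ) :
    ∑ n ∈ Finset.range (T*K), a n = ∑ r ∈ Finset.range T, ∑ k ∈ Finset.range K, a (r + T*k) := by
  rw [← Finset.sum_product']
  have hTK : T * K = K * T := Nat.mul_comm T K
  apply Finset.sum_nbij' (i := fun n => ((n % T, n / T) : ℕ × ℕ)) (j := fun p => p.1 + T * p.2)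
  · intro n hn
    rw [Finset.mem_range] at hn
    rw [Finset.mem_product, Finset.mem_range, Finset.mem_range]
    refine ⟨Nat.mod_lt _ (by omega), ?_⟩
    rw [Nat.div_lt_iff_lt_mul (by omega : 0 < T)]
    omega
  · rintro ⟨p1, p2⟩ hp
    rw [Finset.mem_product, Finset.mem_range, Finset.mem_range] at hp
    rw [Finset.mem_range]
    show p1 + T * p2 < T * K
    obtain ⟨hp1, hp2⟩ := hp
    have h1 : T * (p2 + 1) ≤ T * K := Nat.mul_le_mul_left T (by omega)
    have h2 : T * (p2 + 1) = T * p2 + T := by ring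
    omega
  · intro n hn
    show n % T + T * (n / T) = n
    exact Nat.mod_add_div n T
  · rintro ⟨p1, p2⟩ hp
    rw [Finset.mem_product, Finset.mem_range, Finset.mem_range] at hp
    show ((p1 + T * p2) % T, (p1 + T * p2) / T) = (p1, p2)
    have h1 : (p1 + T * p2) % T = p1 % T := Nat.add_mul_mod_self_left p1 T p2
    have h2 : p1 % T = p1 := Nat.mod_eq_of_lt hp.1
    have h3 : (p1 + T * p2) / T = p1 / T + p2 := Nat.add_mul_div_left p1 p2 (by omega)
    have h4 : p1 / T = 0 := Nat.div_eq_of_lt hp.1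
    rw [h1, h2, h3, h4]
    simp
  · intro n hn
    show a n = a (n % T + T * (n / T))
    congr 1
    exact (Nat.mod_add_div n T).symm

lemma prod_w_eq {d : ℕ} (f : Fin d → ℝ) (μ ε : ℝ) (T K r : ℕ) (hT1 : 1 ≤ T) (hr : r < T)
    (N : ℕ) (hNK : N = T * K) (x : Fin (N+1) → Fin d) :
    (∏ n : Fin (N+1), (if 1 ≤ (n:ℕ) ∧ ((n:ℕ)-1) % T = r then
        Real.exp (ε * (f (x n) - μ - ε/2)) else 1))
      = Real.exp (ε * ∑ k ∈ Finset.range K, (f (Xof x (r + T*k + 1)) - μ - ε/2)) := by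
  have h1 : ∀ n : Fin (N+1), (if 1 ≤ (n:ℕ) ∧ ((n:ℕ)-1) % T = r then
      Real.exp (ε * (f (x n) - μ - ε/2)) else 1)
      = (fun m : ℕ => if 1 ≤ m ∧ (m-1) % T = r then
          Real.exp (ε * (f (Xof x m) - μ - ε/2)) else 1) ↑n := by
    intro n
    have : Xof x ↑n = x n := by rw [Xof_eq x ↑n n.isLt]
    simp only [this]
  rw [Finset.prod_congr rfl fun n _ => h1 n]
  rw [Fin.prod_univ_eq_prod_range
    (fun m : ℕ => if 1 ≤ m ∧ (m-1) % T = r then Real.exp (ε * (f (Xof x m) - μ - ε/2)) else 1)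
    (N+1)]
  rw [← Finset.prod_filter]
  have hbij : ∏ n ∈ (Finset.range (N+1)).filter (fun m => 1 ≤ m ∧ (m-1) % T = r),
      Real.exp (ε * (f (Xof x n) - μ - ε/2))
      = ∏ k ∈ Finset.range K, Real.exp (ε * (f (Xof x (r + T*k + 1)) - μ - ε/2)) := by
    apply Finset.prod_nbij' (i := fun n => (n-1)/T) (j := fun k => r + T*k + 1)
    · intro n hn
      rw [Finset.mem_filter, Finset.mem_range] at hn
      obtain ⟨hn1, hn2, hn3⟩ := hn
      rw [Finset.mem_range]
      have hdm := Nat.div_add_mod (n-1) T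
      rw [hn3] at hdm
      have h3 : T * ((n-1)/T) < T * K := by omega
      exact Nat.lt_of_mul_lt_mul_left h3
    · intro k hk
      rw [Finset.mem_range] at hk
      rw [Finset.mem_filter, Finset.mem_range]
      have h4 : T * (k+1) ≤ T * K := Nat.mul_le_mul_left T (by omega)
      have h5 : T * (k+1) = T * k + T := by ring
      refine ⟨by omega, by omega, ?_⟩
      have h6 : r + T*k + 1 - 1 = r + T*k := by omega
      rw [h6, Nat.add_mul_mod_self_left, Nat.mod_eq_of_lt hr]
    · intro n hn
      rw [Finset.mem_filter, Finset.mem_range] at hn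
      obtain ⟨hn1, hn2, hn3⟩ := hn
      have hdm := Nat.div_add_mod (n-1) T
      rw [hn3] at hdm
      show r + T * ((n-1)/T) + 1 = n
      omega
    · intro k hk
      rw [Finset.mem_range] at hk
      show (r + T*k + 1 - 1)/T = k
      have h6 : r + T*k + 1 - 1 = r + T*k := by omega
      rw [h6, Nat.add_mul_div_left _ _ (by omega : 0 < T), Nat.div_eq_of_lt hr]
      omega
    · intro n hn
      rw [Finset.mem_filter, Finset.mem_range] at hn
      obtain ⟨hn1, hn2, hn3⟩ := hn
      have hdm := Nat.div_add_mod (n-1) T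
      rw [hn3] at hdm
      have : r + T * ((n-1)/T) + 1 = n := by omega
      rw [this]
  rw [hbij, ← Real.exp_sum, Finset.mul_sum]

lemma block_bound {d : ℕ} (P : Matrix (Fin d) (Fin d) ℝ) (π₀ f : Fin d → ℝ)
    (hP : IsTransMat P) (hπ₀ : IsProbVec π₀) (hf : ∀ i, f i ∈ Set.Icc (0:ℝ) 1)
    (μ ε : ℝ) (hε0 : 0 < ε) (hε1 : ε ≤ 1)
    (T K : ℕ) (hT1 : 1 ≤ T) (hK1 : 1 ≤ K) (r : ℕ) (hr : r < T)
    (hrow : ∀ i, |(∑ j, (P ^ T) i j * f j) - μ| ≤ ε/2)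
    (hA : ∀ t : ℕ, |(∑ j, Matrix.vecMul π₀ (P ^ t) j * f j) - μ| ≤ ε/2) :
    ∑ j, evolve P π₀
      (fun n i => if 1 ≤ n ∧ (n-1) % T = r then Real.exp (ε * (f i - μ - ε/2)) else 1) (T*K) j
      ≤ Real.exp (K * (3/16 * ε^2)) := by
  set g : Fin d → ℝ := fun i => Real.exp (ε * (f i - μ - ε/2)) with hg
  set w : ℕ → Fin d → ℝ := fun n i => if 1 ≤ n ∧ (n-1) % T = r then g i else 1 with hwdef
  have hgpos : ∀ i, (0:ℝ) < g i := fun i => Real.exp_pos _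
  have hwnn : ∀ n i, 0 ≤ w n i := by
    intro n i
    rw [hwdef]
    dsimp only
    split
    · exact (hgpos i).le
    · exact zero_le_one
  have hwone : ∀ n, ¬(1 ≤ n ∧ (n-1) % T = r) → ∀ i, w n i = 1 := by
    intro n h i
    rw [hwdef]
    dsimp only
    rw [if_neg h]
  have hwg : ∀ n, (1 ≤ n ∧ (n-1) % T = r) → ∀ i, w n i = g i := by
    intro n h i
    rw [hwdef]
    dsimp only
    rw [if_pos h]
  have hPn := transMat_pow hP
  have hrowP : ∀ i, IsProbVec (fun j => (P^T) i j) := fun i => ⟨fun j => (hPn T).1 i j, (hPn T).2 i⟩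
  have hkrow : ∀ i, ∑ j, (P^T) i j * g j ≤ Real.exp (3/16 * ε^2) := by
    intro i
    rw [hg]
    exact key_step f hf μ (hrowP i) hε0.le hε1 (hrow i)
  have hkinit : ∀ t, ∑ j, Matrix.vecMul π₀ (P^t) j * g j ≤ Real.exp (3/16 * ε^2) := by
    intro t
    rw [hg]
    exact key_step f hf μ (probVec_vecMul hπ₀ (hPn t)) hε0.le hε1 (hA t)
  have hnn := evolve_nonneg hπ₀.1 hP.1 hwnn
  have claim : ∀ k, k < K →
      ∑ i, evolve P π₀ w (r + T*k + 1) i ≤ Real.exp (3/16 * ε^2) ^ (k+1) := by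
    intro k
    induction k with
    | zero =>
      intro _
      have hmid : ∀ m, 0 < m → m < 0 + (r+1) → ∀ i, w m i = 1 := by
        intro m h1 h2 i
        apply hwone
        rintro ⟨hm1, hmod⟩
        have : (m-1) % T = m-1 := Nat.mod_eq_of_lt (by omega)
        omega
      have hskip := evolve_skip P π₀ w 0 (r+1) (by omega) hmid
      have hidx : r + T*0 + 1 = 0 + (r+1) := by omega
      rw [hidx]
      rw [Finset.sum_congr rfl fun j _ => hskip j]
      have hw0 : ∀ i, evolve P π₀ w 0 i = π₀ i := by
        intro i
        show π₀ i * w 0 i = π₀ i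
        rw [hwone 0 (by omega) i, mul_one]
      have hwg1 : ∀ i, w (0 + (r+1)) i = g i := by
        intro i
        apply hwg
        constructor
        · omega
        · have : 0 + (r+1) - 1 = r := by omega
          rw [this, Nat.mod_eq_of_lt hr]
      have hconv : ∀ j, (∑ i, evolve P π₀ w 0 i * (P^(r+1)) i j) * w (0+(r+1)) j
          = Matrix.vecMul π₀ (P^(r+1)) j * g j := by
        intro j
        rw [hwg1 j]
        congr 1
        rw [Finset.sum_congr rfl fun i (_ : i ∈ Finset.univ) => by rw [hw0 i]]
        simp [Matrix.vecMul, dotProduct]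
      rw [Finset.sum_congr rfl fun j _ => hconv j, pow_one]
      exact hkinit (r+1)
    | succ k ihk =>
      intro hkK
      have hprev := ihk (by omega)
      have hmid : ∀ m, r + T*k + 1 < m → m < (r + T*k + 1) + T → ∀ i, w m i = 1 := by
        intro m h1 h2 i
        apply hwone
        rintro ⟨hm1, hmod⟩
        have hdm := Nat.div_add_mod (m-1) T
        rw [hmod] at hdm
        have h3 : T*k < T * ((m-1)/T) := by omega
        have h4 : k < (m-1)/T := Nat.lt_of_mul_lt_mul_left h3
        have h5 : T*(k+1) ≤ T * ((m-1)/T) := Nat.mul_le_mul_left T (by omega)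
        have h6 : T*(k+1) = T*k + T := by ring
        omega
      have hskip := evolve_skip P π₀ w (r + T*k + 1) T (by omega) hmid
      have h6 : T*(k+1) = T*k + T := by ring
      have hidx : r + T*(k+1) + 1 = (r + T*k + 1) + T := by omega
      rw [hidx]
      rw [Finset.sum_congr rfl fun j _ => hskip j]
      have hwg1 : ∀ i, w ((r + T*k + 1) + T) i = g i := by
        intro i
        apply hwg
        constructor
        · omega
        · have h7 : (r + T*k + 1) + T - 1 = r + T*(k+1) := by omega
          rw [h7, Nat.add_mul_mod_self_left, Nat.mod_eq_of_lt hr]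
      calc ∑ j, (∑ i, evolve P π₀ w (r + T*k + 1) i * (P^T) i j) * w ((r + T*k + 1) + T) j
          = ∑ i, evolve P π₀ w (r + T*k + 1) i * (∑ j, (P^T) i j * g j) := by
            rw [Finset.sum_congr rfl fun j (_ : j ∈ Finset.univ) => by
              rw [hwg1 j, Finset.sum_mul]]
            rw [Finset.sum_comm]
            exact Finset.sum_congr rfl fun i _ => by
              rw [Finset.mul_sum]
              exact Finset.sum_congr rfl fun j _ => by ring
        _ ≤ ∑ i, evolve P π₀ w (r + T*k + 1) i * Real.exp (3/16 * ε^2) :=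
            Finset.sum_le_sum fun i _ =>
              mul_le_mul_of_nonneg_left (hkrow i) (hnn (r + T*k + 1) i)
        _ = (∑ i, evolve P π₀ w (r + T*k + 1) i) * Real.exp (3/16 * ε^2) :=
            (Finset.sum_mul _ _ _).symm
        _ ≤ Real.exp (3/16 * ε^2) ^ (k+1) * Real.exp (3/16 * ε^2) :=
            mul_le_mul_of_nonneg_right hprev (Real.exp_nonneg _)
        _ = Real.exp (3/16 * ε^2) ^ (k+1+1) := by rw [← pow_succ]
  have hfinal : ∑ j, evolve P π₀ w (T*K) j ≤ Real.exp (3/16 * ε^2) ^ K := by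
    have hTK1 : T*(K-1) + T = T*K := by
      have h1 : T*(K-1+1) = T*(K-1) + T := by ring
      have h2 : K-1+1 = K := by omega
      rw [h2] at h1
      omega
    rcases eq_or_lt_of_le (show r+1 ≤ T by omega) with hrT | hrT
    · -- r + 1 = T : last weighted time is exactly T*K
      have hidx : T*K = r + T*(K-1) + 1 := by omega
      rw [hidx]
      have := claim (K-1) (by omega)
      have hKK : K-1+1 = K := by omega
      rwa [hKK] at this
    · -- r + 1 < T : some unweighted steps at the end
      have hmid : ∀ m, r + T*(K-1) + 1 < m → m < (r + T*(K-1) + 1) + (T - (r+1)) →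
          ∀ i, w m i = 1 := by
        intro m h1 h2 i
        apply hwone
        rintro ⟨hm1, hmod⟩
        have hdm := Nat.div_add_mod (m-1) T
        rw [hmod] at hdm
        have h3 : T*(K-1) < T * ((m-1)/T) := by omega
        have h4 : K-1 < (m-1)/T := Nat.lt_of_mul_lt_mul_left h3
        have h5 : T*K ≤ T * ((m-1)/T) := Nat.mul_le_mul_left T (by omega)
        omega
      have hskip := evolve_skip P π₀ w (r + T*(K-1) + 1) (T - (r+1)) (by omega) hmid
      have hidx : T*K = (r + T*(K-1) + 1) + (T - (r+1)) := by omega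
      rw [hidx]
      rw [Finset.sum_congr rfl fun j _ => hskip j]
      have hwN : ∀ i, w ((r + T*(K-1) + 1) + (T - (r+1))) i = 1 := by
        intro i
        apply hwone
        rintro ⟨_, hmod⟩
        have h9 : (r + T*(K-1) + 1) + (T - (r+1)) - 1 = (T-1) + T*(K-1) := by omega
        rw [h9, Nat.add_mul_mod_self_left, Nat.mod_eq_of_lt (by omega)] at hmod
        omega
      calc ∑ j, (∑ i, evolve P π₀ w (r + T*(K-1) + 1) i * (P^(T - (r+1))) i j) *
              w ((r + T*(K-1) + 1) + (T - (r+1))) j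
          = ∑ i, evolve P π₀ w (r + T*(K-1) + 1) i * (∑ j, (P^(T - (r+1))) i j) := by
            rw [Finset.sum_congr rfl fun j (_ : j ∈ Finset.univ) => by
              rw [hwN j, mul_one]]
            rw [Finset.sum_comm]
            exact Finset.sum_congr rfl fun i _ => (Finset.mul_sum _ _ _).symm
        _ = ∑ i, evolve P π₀ w (r + T*(K-1) + 1) i := by
            exact Finset.sum_congr rfl fun i _ => by rw [(hPn (T - (r+1))).2 i, mul_one]
        _ ≤ Real.exp (3/16 * ε^2) ^ (K-1+1) := claim (K-1) (by omega)
        _ = Real.exp (3/16 * ε^2) ^ K := by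
            congr 1
            omega
  calc ∑ j, evolve P π₀ w (T*K) j ≤ Real.exp (3/16 * ε^2) ^ K := hfinal
    _ = Real.exp (K * (3/16 * ε^2)) := (Real.exp_nat_mul _ K).symm

end Aux2

set_option maxHeartbeats 2000000 in
/-- master Hoeffding bound in terms of the `f`-mixing time
(Theorem `thm:hoeffding-eps2`). -/
theorem master_hoeffding_bound
    {d : ℕ} (hd : 0 < d)
    (P : Matrix (Fin d) (Fin d) ℝ) (π π₀ f : Fin d → ℝ)
    (hP : IsTransMat P) (hirr : IsIrreducibleMat P) (haper : IsAperiodicMat P)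
    (hπ : IsStationaryDist P π) (hπ₀ : IsProbVec π₀)
    (hf : ∀ i, f i ∈ Set.Icc (0 : ℝ) 1)
    (μ : ℝ) (hμ : μ = ∑ i, π i * f i)
    (ε : ℝ) (hε : ε ∈ Set.Ioo (0 : ℝ) 1)
    (T : ℕ) (hT : T = fMixTime P π f (ε / 2))
    (hinit : ∀ t < T, fDisc f (Matrix.vecMul π₀ (P ^ t)) π ≤ ε / 2)
    (N : ℕ) (hN : 0 < N) (hdvd : T ∣ N) :
    pathProb P π₀ N (fun x => μ + ε ≤ (1 / (N : ℝ)) * ∑ n : Fin N, f (x n.succ)) ≤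
      Real.exp (-(ε ^ 2 * (N : ℝ)) / (8 * (T : ℝ))) := by
  obtain ⟨hε0, hε1⟩ := hε
  obtain ⟨K, hNK⟩ := hdvd
  have hT1 : 1 ≤ T := by
    rcases Nat.eq_zero_or_pos T with h | h
    · subst h; simp at hNK; omega
    · omega
  have hK1 : 1 ≤ K := by
    rcases Nat.eq_zero_or_pos K with h | h
    · subst h; simp at hNK; omega
    · omega
  have hTmem : ∀ i, fDisc f (fun j => (P ^ T) i j) π ≤ ε / 2 := by
    rcases Set.eq_empty_or_nonempty
        {n : ℕ | 1 ≤ n ∧ ∀ i, fDisc f (fun j => (P ^ n) i j) π ≤ ε / 2} with he | hne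
    · exfalso
      rw [hT] at hT1
      unfold fMixTime at hT1
      rw [he, Nat.sInf_empty] at hT1
      omega
    · have hmem := Nat.sInf_mem hne
      rw [hT]
      exact hmem.2
  have hμrw : ∑ i, π i * f i = μ := hμ.symm
  have hrow : ∀ i, |(∑ j, (P ^ T) i j * f j) - μ| ≤ ε / 2 := by
    intro i
    have h := hTmem i
    simp only [fDisc] at h
    rwa [hμrw] at h
  have hPn := transMat_pow hP
  have hA : ∀ t : ℕ, |(∑ j, Matrix.vecMul π₀ (P ^ t) j * f j) - μ| ≤ ε / 2 := by
    intro t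
    rcases lt_or_ge t T with ht | ht
    · have h := hinit t ht
      simp only [fDisc] at h
      rwa [hμrw] at h
    · have hdecomp : P ^ t = P ^ (t - T) * P ^ T := by
        rw [← pow_add]
        congr 1
        omega
      rw [hdecomp, ← Matrix.vecMul_vecMul]
      exact mean_vecMul_close (probVec_vecMul hπ₀ (hPn (t - T))) f μ (ε / 2) hrow
  have hmass_nn : ∀ x : Fin (N+1) → Fin d, 0 ≤ pathMass P π₀ N x := fun x =>
    mul_nonneg (hπ₀.1 _) (Finset.prod_nonneg fun n _ => hP.1 _ _)
  have hTposR : (0:ℝ) < T := by exact_mod_cast hT1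
  have hNposR : (0:ℝ) < N := by exact_mod_cast hN
  have hNTK : (N:ℝ) = (T:ℝ) * (K:ℝ) := by exact_mod_cast congrArg (Nat.cast (R := ℝ)) hNK
  -- the per-block expectation bound
  have hEr : ∀ r, r < T →
      (∑ x : Fin (N+1) → Fin d, pathMass P π₀ N x *
        Real.exp (ε * ∑ k ∈ Finset.range K, (f (Xof x (r + T*k + 1)) - μ - ε/2)))
      ≤ Real.exp (K * (3/16 * ε^2)) := by
    intro r hr
    have hprod : ∀ x : Fin (N+1) → Fin d,
        Real.exp (ε * ∑ k ∈ Finset.range K, (f (Xof x (r + T*k + 1)) - μ - ε/2))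
        = ∏ n : Fin (N+1), (fun (m : ℕ) i =>
            if 1 ≤ m ∧ (m-1) % T = r then Real.exp (ε * (f i - μ - ε/2)) else 1) ↑n (x n) :=
      fun x => (prod_w_eq f μ ε T K r hT1 hr N hNK x).symm
    have hexpand : ∀ (F : (Fin (N+1) → Fin d) → ℝ),
        ∑ x : Fin (N+1) → Fin d, F x
          = ∑ j : Fin d, ∑ x : Fin (N+1) → Fin d, if x (Fin.last N) = j then F x else 0 := by
      intro F
      rw [Finset.sum_comm]
      apply Finset.sum_congr rfl
      intro x _
      rw [Finset.sum_ite_eq Finset.univ (x (Fin.last N)) (fun _ => F x)]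
      simp
    calc ∑ x : Fin (N+1) → Fin d, pathMass P π₀ N x *
            Real.exp (ε * ∑ k ∈ Finset.range K, (f (Xof x (r + T*k + 1)) - μ - ε/2))
        = ∑ x : Fin (N+1) → Fin d, pathMass P π₀ N x *
            ∏ n : Fin (N+1), (fun (m : ℕ) i =>
              if 1 ≤ m ∧ (m-1) % T = r then Real.exp (ε * (f i - μ - ε/2)) else 1) ↑n (x n) :=
          Finset.sum_congr rfl fun x _ => by rw [hprod x]
      _ = ∑ j : Fin d, evolve P π₀ (fun (m : ℕ) i =>
            if 1 ≤ m ∧ (m-1) % T = r then Real.exp (ε * (f i - μ - ε/2)) else 1) N j := by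
          rw [hexpand (fun x => pathMass P π₀ N x *
            ∏ n : Fin (N+1), (fun (m : ℕ) i =>
              if 1 ≤ m ∧ (m-1) % T = r then Real.exp (ε * (f i - μ - ε/2)) else 1) ↑n (x n))]
          exact Finset.sum_congr rfl fun j _ => pathSum_eq_evolve P π₀ (fun (m : ℕ) i =>
            if 1 ≤ m ∧ (m-1) % T = r then Real.exp (ε * (f i - μ - ε/2)) else 1) N j
      _ ≤ Real.exp (K * (3/16 * ε^2)) := by
          rw [hNK]
          exact block_bound P π₀ f hP hπ₀ hf μ ε hε0 hε1.le T K hT1 hK1 r hr hrow hA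
  -- conversion of the Fin-indexed sum
  have hsum_eq : ∀ x : Fin (N+1) → Fin d,
      (∑ n : Fin N, f (x n.succ)) = ∑ n ∈ Finset.range N, f (Xof x (n+1)) := by
    intro x
    rw [← Fin.sum_univ_eq_sum_range (fun n => f (Xof x (n+1))) N]
    apply Finset.sum_congr rfl
    intro n _
    congr 1
    rw [Xof_eq x (↑n+1) (by omega)]
    exact congrArg x (Fin.ext rfl)
  have hevent : ∀ x : Fin (N+1) → Fin d,
      (μ + ε ≤ (1/(N:ℝ)) * ∑ n : Fin N, f (x n.succ)) →
      (N:ℝ)*ε/2 ≤ ∑ n ∈ Finset.range N, (f (Xof x (n+1)) - μ - ε/2) := by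
    intro x hx
    rw [hsum_eq x] at hx
    have h2 : (N:ℝ)*(μ+ε) ≤ ∑ n ∈ Finset.range N, f (Xof x (n+1)) := by
      have h := mul_le_mul_of_nonneg_left hx hNposR.le
      rw [← mul_assoc, mul_one_div, div_self (ne_of_gt hNposR), one_mul] at h
      exact h
    have h3 : ∑ n ∈ Finset.range N, (f (Xof x (n+1)) - μ - ε/2)
        = (∑ n ∈ Finset.range N, f (Xof x (n+1))) - (N:ℝ)*(μ + ε/2) := by
      have hterm : ∀ n : ℕ, f (Xof x (n+1)) - μ - ε/2 = f (Xof x (n+1)) - (μ + ε/2) :=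
        fun n => by ring
      rw [Finset.sum_congr rfl fun n _ => hterm n, Finset.sum_sub_distrib,
        Finset.sum_const, Finset.card_range, nsmul_eq_mul]
    linarith
  -- AM-GM step
  have hAM : ∀ x : Fin (N+1) → Fin d,
      Real.exp ((ε/(T:ℝ)) * ∑ n ∈ Finset.range N, (f (Xof x (n+1)) - μ - ε/2))
      ≤ ∑ r ∈ Finset.range T, (1/(T:ℝ)) *
          Real.exp (ε * ∑ k ∈ Finset.range K, (f (Xof x (r + T*k + 1)) - μ - ε/2)) := by
    intro x
    have hsplit := sum_range_split T K hT1 (fun n => f (Xof x (n+1)) - μ - ε/2)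
    have hNsum : ∑ n ∈ Finset.range N, (f (Xof x (n+1)) - μ - ε/2)
        = ∑ r ∈ Finset.range T, ∑ k ∈ Finset.range K, (f (Xof x (r + T*k + 1)) - μ - ε/2) := by
      rw [← hNK] at hsplit
      exact hsplit
    calc Real.exp ((ε/(T:ℝ)) * ∑ n ∈ Finset.range N, (f (Xof x (n+1)) - μ - ε/2))
        = Real.exp (∑ r ∈ Finset.range T, (ε * ∑ k ∈ Finset.range K,
            (f (Xof x (r + T*k + 1)) - μ - ε/2)) * (1/(T:ℝ))) := by
          rw [hNsum, Finset.mul_sum]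
          congr 1
          exact Finset.sum_congr rfl fun r _ => by ring
      _ = ∏ r ∈ Finset.range T, Real.exp ((ε * ∑ k ∈ Finset.range K,
            (f (Xof x (r + T*k + 1)) - μ - ε/2)) * (1/(T:ℝ))) := Real.exp_sum _ _
      _ = ∏ r ∈ Finset.range T, (Real.exp (ε * ∑ k ∈ Finset.range K,
            (f (Xof x (r + T*k + 1)) - μ - ε/2))) ^ (1/(T:ℝ)) := by
          exact Finset.prod_congr rfl fun r _ => Real.exp_mul _ _
      _ ≤ ∑ r ∈ Finset.range T, (1/(T:ℝ)) *
            Real.exp (ε * ∑ k ∈ Finset.range K, (f (Xof x (r + T*k + 1)) - μ - ε/2)) := by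
          apply Real.geom_mean_le_arith_mean_weighted
          · intro r _
            positivity
          · rw [Finset.sum_const, Finset.card_range, nsmul_eq_mul]
            field_simp
          · intro r _
            exact (Real.exp_pos _).le
  -- Chernoff pointwise bound
  have hCpos : (0:ℝ) < Real.exp (-(ε/(T:ℝ)) * ((N:ℝ)*ε/2)) := Real.exp_pos _
  have hterm : ∀ x : Fin (N+1) → Fin d,
      (if μ + ε ≤ (1/(N:ℝ)) * ∑ n : Fin N, f (x n.succ) then pathMass P π₀ N x else 0)
      ≤ pathMass P π₀ N x * (Real.exp (-(ε/(T:ℝ)) * ((N:ℝ)*ε/2)) *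
          ∑ r ∈ Finset.range T, (1/(T:ℝ)) *
            Real.exp (ε * ∑ k ∈ Finset.range K, (f (Xof x (r + T*k + 1)) - μ - ε/2))) := by
    intro x
    by_cases hx : μ + ε ≤ (1/(N:ℝ)) * ∑ n : Fin N, f (x n.succ)
    · rw [if_pos hx]
      have h1 := hevent x hx
      have h2 : (1:ℝ) ≤ Real.exp (-(ε/(T:ℝ)) * ((N:ℝ)*ε/2)) *
          Real.exp ((ε/(T:ℝ)) * ∑ n ∈ Finset.range N, (f (Xof x (n+1)) - μ - ε/2)) := by
        rw [← Real.exp_add, ← Real.exp_zero]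
        apply Real.exp_le_exp.2
        have hq : (0:ℝ) ≤ ε/(T:ℝ) := by positivity
        have := mul_le_mul_of_nonneg_left h1 hq
        nlinarith
      calc pathMass P π₀ N x = pathMass P π₀ N x * 1 := (mul_one _).symm
        _ ≤ pathMass P π₀ N x * (Real.exp (-(ε/(T:ℝ)) * ((N:ℝ)*ε/2)) *
              Real.exp ((ε/(T:ℝ)) * ∑ n ∈ Finset.range N, (f (Xof x (n+1)) - μ - ε/2))) :=
            mul_le_mul_of_nonneg_left h2 (hmass_nn x)
        _ ≤ pathMass P π₀ N x * (Real.exp (-(ε/(T:ℝ)) * ((N:ℝ)*ε/2)) *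
              ∑ r ∈ Finset.range T, (1/(T:ℝ)) *
                Real.exp (ε * ∑ k ∈ Finset.range K, (f (Xof x (r + T*k + 1)) - μ - ε/2))) := by
            apply mul_le_mul_of_nonneg_left _ (hmass_nn x)
            exact mul_le_mul_of_nonneg_left (hAM x) hCpos.le
    · rw [if_neg hx]
      apply mul_nonneg (hmass_nn x)
      apply mul_nonneg hCpos.le
      apply Finset.sum_nonneg
      intro r _
      positivity
  have hT0 : (T:ℝ) ≠ 0 := ne_of_gt hTposR
  simp only [pathProb]
  calc (∑ x : Fin (N+1) → Fin d, if μ + ε ≤ (1/(N:ℝ)) * ∑ n : Fin N, f (x n.succ)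
        then pathMass P π₀ N x else 0)
      ≤ ∑ x : Fin (N+1) → Fin d, pathMass P π₀ N x *
          (Real.exp (-(ε/(T:ℝ)) * ((N:ℝ)*ε/2)) *
            ∑ r ∈ Finset.range T, (1/(T:ℝ)) *
              Real.exp (ε * ∑ k ∈ Finset.range K, (f (Xof x (r + T*k + 1)) - μ - ε/2))) :=
        Finset.sum_le_sum fun x _ => hterm x
    _ = Real.exp (-(ε/(T:ℝ)) * ((N:ℝ)*ε/2)) * ∑ r ∈ Finset.range T, (1/(T:ℝ)) *
          ∑ x : Fin (N+1) → Fin d, pathMass P π₀ N x *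
            Real.exp (ε * ∑ k ∈ Finset.range K, (f (Xof x (r + T*k + 1)) - μ - ε/2)) := by
        rw [Finset.mul_sum]
        rw [Finset.sum_congr rfl fun x (_ : x ∈ Finset.univ) => by
          rw [Finset.mul_sum, Finset.mul_sum]]
        rw [Finset.sum_comm]
        apply Finset.sum_congr rfl
        intro r _
        rw [Finset.mul_sum, Finset.mul_sum]
        apply Finset.sum_congr rfl
        intro x _
        ring
    _ ≤ Real.exp (-(ε/(T:ℝ)) * ((N:ℝ)*ε/2)) * ∑ r ∈ Finset.range T, (1/(T:ℝ)) *
          Real.exp ((K:ℝ) * (3/16 * ε^2)) := by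
        apply mul_le_mul_of_nonneg_left _ (Real.exp_nonneg _)
        apply Finset.sum_le_sum
        intro r hr
        exact mul_le_mul_of_nonneg_left (hEr r (Finset.mem_range.1 hr)) (by positivity)
    _ = Real.exp (-(ε/(T:ℝ)) * ((N:ℝ)*ε/2)) * Real.exp ((K:ℝ) * (3/16 * ε^2)) := by
        rw [Finset.sum_const, Finset.card_range, nsmul_eq_mul]
        congr 1
        rw [← mul_assoc, mul_one_div, div_self hT0, one_mul]
    _ = Real.exp (-(ε/(T:ℝ)) * ((N:ℝ)*ε/2) + (K:ℝ) * (3/16 * ε^2)) := (Real.exp_add _ _).symm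
    _ ≤ Real.exp (-(ε ^ 2 * (N : ℝ)) / (8 * (T : ℝ))) := by
        apply Real.exp_le_exp.2
        rw [hNTK]
        have hKnn : (0:ℝ) ≤ (K:ℝ) := Nat.cast_nonneg K
        have e1 : -(ε/(T:ℝ)) * ((T:ℝ)*(K:ℝ)*ε/2) = -(ε^2 * (K:ℝ) / 2) := by
          field_simp
        have e2 : -(ε^2 * ((T:ℝ)*(K:ℝ))) / (8 * (T:ℝ)) = -(ε^2 * (K:ℝ) / 8) := by
          field_simp
        rw [e1, e2]
        nlinarith [mul_nonneg (sq_nonneg ε) hKnn]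
end

section
/- Let ε ∈ (0,1), let T := T_f(ε/2), and suppose the initial distribution π₀ satisfies d_f(π₀ᵀ Pᵗ, π) ≤ ε/2 for every t ∈ {0,1,…,T−1}. Fix an integer N₀ ≥ 1 and t ∈ {0,1,…,T−1}, and consider the thinned variables X̃_m := X_{(m−1)·T + t} for m = 1,…,N₀. Then for every real α ≥ 0, E[ exp( α · ∑_{m=1}^{N₀} f(X̃_m) ) ] ≤ exp( ( (1/2)·α·ε + α·μ + (1/2)·α² ) · N₀ ). -/
open Finset

section AuxLemmas
variable {d : ℕ}

private lemma chord_exp {w a : ℝ} (hw : |w| ≤ 1) :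
    Real.exp (a * w) ≤ Real.cosh a + w * Real.sinh a := by
  rw [abs_le] at hw
  have h1 : (0:ℝ) ≤ (1 - w) / 2 := by linarith
  have h2 : (0:ℝ) ≤ (1 + w) / 2 := by linarith
  have hc := convexOn_exp.2 (Set.mem_univ (-a)) (Set.mem_univ a) h1 h2 (by ring)
  simp only [smul_eq_mul] at hc
  have heq : (1 - w) / 2 * (-a) + (1 + w) / 2 * a = a * w := by ring
  rw [heq] at hc
  calc Real.exp (a * w) ≤ (1 - w)/2 * Real.exp (-a) + (1 + w)/2 * Real.exp a := hc
    _ = Real.cosh a + w * Real.sinh a := by rw [Real.cosh_eq, Real.sinh_eq]; ring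

private lemma dist_mgf_bound {d : ℕ} (p f : Fin d → ℝ) (hp : ∀ i, 0 ≤ p i)
    (hp1 : ∑ i, p i = 1) (hf : ∀ i, f i ∈ Set.Icc (0:ℝ) 1)
    {α q : ℝ} (hα : 0 ≤ α) (hq : ∑ i, p i * f i ≤ q) :
    ∑ i, p i * Real.exp (α * f i) ≤ Real.exp (α * q + α^2/2) := by
  set m := ∑ i, p i * f i with hm
  clear_value m
  have hm0 : 0 ≤ m := hm ▸ Finset.sum_nonneg fun i _ => mul_nonneg (hp i) (hf i).1
  have hm1 : m ≤ 1 := by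
    rw [hm]
    calc ∑ i, p i * f i ≤ ∑ i, p i := Finset.sum_le_sum fun i _ => by
            nlinarith [(hf i).2, hp i, (hf i).1]
      _ = 1 := hp1
  have step : ∀ i, p i * Real.exp (α * f i)
      ≤ p i * (Real.exp (α * m) * (Real.cosh α + (f i - m) * Real.sinh α)) := by
    intro i
    refine mul_le_mul_of_nonneg_left ?_ (hp i)
    have h3 : α * f i = α * m + α * (f i - m) := by ring
    rw [h3, Real.exp_add]
    refine mul_le_mul_of_nonneg_left (chord_exp ?_) (Real.exp_pos _).le
    rw [abs_le]
    exact ⟨by nlinarith [(hf i).1], by nlinarith [(hf i).2]⟩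
  have hsum : ∑ i, p i * (Real.cosh α + (f i - m) * Real.sinh α) = Real.cosh α := by
    have h4 : ∀ i ∈ Finset.univ, p i * (Real.cosh α + (f i - m) * Real.sinh α)
        = Real.cosh α * p i + Real.sinh α * (p i * f i) - Real.sinh α * (m * p i) := by
      intro i _; ring
    rw [Finset.sum_congr rfl h4, Finset.sum_sub_distrib, Finset.sum_add_distrib,
      ← Finset.mul_sum, ← Finset.mul_sum, ← Finset.mul_sum, ← Finset.mul_sum, hp1, ← hm]
    ring
  calc ∑ i, p i * Real.exp (α * f i)
      ≤ ∑ i, p i * (Real.exp (α * m) * (Real.cosh α + (f i - m) * Real.sinh α)) :=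
        Finset.sum_le_sum fun i _ => step i
    _ = Real.exp (α * m) * ∑ i, p i * (Real.cosh α + (f i - m) * Real.sinh α) := by
        rw [Finset.mul_sum]; exact Finset.sum_congr rfl fun i _ => by ring
    _ = Real.exp (α * m) * Real.cosh α := by rw [hsum]
    _ ≤ Real.exp (α * m) * Real.exp (α^2/2) :=
        mul_le_mul_of_nonneg_left (Real.cosh_le_exp_half_sq α) (Real.exp_pos _).le
    _ = Real.exp (α * m + α^2/2) := (Real.exp_add _ _).symm
    _ ≤ Real.exp (α * q + α^2/2) := by
        have : α * m ≤ α * q := mul_le_mul_of_nonneg_left hq hα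
        exact Real.exp_le_exp.2 (by linarith)


private lemma pow_row_sum {P : Matrix (Fin d) (Fin d) ℝ} (hP : ∀ i, ∑ j, P i j = 1)
    (k : ℕ) (i : Fin d) : ∑ j, (P ^ k) i j = 1 := by
  induction k generalizing i with
  | zero => simp [Matrix.one_apply]
  | succ k ih =>
    rw [pow_succ]
    simp only [Matrix.mul_apply]
    rw [Finset.sum_comm]
    calc ∑ l, ∑ j, (P ^ k) i l * P l j = ∑ l, (P ^ k) i l * ∑ j, P l j := by
          simp [Finset.mul_sum]
      _ = 1 := by simp only [hP, mul_one]; exact ih i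

private lemma pow_nonneg_entries {P : Matrix (Fin d) (Fin d) ℝ} (hP : ∀ i j, 0 ≤ P i j)
    (k : ℕ) (i j : Fin d) : 0 ≤ (P ^ k) i j := by
  induction k generalizing i j with
  | zero => simp [Matrix.one_apply]; positivity
  | succ k ih =>
    rw [pow_succ, Matrix.mul_apply]
    exact Finset.sum_nonneg fun l _ => mul_nonneg (ih i l) (hP l j)

private lemma pathMass_snoc (P : Matrix (Fin d) (Fin d) ℝ) (π₀ : Fin d → ℝ) (N : ℕ)
    (y : Fin (N + 1) → Fin d) (j : Fin d) :
    pathMass P π₀ (N + 1) (Fin.snoc y j) = pathMass P π₀ N y * P (y (Fin.last N)) j := by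
  unfold pathMass
  rw [Fin.prod_univ_castSucc]
  have h0 : (Fin.snoc y j : Fin (N + 2) → Fin d) 0 = y 0 := by
    rw [show (0 : Fin (N + 2)) = Fin.castSucc 0 by rfl, Fin.snoc_castSucc]
  have hmid : ∀ n : Fin N,
      P ((Fin.snoc y j : Fin (N+2) → Fin d) (n.castSucc.castSucc))
        ((Fin.snoc y j : Fin (N+2) → Fin d) (n.castSucc.succ)) = P (y n.castSucc) (y n.succ) := by
    intro n
    rw [Fin.succ_castSucc, Fin.snoc_castSucc, Fin.snoc_castSucc]
  have hlast : P ((Fin.snoc y j : Fin (N+2) → Fin d) ((Fin.last N).castSucc))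
      ((Fin.snoc y j : Fin (N+2) → Fin d) ((Fin.last N).succ)) = P (y (Fin.last N)) j := by
    rw [Fin.succ_last, Fin.snoc_last, Fin.snoc_castSucc]
  rw [h0, hlast, Finset.prod_congr rfl fun n _ => hmid n]
  ring

private def snocEquiv (d N : ℕ) : ((Fin (N + 1) → Fin d) × Fin d) ≃ (Fin (N + 2) → Fin d) where
  toFun p := Fin.snoc p.1 p.2
  invFun x := (Fin.init x, x (Fin.last _))
  left_inv p := by simp
  right_inv x := by simp

private lemma pathExp_succ (P : Matrix (Fin d) (Fin d) ℝ) (π₀ : Fin d → ℝ) (N : ℕ)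
    (G : (Fin (N + 1 + 1) → Fin d) → ℝ) :
    pathExp P π₀ (N + 1) G = ∑ y : Fin (N + 1) → Fin d, ∑ j : Fin d,
      pathMass P π₀ N y * P (y (Fin.last N)) j * G (Fin.snoc y j) := by
  unfold pathExp
  rw [← Equiv.sum_comp (snocEquiv d N) (fun x => pathMass P π₀ (N+1) x * G x), Fintype.sum_prod_type]
  exact Finset.sum_congr rfl fun y _ => Finset.sum_congr rfl fun j _ => by
    simp only [snocEquiv, Equiv.coe_fn_mk, pathMass_snoc]

private lemma castLE_succ_eq {N k : ℕ} (i : Fin (N + 1)) :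
    (Fin.castLE (by omega) i : Fin (N + k + 2)) =
      Fin.castSucc (Fin.castLE (by omega : N + 1 ≤ N + k + 1) i) := by
  apply Fin.ext; rfl

private lemma pathExp_chunk (P : Matrix (Fin d) (Fin d) ℝ) (π₀ : Fin d → ℝ) (N : ℕ) (k : ℕ)
    (g : (Fin (N + 1) → Fin d) → ℝ) (h : Fin d → ℝ) :
    pathExp P π₀ (N + k) (fun x => g (fun i => x (Fin.castLE (by omega) i)) * h (x (Fin.last (N + k))))
      = pathExp P π₀ N (fun y => g y * ∑ j, (P ^ k) (y (Fin.last N)) j * h j) := by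
  induction k generalizing h with
  | zero =>
    unfold pathExp
    refine Finset.sum_congr rfl fun x _ => ?_
    dsimp only
    have h1 : (fun i : Fin (N+1) => x (Fin.castLE (by omega) i)) = x := by
      funext i; exact congrArg x (Fin.ext rfl)
    rw [h1]
    congr 1
    congr 1
    simp [Matrix.one_apply, Finset.sum_ite_eq]
  | succ k ih =>
    show (pathExp P π₀ (N + k + 1) fun x => g (fun i => x (Fin.castLE (by omega) i)) *
        h (x (Fin.last (N + k + 1)))) = _
    rw [pathExp_succ P π₀ (N + k) _]
    have hstep : ∀ (y : Fin (N + k + 1) → Fin d) (j : Fin d),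
        (fun i : Fin (N+1) => (Fin.snoc y j : Fin (N+k+2) → Fin d) (Fin.castLE (by omega) i))
          = (fun i : Fin (N+1) => y (Fin.castLE (by omega) i)) := by
      intro y j; funext i
      rw [castLE_succ_eq, Fin.snoc_castSucc]
    have hrw : ∀ (y : Fin (N + k + 1) → Fin d), ∑ j : Fin d,
          pathMass P π₀ (N+k) y * P (y (Fin.last (N+k))) j *
            ((g (fun i => (Fin.snoc y j : Fin (N+k+2) → Fin d) (Fin.castLE (by omega) i))) *
              h ((Fin.snoc y j : Fin (N+k+2) → Fin d) (Fin.last (N+k+1))))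
        = pathMass P π₀ (N+k) y *
            (g (fun i => y (Fin.castLE (by omega) i)) * ∑ j, P (y (Fin.last (N+k))) j * h j) := by
      intro y
      simp only [Finset.mul_sum]
      refine Finset.sum_congr rfl fun j _ => ?_
      rw [hstep y j, Fin.snoc_last]
      ring
    rw [Finset.sum_congr (rfl : (Finset.univ : Finset (Fin (N+k+1) → Fin d)) = Finset.univ)
      (fun y _ => hrw y)]
    have hfold : ∑ y : Fin (N+k+1) → Fin d, pathMass P π₀ (N+k) y *
          ((g fun i => y (Fin.castLE (by omega) i)) * ∑ j, P (y (Fin.last (N+k))) j * h j)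
        = pathExp P π₀ (N+k) (fun x => (g fun i => x (Fin.castLE (by omega) i)) *
            (fun l => ∑ j, P l j * h j) (x (Fin.last (N+k)))) := rfl
    rw [hfold, ih (fun l => ∑ j, P l j * h j)]
    unfold pathExp
    refine Finset.sum_congr rfl fun z _ => ?_
    dsimp only
    congr 1
    congr 1
    rw [pow_succ]
    simp only [Matrix.mul_apply, Finset.sum_mul, Finset.mul_sum]
    rw [Finset.sum_comm]
    exact Finset.sum_congr rfl fun l _ => Finset.sum_congr rfl fun j _ => by ring

private lemma pathExp_drop {P : Matrix (Fin d) (Fin d) ℝ} (hP : ∀ i, ∑ j, P i j = 1)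
    (π₀ : Fin d → ℝ) (N k : ℕ) (g : (Fin (N + 1) → Fin d) → ℝ) :
    pathExp P π₀ (N + k) (fun x => g (fun i => x (Fin.castLE (by omega) i)))
      = pathExp P π₀ N g := by
  have h1 := pathExp_chunk P π₀ N k g (fun _ => 1)
  simp only [mul_one] at h1
  rw [h1]
  unfold pathExp
  refine Finset.sum_congr rfl fun y _ => ?_
  dsimp only
  rw [pow_row_sum hP k (y (Fin.last N)), mul_one]

private lemma pathExp_single (P : Matrix (Fin d) (Fin d) ℝ) (π₀ : Fin d → ℝ) (k : ℕ)
    (h : Fin d → ℝ) :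
    pathExp P π₀ k (fun x => h (x (Fin.last k)))
      = ∑ j, Matrix.vecMul π₀ (P ^ k) j * h j := by
  induction k generalizing h with
  | zero =>
    unfold pathExp pathMass
    rw [← Equiv.sum_comp (Equiv.funUnique (Fin 1) (Fin d)).symm]
    simp [Matrix.vecMul_one, Equiv.funUnique]
  | succ k ih =>
    rw [pathExp_succ P π₀ k _]
    have hrw : ∀ y : Fin (k+1) → Fin d, ∑ j : Fin d,
          pathMass P π₀ k y * P (y (Fin.last k)) j * h ((Fin.snoc y j : Fin (k+2) → Fin d) (Fin.last (k+1)))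
        = pathMass P π₀ k y * (fun l => ∑ j, P l j * h j) (y (Fin.last k)) := by
      intro y
      dsimp only
      simp only [Finset.mul_sum, Fin.snoc_last]
      exact Finset.sum_congr rfl fun j _ => by ring
    rw [Finset.sum_congr (rfl : (Finset.univ : Finset (Fin (k+1) → Fin d)) = Finset.univ)
      (fun y _ => hrw y)]
    have hfold : ∑ y : Fin (k+1) → Fin d, pathMass P π₀ k y *
          (fun l => ∑ j, P l j * h j) (y (Fin.last k))
        = pathExp P π₀ k (fun x => (fun l => ∑ j, P l j * h j) (x (Fin.last k))) := rfl
    rw [hfold, ih (fun l => ∑ j, P l j * h j)]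
    rw [pow_succ]
    rw [← Matrix.vecMul_vecMul]
    simp only [Matrix.vecMul, dotProduct, Finset.sum_mul, Finset.mul_sum]
    rw [Finset.sum_comm]
    exact Finset.sum_congr rfl fun l _ => Finset.sum_congr rfl fun j _ =>
      Finset.sum_congr rfl fun _ _ => by ring

private lemma pathMass_nonneg {P : Matrix (Fin d) (Fin d) ℝ} {π₀ : Fin d → ℝ}
    (hP : ∀ i j, 0 ≤ P i j) (hπ₀ : ∀ i, 0 ≤ π₀ i) (N : ℕ) (x : Fin (N + 1) → Fin d) :
    0 ≤ pathMass P π₀ N x :=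
  mul_nonneg (hπ₀ _) (Finset.prod_nonneg fun n _ => hP _ _)

private lemma pathExp_mono {P : Matrix (Fin d) (Fin d) ℝ} {π₀ : Fin d → ℝ}
    (hP : ∀ i j, 0 ≤ P i j) (hπ₀ : ∀ i, 0 ≤ π₀ i) (N : ℕ)
    {g₁ g₂ : (Fin (N + 1) → Fin d) → ℝ} (hg : ∀ x, g₁ x ≤ g₂ x) :
    pathExp P π₀ N g₁ ≤ pathExp P π₀ N g₂ :=
  Finset.sum_le_sum fun x _ =>
    mul_le_mul_of_nonneg_left (hg x) (pathMass_nonneg hP hπ₀ N x)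

private lemma pathExp_const_mul (P : Matrix (Fin d) (Fin d) ℝ) (π₀ : Fin d → ℝ) (N : ℕ)
    (g : (Fin (N + 1) → Fin d) → ℝ) (C : ℝ) :
    pathExp P π₀ N (fun x => g x * C) = C * pathExp P π₀ N g := by
  unfold pathExp
  rw [Finset.mul_sum]
  exact Finset.sum_congr rfl fun x _ => by ring

private lemma pathExp_congr (P : Matrix (Fin d) (Fin d) ℝ) (π₀ : Fin d → ℝ) {N M : ℕ}
    (hNM : N = M) (gN : (Fin (N + 1) → Fin d) → ℝ) (gM : (Fin (M + 1) → Fin d) → ℝ)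
    (hg : ∀ x : Fin (M + 1) → Fin d, gN (fun i => x (Fin.cast (by omega) i)) = gM x) :
    pathExp P π₀ N gN = pathExp P π₀ M gM := by
  subst hNM
  have hx : ∀ x : Fin (N + 1) → Fin d, gN x = gM x := by
    intro x
    have hid : (fun i => x (Fin.cast (by omega : N + 1 = N + 1) i)) = x :=
      funext fun i => congrArg x (Fin.ext rfl)
    rw [← hg x, hid]
  unfold pathExp
  exact Finset.sum_congr rfl fun x _ => by rw [hx]

end AuxLemmas

private lemma idx_lt {m k T t : ℕ} (hm : m < k + 1) : m * T + t < k * T + t + 1 :=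
  Nat.lt_succ_of_le (Nat.add_le_add_right (Nat.mul_le_mul_right T (Nat.lt_succ_iff.mp hm)) t)

set_option maxHeartbeats 1000000 in
/-- master MGF bound for the thinned chain (Lemma `lem:mgf-master`). -/
theorem master_mgf_bound
    {d : ℕ} (hd : 0 < d)
    (P : Matrix (Fin d) (Fin d) ℝ) (π π₀ f : Fin d → ℝ)
    (hP : IsTransMat P) (hirr : IsIrreducibleMat P) (haper : IsAperiodicMat P)
    (hπ : IsStationaryDist P π) (hπ₀ : IsProbVec π₀)
    (hf : ∀ i, f i ∈ Set.Icc (0 : ℝ) 1)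
    (μ : ℝ) (hμ : μ = ∑ i, π i * f i)
    (ε : ℝ) (hε : ε ∈ Set.Ioo (0 : ℝ) 1)
    (T : ℕ) (hT : T = fMixTime P π f (ε / 2))
    (hinit : ∀ t < T, fDisc f (Matrix.vecMul π₀ (P ^ t)) π ≤ ε / 2)
    (N₀ : ℕ) (hN₀ : 1 ≤ N₀) (t : ℕ) (ht : t < T)
    (α : ℝ) (hα : 0 ≤ α) :
    pathExp P π₀ (N₀ * T) (fun x => Real.exp (α * ∑ m : Fin N₀,
        f (x ⟨m.val * T + t, by
          have hm : m.val + 1 ≤ N₀ := m.isLt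
          calc m.val * T + t < m.val * T + T := by omega
            _ = (m.val + 1) * T := by ring
            _ ≤ N₀ * T := Nat.mul_le_mul hm le_rfl
            _ < N₀ * T + 1 := Nat.lt_succ_self _⟩))) ≤
      Real.exp ((α * ε / 2 + α * μ + α ^ 2 / 2) * (N₀ : ℝ)) := by
  obtain ⟨hε0, hε1⟩ := hε
  obtain ⟨hP0, hP1⟩ := hP
  obtain ⟨hπ₀0, hπ₀1⟩ := hπ₀
  -- T belongs to the defining set of the mixing time
  have hTmem : 1 ≤ T ∧ ∀ i, fDisc f (fun j => (P ^ T) i j) π ≤ ε / 2 := by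
    have hne : {n : ℕ | 1 ≤ n ∧ ∀ i, fDisc f (fun j => (P ^ n) i j) π ≤ ε / 2}.Nonempty := by
      by_contra hc
      rw [Set.not_nonempty_iff_eq_empty] at hc
      rw [hT, fMixTime, hc, Nat.sInf_empty] at ht
      omega
    rw [hT, fMixTime]
    exact Nat.sInf_mem hne
  set C := Real.exp (α * ε / 2 + α * μ + α ^ 2 / 2) with hC
  have hC0 : 0 ≤ C := (Real.exp_pos _).le
  -- uniform bound on rows of P^T
  have hrow : ∀ i : Fin d, ∑ j, (P ^ T) i j * Real.exp (α * f j) ≤ C := by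
    intro i
    have hd2 : |∑ j, (P ^ T) i j * f j - ∑ j, π j * f j| ≤ ε / 2 := hTmem.2 i
    rw [abs_le] at hd2
    have hq : ∑ j, (P ^ T) i j * f j ≤ μ + ε / 2 := by rw [hμ]; linarith [hd2.2]
    calc ∑ j, (P ^ T) i j * Real.exp (α * f j)
        ≤ Real.exp (α * (μ + ε / 2) + α ^ 2 / 2) :=
          dist_mgf_bound (fun j => (P ^ T) i j) f (fun j => pow_nonneg_entries hP0 T i j)
            (pow_row_sum hP1 T i) hf hα hq
      _ = C := by rw [hC]; ring_nf
  -- bound for the initial segment distribution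
  have hv0 : ∀ j, 0 ≤ Matrix.vecMul π₀ (P ^ t) j := by
    intro j
    simp only [Matrix.vecMul, dotProduct]
    exact Finset.sum_nonneg fun i _ => mul_nonneg (hπ₀0 i) (pow_nonneg_entries hP0 t i j)
  have hv1 : ∑ j, Matrix.vecMul π₀ (P ^ t) j = 1 := by
    simp only [Matrix.vecMul, dotProduct]
    rw [Finset.sum_comm]
    calc ∑ i, ∑ j, π₀ i * (P ^ t) i j = ∑ i, π₀ i * ∑ j, (P ^ t) i j := by
          simp [Finset.mul_sum]
      _ = 1 := by simp only [pow_row_sum hP1]; simpa using hπ₀1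
  have hbase : ∑ j, Matrix.vecMul π₀ (P ^ t) j * Real.exp (α * f j) ≤ C := by
    have hd2 : |∑ j, Matrix.vecMul π₀ (P ^ t) j * f j - ∑ j, π j * f j| ≤ ε / 2 := hinit t ht
    rw [abs_le] at hd2
    have hq : ∑ j, Matrix.vecMul π₀ (P ^ t) j * f j ≤ μ + ε / 2 := by rw [hμ]; linarith [hd2.2]
    calc ∑ j, Matrix.vecMul π₀ (P ^ t) j * Real.exp (α * f j)
        ≤ Real.exp (α * (μ + ε / 2) + α ^ 2 / 2) :=
          dist_mgf_bound _ f hv0 hv1 hf hα hq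
      _ = C := by rw [hC]; ring_nf
  -- the key induction
  have key : ∀ k : ℕ, pathExp P π₀ (k * T + t)
      (fun y => ∏ m : Fin (k + 1),
        Real.exp (α * f (y ⟨m.val * T + t, idx_lt m.isLt⟩))) ≤ C ^ (k + 1) := by
    intro k
    induction k with
    | zero =>
      have hNM : 0 * T + t = t := by omega
      have e1 := pathExp_congr P π₀ hNM
        (fun y : Fin (0 * T + t + 1) → Fin d => ∏ m : Fin 1,
          Real.exp (α * f (y ⟨m.val * T + t, idx_lt m.isLt⟩)))
        (fun y => Real.exp (α * f (y (Fin.last t))))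
        (fun x => by
          dsimp only
          rw [Fin.prod_univ_one]
          exact congrArg (fun z => Real.exp (α * f (x z))) (Fin.ext (by simp)))
      refine le_trans (le_of_eq e1) ?_
      refine le_trans (le_of_eq (pathExp_single P π₀ t (fun j => Real.exp (α * f j)))) ?_
      rw [pow_one]
      exact hbase
    | succ k ih =>
      have hNM : (k + 1) * T + t = k * T + t + T := by ring
      have e1 := pathExp_congr P π₀ hNM
        (fun y : Fin ((k + 1) * T + t + 1) → Fin d => ∏ m : Fin (k + 2),
          Real.exp (α * f (y ⟨m.val * T + t, idx_lt m.isLt⟩)))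
        (fun x => (fun y : Fin (k * T + t + 1) → Fin d => ∏ m : Fin (k + 1),
            Real.exp (α * f (y ⟨m.val * T + t, idx_lt m.isLt⟩)))
              (fun i => x (Fin.castLE (by omega) i)) *
          (fun j => Real.exp (α * f j)) (x (Fin.last (k * T + t + T))))
        (fun x => by
          dsimp only
          rw [Fin.prod_univ_castSucc]
          exact congrArg₂ (fun a b : ℝ => a * b)
            (Finset.prod_congr rfl fun m _ =>
              congrArg (fun z => Real.exp (α * f (x z))) (Fin.ext rfl))
            (congrArg (fun z => Real.exp (α * f (x z)))
              (Fin.ext (by simp only [Fin.coe_cast, Fin.val_last]; ring))))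
      refine le_trans (le_of_eq e1) ?_
      have e2 := pathExp_chunk P π₀ (k * T + t) T
        (fun y : Fin (k * T + t + 1) → Fin d => ∏ m : Fin (k + 1),
          Real.exp (α * f (y ⟨m.val * T + t, idx_lt m.isLt⟩)))
        (fun j => Real.exp (α * f j))
      refine le_trans (le_of_eq e2) ?_
      have hmono : pathExp P π₀ (k * T + t)
          (fun y => (∏ m : Fin (k + 1),
              Real.exp (α * f (y ⟨m.val * T + t, idx_lt m.isLt⟩))) *
            ∑ j, (P ^ T) (y (Fin.last (k * T + t))) j * Real.exp (α * f j))
          ≤ pathExp P π₀ (k * T + t)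
          (fun y => (∏ m : Fin (k + 1),
              Real.exp (α * f (y ⟨m.val * T + t, idx_lt m.isLt⟩))) * C) := by
        refine pathExp_mono hP0 hπ₀0 _ fun y => ?_
        refine mul_le_mul_of_nonneg_left (hrow _) ?_
        exact Finset.prod_nonneg fun m _ => (Real.exp_pos _).le
      refine le_trans hmono ?_
      refine le_trans (le_of_eq (pathExp_const_mul P π₀ (k * T + t)
        (fun y => ∏ m : Fin (k + 1),
          Real.exp (α * f (y ⟨m.val * T + t, idx_lt m.isLt⟩))) C)) ?_
      calc C * pathExp P π₀ (k * T + t)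
            (fun y => ∏ m : Fin (k + 1),
              Real.exp (α * f (y ⟨m.val * T + t, idx_lt m.isLt⟩)))
          ≤ C * C ^ (k + 1) := mul_le_mul_of_nonneg_left ih hC0
        _ = C ^ (k + 2) := by ring
  -- final assembly
  obtain ⟨K, rfl⟩ : ∃ K, N₀ = K + 1 := ⟨N₀ - 1, by omega⟩
  have hT0 : t ≤ T := ht.le
  have hsplit : (K + 1) * T = K * T + t + (T - t) := by
    rw [Nat.succ_mul]; omega
  have hexp : ∀ x : Fin ((K + 1) * T + 1) → Fin d,
      Real.exp (α * ∑ m : Fin (K + 1), f (x ⟨m.val * T + t, by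
        have hm : m.val + 1 ≤ K + 1 := m.isLt
        calc m.val * T + t < m.val * T + T := by omega
          _ = (m.val + 1) * T := by ring
          _ ≤ (K + 1) * T := Nat.mul_le_mul hm le_rfl
          _ < (K + 1) * T + 1 := Nat.lt_succ_self _⟩))
      = ∏ m : Fin (K + 1), Real.exp (α * f (x ⟨m.val * T + t, by
          have hm : m.val + 1 ≤ K + 1 := m.isLt
          calc m.val * T + t < m.val * T + T := by omega
            _ = (m.val + 1) * T := by ring
            _ ≤ (K + 1) * T := Nat.mul_le_mul hm le_rfl
            _ < (K + 1) * T + 1 := Nat.lt_succ_self _⟩)) := by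
    intro x
    rw [Finset.mul_sum, Real.exp_sum]
  calc pathExp P π₀ ((K + 1) * T) _
      = pathExp P π₀ ((K + 1) * T) (fun x => ∏ m : Fin (K + 1),
          Real.exp (α * f (x ⟨m.val * T + t, by
            have hm : m.val + 1 ≤ K + 1 := m.isLt
            calc m.val * T + t < m.val * T + T := by omega
              _ = (m.val + 1) * T := by ring
              _ ≤ (K + 1) * T := Nat.mul_le_mul hm le_rfl
              _ < (K + 1) * T + 1 := Nat.lt_succ_self _⟩))) := by
        unfold pathExp
        exact Finset.sum_congr rfl fun x _ => by dsimp only; rw [hexp x]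
    _ = pathExp P π₀ (K * T + t + (T - t)) (fun x =>
          (fun y => ∏ m : Fin (K + 1),
            Real.exp (α * f (y ⟨m.val * T + t, idx_lt m.isLt⟩)))
          (fun i => x (Fin.castLE (by omega) i))) := by
        refine pathExp_congr P π₀ hsplit _ _ fun x => ?_
        dsimp only
        refine Finset.prod_congr rfl fun m _ => ?_
        exact congrArg (fun z => Real.exp (α * f (x z))) (Fin.ext rfl)
    _ = pathExp P π₀ (K * T + t) (fun y => ∏ m : Fin (K + 1),
          Real.exp (α * f (y ⟨m.val * T + t, idx_lt m.isLt⟩))) :=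
        pathExp_drop hP1 π₀ (K * T + t) (T - t) (fun y => ∏ m : Fin (K + 1),
          Real.exp (α * f (y ⟨m.val * T + t, idx_lt m.isLt⟩)))
    _ ≤ C ^ (K + 1) := key K
    _ = Real.exp ((α * ε / 2 + α * μ + α ^ 2 / 2) * ((K + 1 : ℕ) : ℝ)) := by
        rw [hC, ← Real.exp_nat_mul, mul_comm]
end

section
/- Let J ⊆ J_f, define Δ_J* := 2·|J|·(max_{j∈J} ‖h_j‖_∞)·(max_{j∈J} |q_jᵀ f|) (with Δ_J* := 0 if J = ∅) and λ_{−J} := max_{j ∈ J_f∖J} |λ_j| (with λ_{−J} := 0 if J_f∖J = ∅). Let Δ_J ≥ Δ_J*, let Δ > 0, suppose d_f(π₀ᵀ Pᵗ, π) ≤ Δ_J + Δ for every t ∈ {0,1,…,T_f(Δ_J+Δ)−1}, and let N be a positive integer multiple of T_f(Δ_J+Δ). Then: (i) if Δ > λ_{−J}/√πmin, then T_f(Δ_J+Δ) = 1 and P[ (1/N)·∑_{n=1}^N f(X_n) ≥ μ + 2(Δ_J+Δ) ] ≤ exp( −(Δ_J+Δ)²·N/2 ); (ii) if 0 < Δ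 ≤ λ_{−J}/√πmin, then T_f(Δ_J+Δ) ≤ ⌈ log(1/(Δ·√πmin)) / log(1/λ_{−J}) ⌉ and P[ (1/N)·∑_{n=1}^N f(X_n) ≥ μ + 2(Δ_J+Δ) ] ≤ exp( −(Δ_J+Δ)²·N / ( 2·⌈ log(1/(Δ·√πmin)) / log(1/λ_{−J}) ⌉ ) ). -/
open Finset

namespace HSBAux

/-- chord bound for exp on `[-1,1]` -/
lemma exp_chord {t y : ℝ} (hy : |y| ≤ 1) :
    Real.exp (t * y) ≤ Real.cosh t + y * Real.sinh t := by
  obtain ⟨h1, h2⟩ := abs_le.1 hy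
  have key := convexOn_exp.2 (Set.mem_univ t) (Set.mem_univ (-t))
    (by linarith : (0:ℝ) ≤ (1 + y)/2) (by linarith : (0:ℝ) ≤ (1 - y)/2) (by ring)
  simp only [smul_eq_mul] at key
  have e1 : (1 + y)/2 * t + (1 - y)/2 * (-t) = t * y := by ring
  rw [e1] at key
  refine key.trans (le_of_eq ?_)
  rw [Real.cosh_eq, Real.sinh_eq]
  ring

lemma row_mgf {d : ℕ} {p f : Fin d → ℝ} (hp : IsProbVec p)
    (hf : ∀ i, f i ∈ Set.Icc (0:ℝ) 1) {θ c : ℝ} (hθ : 0 ≤ θ)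
    (hmean : ∑ i, p i * f i ≤ c) :
    ∑ i, p i * Real.exp (θ * f i) ≤ Real.exp (θ * c + θ^2/2) := by
  obtain ⟨hp0, hp1⟩ := hp
  have hm0 : 0 ≤ ∑ i, p i * f i :=
    Finset.sum_nonneg fun i _ => mul_nonneg (hp0 i) (hf i).1
  have hm1 : (∑ i, p i * f i) ≤ 1 := by
    calc (∑ i, p i * f i) ≤ ∑ i, p i := Finset.sum_le_sum fun i _ => by
            nlinarith [(hf i).2, hp0 i, (hf i).1]
      _ = 1 := hp1
  set m : ℝ := ∑ i, p i * f i with hm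
  have hsum : ∑ i, p i * (Real.cosh θ + (f i - m) * Real.sinh θ) = Real.cosh θ := by
    have expand : ∀ i : Fin d, p i * (Real.cosh θ + (f i - m) * Real.sinh θ)
        = (p i * Real.cosh θ + (p i * f i) * Real.sinh θ) - p i * (m * Real.sinh θ) :=
      fun i => by ring
    rw [Finset.sum_congr rfl (fun i _ => expand i), Finset.sum_sub_distrib,
      Finset.sum_add_distrib, ← Finset.sum_mul, ← Finset.sum_mul, ← Finset.sum_mul, hp1, ← hm]
    ring
  have key : ∑ i, p i * Real.exp (θ * f i) ≤ Real.exp (θ * m) * Real.cosh θ := by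
    have step : ∀ i, p i * Real.exp (θ * f i) ≤
        p i * (Real.exp (θ * m) * (Real.cosh θ + (f i - m) * Real.sinh θ)) := by
      intro i
      refine mul_le_mul_of_nonneg_left ?_ (hp0 i)
      have hch := exp_chord (t := θ) (y := f i - m)
        (abs_le.2 ⟨by nlinarith [(hf i).1], by nlinarith [(hf i).2]⟩)
      calc Real.exp (θ * f i) = Real.exp (θ * m) * Real.exp (θ * (f i - m)) := by
            rw [← Real.exp_add]; congr 1; ring
        _ ≤ Real.exp (θ * m) * (Real.cosh θ + (f i - m) * Real.sinh θ) :=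
            mul_le_mul_of_nonneg_left hch (Real.exp_nonneg _)
    calc ∑ i, p i * Real.exp (θ * f i)
        ≤ ∑ i, p i * (Real.exp (θ * m) * (Real.cosh θ + (f i - m) * Real.sinh θ)) :=
          Finset.sum_le_sum fun i _ => step i
      _ = ∑ i, Real.exp (θ * m) * (p i * (Real.cosh θ + (f i - m) * Real.sinh θ)) := by
          apply Finset.sum_congr rfl
          intro i _
          ring
      _ = Real.exp (θ * m) * ∑ i, p i * (Real.cosh θ + (f i - m) * Real.sinh θ) :=
          (Finset.mul_sum _ _ _).symm
      _ = Real.exp (θ * m) * Real.cosh θ := by rw [hsum]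
  refine key.trans ?_
  calc Real.exp (θ * m) * Real.cosh θ ≤ Real.exp (θ * m) * Real.exp (θ^2/2) :=
        mul_le_mul_of_nonneg_left (Real.cosh_le_exp_half_sq θ) (Real.exp_nonneg _)
    _ = Real.exp (θ * m + θ^2/2) := (Real.exp_add _ _).symm
    _ ≤ Real.exp (θ * c + θ^2/2) := by
        apply Real.exp_le_exp.2
        have := mul_le_mul_of_nonneg_left hmean hθ
        linarith

end HSBAux

namespace HSBAux

variable {d : ℕ}

lemma transMat_one : IsTransMat (1 : Matrix (Fin d) (Fin d) ℝ) := by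
  constructor
  · intro i j; rw [Matrix.one_apply]; split <;> norm_num
  · intro i; simp [Matrix.one_apply]

lemma transMat_mul {P Q : Matrix (Fin d) (Fin d) ℝ} (hP : IsTransMat P) (hQ : IsTransMat Q) :
    IsTransMat (P * Q) := by
  constructor
  · intro i j
    rw [Matrix.mul_apply]
    exact Finset.sum_nonneg fun k _ => mul_nonneg (hP.1 i k) (hQ.1 k j)
  · intro i
    simp_rw [Matrix.mul_apply]
    rw [Finset.sum_comm]
    calc ∑ k, ∑ j, P i k * Q k j = ∑ k, P i k * ∑ j, Q k j := by
          exact Finset.sum_congr rfl fun k _ => (Finset.mul_sum _ _ _).symm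
      _ = 1 := by simp only [fun k => hQ.2 k, mul_one]; exact hP.2 i

lemma transMat_pow {P : Matrix (Fin d) (Fin d) ℝ} (hP : IsTransMat P) (n : ℕ) :
    IsTransMat (P ^ n) := by
  induction n with
  | zero => simpa using transMat_one
  | succ n ih => rw [pow_succ]; exact transMat_mul ih hP

lemma vecMul_apply (v : Fin d → ℝ) (Q : Matrix (Fin d) (Fin d) ℝ) (j : Fin d) :
    Matrix.vecMul v Q j = ∑ i, v i * Q i j := by
  simp [Matrix.vecMul, dotProduct]

lemma vecMul_nonneg {v : Fin d → ℝ} (hv : ∀ i, 0 ≤ v i) {Q : Matrix (Fin d) (Fin d) ℝ}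
    (hQ0 : ∀ i j, 0 ≤ Q i j) : ∀ j, 0 ≤ Matrix.vecMul v Q j := by
  intro j
  rw [vecMul_apply]
  exact Finset.sum_nonneg fun i _ => mul_nonneg (hv i) (hQ0 i j)

lemma sum_vecMul {v : Fin d → ℝ} {Q : Matrix (Fin d) (Fin d) ℝ}
    (hQ1 : ∀ i, ∑ j, Q i j = 1) : ∑ j, Matrix.vecMul v Q j = ∑ i, v i := by
  simp_rw [vecMul_apply]
  rw [Finset.sum_comm]
  calc ∑ i, ∑ j, v i * Q i j = ∑ i, v i * ∑ j, Q i j :=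
        Finset.sum_congr rfl fun i _ => (Finset.mul_sum _ _ _).symm
    _ = ∑ i, v i := by simp only [fun i => hQ1 i, mul_one]

lemma vecMul_prob {p : Fin d → ℝ} (hp : IsProbVec p) {Q : Matrix (Fin d) (Fin d) ℝ}
    (hQ : IsTransMat Q) : IsProbVec (Matrix.vecMul p Q) :=
  ⟨vecMul_nonneg hp.1 hQ.1, by rw [sum_vecMul hQ.2, hp.2]⟩

/-- forward-evolved weighted vector. -/
def wseq (P : Matrix (Fin d) (Fin d) ℝ) (g : ℕ → Fin d → ℝ) (π₀ : Fin d → ℝ) : ℕ → Fin d → ℝ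
  | 0 => fun i => π₀ i * g 0 i
  | n + 1 => fun i => Matrix.vecMul (wseq P g π₀ n) P i * g (n + 1) i

lemma wseq_shift (P : Matrix (Fin d) (Fin d) ℝ) (g : ℕ → Fin d → ℝ) (π₀ : Fin d → ℝ) :
    ∀ n, wseq P (fun k => g (k + 1)) (Matrix.vecMul (fun i => π₀ i * g 0 i) P) n
      = wseq P g π₀ (n + 1)
  | 0 => by funext i; simp [wseq]
  | n + 1 => by
    funext i
    simp only [wseq]
    rw [wseq_shift P g π₀ n]
    rfl

set_option maxHeartbeats 1000000 in
lemma pathExp_prod (P : Matrix (Fin d) (Fin d) ℝ) :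
    ∀ (N : ℕ) (π₀ : Fin d → ℝ) (g : ℕ → Fin d → ℝ),
    pathExp P π₀ N (fun x => ∏ n : Fin (N + 1), g n (x n)) = ∑ i, wseq P g π₀ N i := by
  intro N
  induction N with
  | zero =>
    intro π₀ g
    simp only [pathExp, pathMass]
    have : (∑ i, wseq P g π₀ 0 i) = ∑ i, π₀ i * g 0 i := by simp [wseq]
    rw [this]
    refine (Fintype.sum_bijective (fun i (_ : Fin (0 + 1)) => i) ⟨fun a b h => congrFun h 0,
      fun x => ⟨x 0, funext fun n => by
        have hn : n = 0 := Fin.ext (Nat.lt_one_iff.1 n.isLt)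
        rw [hn]⟩⟩ _ _ (fun i => by simp)).symm
  | succ N ih =>
    intro π₀ g
    simp only [pathExp]
    calc (∑ x : Fin (N + 1 + 1) → Fin d,
            pathMass P π₀ (N + 1) x * ∏ n : Fin (N + 1 + 1), g (n : ℕ) (x n))
        = ∑ p : Fin d × (Fin (N + 1) → Fin d),
            pathMass P π₀ (N + 1) ((Fin.cons p.1 p.2 : Fin (N + 2) → Fin d)) *
              ∏ n : Fin (N + 2), g (n : ℕ) ((Fin.cons p.1 p.2 : Fin (N + 2) → Fin d) n) :=
          (Fintype.sum_equiv (Fin.consEquiv fun _ => Fin d) _ _ (fun p => rfl)).symm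
      _ = ∑ i : Fin d, ∑ y : Fin (N + 1) → Fin d,
            pathMass P π₀ (N + 1) ((Fin.cons i y : Fin (N + 2) → Fin d)) *
              ∏ n : Fin (N + 2), g (n : ℕ) ((Fin.cons i y : Fin (N + 2) → Fin d) n) :=
          Fintype.sum_prod_type _
      _ = ∑ i : Fin d, ∑ y : Fin (N + 1) → Fin d,
            (π₀ i * g 0 i * P i (y 0)) * (∏ n : Fin N, P (y n.castSucc) (y n.succ)) *
              ∏ n : Fin (N + 1), g ((n : ℕ) + 1) (y n) := by
          apply Finset.sum_congr rfl; intro i _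
          apply Finset.sum_congr rfl; intro y _
          have hmass : pathMass P π₀ (N + 1) ((Fin.cons i y : Fin (N + 2) → Fin d))
              = π₀ i * (P i (y 0) * ∏ n : Fin N, P (y n.castSucc) (y n.succ)) := by
            simp only [pathMass, Fin.cons_zero]
            congr 1
            rw [Fin.prod_univ_succ]
            congr 1
          have hprod : (∏ n : Fin (N + 2), g (n : ℕ) ((Fin.cons i y : Fin (N + 2) → Fin d) n))
              = g 0 i * ∏ n : Fin (N + 1), g ((n : ℕ) + 1) (y n) := by
            rw [Fin.prod_univ_succ]
            congr 1
          rw [hmass, hprod]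
          ring
      _ = ∑ y : Fin (N + 1) → Fin d, ∑ i : Fin d,
            (π₀ i * g 0 i * P i (y 0)) * (∏ n : Fin N, P (y n.castSucc) (y n.succ)) *
              ∏ n : Fin (N + 1), g ((n : ℕ) + 1) (y n) := Finset.sum_comm
      _ = ∑ y : Fin (N + 1) → Fin d,
            pathMass P (Matrix.vecMul (fun i => π₀ i * g 0 i) P) N y *
              ∏ n : Fin (N + 1), g ((n : ℕ) + 1) (y n) := by
          apply Finset.sum_congr rfl; intro y _
          rw [pathMass, vecMul_apply, Finset.sum_mul, Finset.sum_mul]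
      _ = ∑ i, wseq P g π₀ (N + 1) i := by
          have := ih (Matrix.vecMul (fun i => π₀ i * g 0 i) P) (fun k => g (k + 1))
          simp only [pathExp] at this
          rw [this]
          apply Finset.sum_congr rfl
          intro i _
          rw [wseq_shift]

end HSBAux

namespace HSBAux

open scoped Classical

variable {d : ℕ}

lemma wseq_skip (P : Matrix (Fin d) (Fin d) ℝ) (g : ℕ → Fin d → ℝ) (π₀ : Fin d → ℝ) (a : ℕ) :
    ∀ k, (∀ t, a < t → t < a + k + 1 → ∀ i, g t i = 1) →
    ∀ i, wseq P g π₀ (a + k + 1) i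
      = Matrix.vecMul (wseq P g π₀ a) (P ^ (k + 1)) i * g (a + k + 1) i := by
  intro k
  induction k with
  | zero =>
    intro _ i
    simp [wseq, pow_one]
  | succ k ih =>
    intro hg i
    have e1 : a + (k + 1) + 1 = a + k + 1 + 1 := by omega
    rw [e1]
    have unf : ∀ n j, wseq P g π₀ (n + 1) j
        = Matrix.vecMul (wseq P g π₀ n) P j * g (n + 1) j := fun n j => rfl
    rw [unf (a + k + 1) i]
    congr 1
    have hw1 : wseq P g π₀ (a + k + 1) = Matrix.vecMul (wseq P g π₀ a) (P ^ (k + 1)) := by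
      funext j
      rw [ih (fun t h1 h2 => hg t h1 (by omega)) j,
        hg (a + k + 1) (by omega) (by omega) j, mul_one]
    rw [hw1, Matrix.vecMul_vecMul, ← pow_succ]

lemma wseq_class_sum_le
    (P : Matrix (Fin d) (Fin d) ℝ) (hP : IsTransMat P)
    (π₀ f : Fin d → ℝ) (hπ₀ : IsProbVec π₀) (hf : ∀ i, f i ∈ Set.Icc (0:ℝ) 1)
    {θ c : ℝ} (hθ : 0 ≤ θ)
    (T K N : ℕ) (hT : 1 ≤ T) (hK : 1 ≤ K) (hN : N = K * T) (s : ℕ) (hs : s < T)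
    (hrowsT : ∀ j, ∑ i, (P ^ T) j i * f i ≤ c)
    (hinitrow : ∀ t, 1 ≤ t → t ≤ T → ∑ i, Matrix.vecMul π₀ (P ^ t) i * f i ≤ c)
    (g : ℕ → Fin d → ℝ)
    (hg1 : ∀ t i, (∃ m, m < K ∧ t = s + 1 + m * T) → g t i = Real.exp (θ * f i))
    (hg2 : ∀ t i, (¬ ∃ m, m < K ∧ t = s + 1 + m * T) → g t i = 1) :
    ∑ i, wseq P g π₀ N i ≤ Real.exp (θ * c + θ ^ 2 / 2) ^ K := by
  set B := Real.exp (θ * c + θ ^ 2 / 2) with hB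
  have hB0 : 0 < B := Real.exp_pos _
  -- no class time is ≤ s, and none is 0
  have hclass_ge : ∀ t, (∃ m, m < K ∧ t = s + 1 + m * T) → s + 1 ≤ t := by
    rintro t ⟨m, _, rfl⟩; omega
  -- value at time 0
  have hw0 : ∀ i, wseq P g π₀ 0 i = π₀ i := by
    intro i
    simp only [wseq]
    rw [hg2 0 i (fun h => by have := hclass_ge 0 h; omega), mul_one]
  -- the key inductive bound along class times
  have main : ∀ m, m < K →
      (∀ i, 0 ≤ wseq P g π₀ (s + 1 + m * T) i) ∧
      ∑ i, wseq P g π₀ (s + 1 + m * T) i ≤ B ^ (m + 1) := by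
    intro m
    induction m with
    | zero =>
      intro hm
      have hskip := wseq_skip P g π₀ 0 s (fun t h1 h2 i => hg2 t i
        (fun h => by have := hclass_ge t h; omega))
      have e0 : 0 + s + 1 = s + 1 + 0 * T := by omega
      rw [e0] at hskip
      have hwval : ∀ i, wseq P g π₀ (s + 1 + 0 * T) i
          = Matrix.vecMul π₀ (P ^ (s + 1)) i * Real.exp (θ * f i) := by
        intro i
        rw [hskip i, hg1 (s + 1 + 0 * T) i ⟨0, hK, rfl⟩]
        congr 2
        funext j
        rw [hw0 j]
      have hprob : IsProbVec (Matrix.vecMul π₀ (P ^ (s + 1))) :=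
        vecMul_prob hπ₀ (transMat_pow hP (s + 1))
      constructor
      · intro i
        rw [hwval i]
        exact mul_nonneg (hprob.1 i) (Real.exp_nonneg _)
      · have := row_mgf hprob hf hθ (hinitrow (s + 1) (by omega) (by omega))
        calc ∑ i, wseq P g π₀ (s + 1 + 0 * T) i
            = ∑ i, Matrix.vecMul π₀ (P ^ (s + 1)) i * Real.exp (θ * f i) :=
              Finset.sum_congr rfl fun i _ => hwval i
          _ ≤ B ^ (0 + 1) := by rw [pow_one]; exact this
    | succ m ihm =>
      intro hm
      obtain ⟨ihnn, ihsum⟩ := ihm (by omega)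
      set a := s + 1 + m * T with ha
      have hTpos : 0 < T := hT
      have hnotc : ∀ t, a < t → t < a + T → ∀ i, g t i = 1 := by
        intro t h1 h2 i
        apply hg2
        rintro ⟨m', hm', rfl⟩
        have h3 : m * T < m' * T := by omega
        have h4 : m < m' := lt_of_mul_lt_mul_right (by omega) (Nat.zero_le T)
        have hsm : (m + 1) * T = m * T + T := by rw [Nat.add_mul, Nat.one_mul]
        have h5 : (m + 1) * T ≤ m' * T := Nat.mul_le_mul_right T (by omega)
        omega
      have hskip := wseq_skip P g π₀ a (T - 1) (fun t h1 h2 i =>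
        hnotc t h1 (by omega) i)
      have ea : a + (T - 1) + 1 = s + 1 + (m + 1) * T := by
        have hsm : (m + 1) * T = m * T + T := by rw [Nat.add_mul, Nat.one_mul]
        omega
      rw [ea] at hskip
      have eT : T - 1 + 1 = T := by omega
      rw [eT] at hskip
      have hwval : ∀ i, wseq P g π₀ (s + 1 + (m + 1) * T) i
          = Matrix.vecMul (wseq P g π₀ a) (P ^ T) i * Real.exp (θ * f i) := by
        intro i
        rw [hskip i, hg1 _ i ⟨m + 1, hm, rfl⟩]
      have hPT := transMat_pow hP T
      have hvnn : ∀ i, 0 ≤ Matrix.vecMul (wseq P g π₀ a) (P ^ T) i :=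
        vecMul_nonneg ihnn hPT.1
      constructor
      · intro i
        rw [hwval i]
        exact mul_nonneg (hvnn i) (Real.exp_nonneg _)
      · calc ∑ i, wseq P g π₀ (s + 1 + (m + 1) * T) i
            = ∑ i, Matrix.vecMul (wseq P g π₀ a) (P ^ T) i * Real.exp (θ * f i) :=
              Finset.sum_congr rfl fun i _ => hwval i
          _ = ∑ i, ∑ j, wseq P g π₀ a j * (P ^ T) j i * Real.exp (θ * f i) := by
              apply Finset.sum_congr rfl; intro i _
              rw [vecMul_apply, Finset.sum_mul]
          _ = ∑ j, ∑ i, wseq P g π₀ a j * (P ^ T) j i * Real.exp (θ * f i) :=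
              Finset.sum_comm
          _ = ∑ j, wseq P g π₀ a j * ∑ i, (P ^ T) j i * Real.exp (θ * f i) := by
              apply Finset.sum_congr rfl; intro j _
              rw [Finset.mul_sum]
              apply Finset.sum_congr rfl; intro i _
              ring
          _ ≤ ∑ j, wseq P g π₀ a j * B := by
              apply Finset.sum_le_sum
              intro j _
              apply mul_le_mul_of_nonneg_left _ (ihnn j)
              exact row_mgf ⟨fun i => hPT.1 j i, hPT.2 j⟩ hf hθ (hrowsT j)
          _ = (∑ j, wseq P g π₀ a j) * B := (Finset.sum_mul _ _ _).symm
          _ ≤ B ^ (m + 1) * B :=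
              mul_le_mul_of_nonneg_right ihsum (le_of_lt hB0)
          _ = B ^ (m + 1 + 1) := (pow_succ B (m + 1)).symm
  -- from the last class time to N
  obtain ⟨lastnn, lastsum⟩ := main (K - 1) (by omega)
  have elast : (K - 1) + 1 = K := by omega
  rw [elast] at lastsum
  set a := s + 1 + (K - 1) * T with ha
  have haN : a ≤ N := by
    have h1 : (K - 1 + 1) * T = (K - 1) * T + T := by rw [Nat.add_mul, Nat.one_mul]
    have h2 : K - 1 + 1 = K := by omega
    rw [h2] at h1
    omega
  have hafter : ∀ t, a < t → ∀ i, g t i = 1 := by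
    intro t h1 i
    apply hg2
    rintro ⟨m', hm', rfl⟩
    have h3 : (K - 1) * T < m' * T := by omega
    have h4 : K - 1 < m' := lt_of_mul_lt_mul_right (by omega) (Nat.zero_le T)
    omega
  rcases eq_or_lt_of_le haN with heq | hlt
  · rw [← heq]; exact lastsum
  · have hskip := wseq_skip P g π₀ a (N - a - 1) (fun t h1 h2 i => hafter t h1 i)
    have eN : a + (N - a - 1) + 1 = N := by omega
    rw [eN] at hskip
    calc ∑ i, wseq P g π₀ N i
        = ∑ i, Matrix.vecMul (wseq P g π₀ a) (P ^ (N - a - 1 + 1)) i := by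
          apply Finset.sum_congr rfl; intro i _
          rw [hskip i, hafter N (by omega) i, mul_one]
      _ = ∑ i, wseq P g π₀ a i := sum_vecMul (transMat_pow hP _).2
      _ ≤ B ^ K := lastsum

end HSBAux

namespace HSBAux

open scoped Classical

variable {d : ℕ}

lemma pathMass_nonneg {P : Matrix (Fin d) (Fin d) ℝ} (hP : IsTransMat P)
    {π₀ : Fin d → ℝ} (hπ₀ : ∀ i, 0 ≤ π₀ i) (N : ℕ) (x : Fin (N + 1) → Fin d) :
    0 ≤ pathMass P π₀ N x :=
  mul_nonneg (hπ₀ _) (Finset.prod_nonneg fun n _ => hP.1 _ _)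

lemma exp_avg_le {T : ℕ} (hT : 0 < T) (a : Fin T → ℝ) :
    Real.exp ((1 / (T : ℝ)) * ∑ s, a s) ≤ (1 / (T : ℝ)) * ∑ s, Real.exp (a s) := by
  have hw : ∀ s ∈ (Finset.univ : Finset (Fin T)), (0 : ℝ) ≤ 1 / (T : ℝ) := fun _ _ => by positivity
  have hw1 : ∑ _s : Fin T, (1 : ℝ) / (T : ℝ) = 1 := by
    rw [Finset.sum_const, Finset.card_univ, Fintype.card_fin, nsmul_eq_mul]
    field_simp
  have hmem : ∀ s ∈ (Finset.univ : Finset (Fin T)), a s ∈ (Set.univ : Set ℝ) := fun _ _ => Set.mem_univ _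
  have h := convexOn_exp.map_sum_le hw hw1 hmem
  simp only [smul_eq_mul] at h
  calc Real.exp ((1 / (T : ℝ)) * ∑ s, a s)
      = Real.exp (∑ s, (1 / (T : ℝ)) * a s) := by rw [Finset.mul_sum]
    _ ≤ ∑ s, (1 / (T : ℝ)) * Real.exp (a s) := h
    _ = (1 / (T : ℝ)) * ∑ s, Real.exp (a s) := (Finset.mul_sum _ _ _).symm

lemma sum_residue {T K N : ℕ} (hT : 0 < T) (hK : 0 < K) (hN : N = K * T)
    (hidx : ∀ (s : Fin T) (m : Fin K), (s : ℕ) + (m : ℕ) * T < N) (G : Fin N → ℝ) :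
    ∑ n, G n = ∑ s : Fin T, ∑ m : Fin K, G ⟨(s : ℕ) + (m : ℕ) * T, hidx s m⟩ := by
  have hbij : Function.Bijective
      (fun p : Fin T × Fin K => (⟨(p.1 : ℕ) + (p.2 : ℕ) * T, hidx p.1 p.2⟩ : Fin N)) := by
    rw [Fintype.bijective_iff_injective_and_card]
    constructor
    · rintro ⟨s1, m1⟩ ⟨s2, m2⟩ h
      have hv : (s1 : ℕ) + (m1 : ℕ) * T = (s2 : ℕ) + (m2 : ℕ) * T := congrArg Fin.val h
      have hmod : ((s1 : ℕ) + (m1 : ℕ) * T) % T = (s1 : ℕ) % T := Nat.add_mul_mod_self_right _ _ _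
      have hmod2 : ((s2 : ℕ) + (m2 : ℕ) * T) % T = (s2 : ℕ) % T := Nat.add_mul_mod_self_right _ _ _
      have hs1 : (s1 : ℕ) % T = (s1 : ℕ) := Nat.mod_eq_of_lt s1.isLt
      have hs2 : (s2 : ℕ) % T = (s2 : ℕ) := Nat.mod_eq_of_lt s2.isLt
      have hseq : (s1 : ℕ) = (s2 : ℕ) := by rw [← hs1, ← hs2, ← hmod, ← hmod2, hv]
      have hmeq : (m1 : ℕ) * T = (m2 : ℕ) * T := by omega
      have : (m1 : ℕ) = (m2 : ℕ) := Nat.eq_of_mul_eq_mul_right hT hmeq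
      exact Prod.ext (Fin.ext hseq) (Fin.ext this)
    · simp [hN, Nat.mul_comm]
  calc ∑ n, G n
      = ∑ p : Fin T × Fin K, G ⟨(p.1 : ℕ) + (p.2 : ℕ) * T, hidx p.1 p.2⟩ :=
        (Fintype.sum_bijective _ hbij _ _ (fun p => rfl)).symm
    _ = ∑ s : Fin T, ∑ m : Fin K, G ⟨(s : ℕ) + (m : ℕ) * T, hidx s m⟩ :=
        Fintype.sum_prod_type _

lemma pathExp_class_mgf
    (P : Matrix (Fin d) (Fin d) ℝ) (hP : IsTransMat P)
    (π₀ f : Fin d → ℝ) (hπ₀ : IsProbVec π₀) (hf : ∀ i, f i ∈ Set.Icc (0:ℝ) 1)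
    {θ c : ℝ} (hθ : 0 ≤ θ)
    (T K N : ℕ) (hT : 1 ≤ T) (hK : 1 ≤ K) (hN : N = K * T) (s : ℕ) (hs : s < T)
    (hrowsT : ∀ j, ∑ i, (P ^ T) j i * f i ≤ c)
    (hinitrow : ∀ t, 1 ≤ t → t ≤ T → ∑ i, Matrix.vecMul π₀ (P ^ t) i * f i ≤ c)
    (hidx : ∀ m : Fin K, s + 1 + (m : ℕ) * T < N + 1) :
    pathExp P π₀ N (fun x => Real.exp (θ * ∑ m : Fin K, f (x ⟨s + 1 + (m : ℕ) * T, hidx m⟩)))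
      ≤ Real.exp (θ * c + θ ^ 2 / 2) ^ K := by
  set g : ℕ → Fin d → ℝ := fun t i =>
    if ∃ m, m < K ∧ t = s + 1 + m * T then Real.exp (θ * f i) else 1 with hg
  have hg1 : ∀ t i, (∃ m, m < K ∧ t = s + 1 + m * T) → g t i = Real.exp (θ * f i) :=
    fun t i h => by rw [hg]; exact if_pos h
  have hg2 : ∀ t i, (¬ ∃ m, m < K ∧ t = s + 1 + m * T) → g t i = 1 :=
    fun t i h => by rw [hg]; exact if_neg h
  have hfun : ∀ x : Fin (N + 1) → Fin d,
      (∏ n : Fin (N + 1), g (n : ℕ) (x n))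
        = Real.exp (θ * ∑ m : Fin K, f (x ⟨s + 1 + (m : ℕ) * T, hidx m⟩)) := by
    intro x
    set ι : Fin K → Fin (N + 1) := fun m => ⟨s + 1 + (m : ℕ) * T, hidx m⟩ with hι
    have hinj : Function.Injective ι := by
      intro m1 m2 h
      have hv : s + 1 + (m1 : ℕ) * T = s + 1 + (m2 : ℕ) * T := congrArg Fin.val h
      have : (m1 : ℕ) * T = (m2 : ℕ) * T := by omega
      exact Fin.ext (Nat.eq_of_mul_eq_mul_right hT this)
    have hmem : ∀ n : Fin (N + 1),
        (∃ m, m < K ∧ (n : ℕ) = s + 1 + m * T) ↔ n ∈ Finset.image ι Finset.univ := by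
      intro n
      constructor
      · rintro ⟨m, hm, he⟩
        exact Finset.mem_image.2 ⟨⟨m, hm⟩, Finset.mem_univ _, Fin.ext he.symm⟩
      · intro h
        obtain ⟨m, _, he⟩ := Finset.mem_image.1 h
        exact ⟨(m : ℕ), m.isLt, by rw [← he]⟩
    calc (∏ n : Fin (N + 1), g (n : ℕ) (x n))
        = ∏ n : Fin (N + 1),
            (if n ∈ Finset.image ι Finset.univ then Real.exp (θ * f (x n)) else 1) := by
          apply Finset.prod_congr rfl
          intro n _
          by_cases h : ∃ m, m < K ∧ (n : ℕ) = s + 1 + m * T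
          · rw [hg1 _ _ h, if_pos ((hmem n).1 h)]
          · rw [hg2 _ _ h, if_neg (fun hc => h ((hmem n).2 hc))]
      _ = ∏ n ∈ Finset.image ι Finset.univ, Real.exp (θ * f (x n)) := by
          rw [Finset.prod_ite_mem, Finset.univ_inter]
      _ = ∏ m : Fin K, Real.exp (θ * f (x (ι m))) :=
          Finset.prod_image (fun m1 _ m2 _ h => hinj h)
      _ = Real.exp (θ * ∑ m : Fin K, f (x (ι m))) := by
          rw [← Real.exp_sum, Finset.mul_sum]
  have heq : pathExp P π₀ N
      (fun x => Real.exp (θ * ∑ m : Fin K, f (x ⟨s + 1 + (m : ℕ) * T, hidx m⟩)))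
      = ∑ i, wseq P g π₀ N i := by
    rw [← pathExp_prod]
    apply congrArg (pathExp P π₀ N)
    funext x
    rw [hfun x]
  rw [heq]
  exact wseq_class_sum_le P hP π₀ f hπ₀ hf hθ T K N hT hK hN s hs hrowsT hinitrow g hg1 hg2

end HSBAux

namespace HSBAux

open scoped Classical

variable {d : ℕ}

lemma hoeffding_core (P : Matrix (Fin d) (Fin d) ℝ) (hP : IsTransMat P)
    (π₀ f : Fin d → ℝ) (hπ₀ : IsProbVec π₀) (hf : ∀ i, f i ∈ Set.Icc (0:ℝ) 1)
    (μ δ : ℝ) (hδ : 0 < δ) (T K N : ℕ) (hT : 1 ≤ T) (hK : 1 ≤ K) (hN : N = K * T)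
    (hrowsT : ∀ j, ∑ i, (P ^ T) j i * f i ≤ μ + δ)
    (hinitrow : ∀ t, 1 ≤ t → t ≤ T → ∑ i, Matrix.vecMul π₀ (P ^ t) i * f i ≤ μ + δ) :
    pathProb P π₀ N (fun x => μ + 2 * δ ≤ (1 / (N : ℝ)) * ∑ n : Fin N, f (x n.succ)) ≤
      Real.exp (-(δ ^ 2 * N) / (2 * T)) := by
  have hN1 : 1 ≤ N := by
    rw [hN]; exact Nat.one_le_iff_ne_zero.2 (Nat.mul_ne_zero (by omega) (by omega))
  have hNR : (0 : ℝ) < (N : ℝ) := by exact_mod_cast Nat.lt_of_lt_of_le Nat.zero_lt_one hN1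
  have hTR : (0 : ℝ) < (T : ℝ) := by exact_mod_cast hT
  set lam : ℝ := δ / (T : ℝ) with hlam
  have hlam0 : 0 < lam := div_pos hδ hTR
  set B : ℝ := Real.exp (δ * (μ + δ) + δ ^ 2 / 2) with hBdef
  -- index bound for class times
  have hidx : ∀ (s : Fin T) (m : Fin K), (s : ℕ) + 1 + (m : ℕ) * T < N + 1 := by
    intro s m
    have h1 : (m : ℕ) * T ≤ (K - 1) * T := Nat.mul_le_mul_right T (by omega)
    have h2 : (K - 1 + 1) * T = (K - 1) * T + T := by rw [Nat.add_mul, Nat.one_mul]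
    have h3 : K - 1 + 1 = K := by omega
    rw [h3] at h2
    have h4 : (s : ℕ) < T := s.isLt
    omega
  have hidx' : ∀ (s : Fin T) (m : Fin K), (s : ℕ) + (m : ℕ) * T < N := by
    intro s m
    have := hidx s m; omega
  -- the per-class sums
  set S : Fin T → (Fin (N + 1) → Fin d) → ℝ :=
    fun s x => ∑ m : Fin K, f (x ⟨(s : ℕ) + 1 + (m : ℕ) * T, hidx s m⟩) with hS
  -- decomposition of the total sum
  have hdecomp : ∀ x : Fin (N + 1) → Fin d,
      ∑ n : Fin N, f (x n.succ) = ∑ s : Fin T, S s x := by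
    intro x
    rw [sum_residue (by omega : 0 < T) (by omega : 0 < K) hN hidx'
      (fun n => f (x n.succ))]
    apply Finset.sum_congr rfl
    intro s _
    apply Finset.sum_congr rfl
    intro m _
    congr 1
    apply congrArg
    apply Fin.ext
    simp [Fin.val_succ]
    omega
  -- mass nonnegativity
  have hmass : ∀ x : Fin (N + 1) → Fin d, 0 ≤ pathMass P π₀ N x :=
    fun x => pathMass_nonneg hP hπ₀.1 N x
  -- Chernoff step
  set C : ℝ := lam * (N : ℝ) * (μ + 2 * δ) with hC
  have step1 : pathProb P π₀ N
        (fun x => μ + 2 * δ ≤ (1 / (N : ℝ)) * ∑ n : Fin N, f (x n.succ))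
      ≤ Real.exp (-C) *
        ∑ x : Fin (N + 1) → Fin d,
          pathMass P π₀ N x * Real.exp (lam * ∑ n : Fin N, f (x n.succ)) := by
    rw [pathProb]
    rw [Finset.mul_sum]
    apply Finset.sum_le_sum
    intro x _
    by_cases hE : μ + 2 * δ ≤ (1 / (N : ℝ)) * ∑ n : Fin N, f (x n.succ)
    · rw [if_pos hE]
      have harg : 0 ≤ lam * (∑ n : Fin N, f (x n.succ)) - C := by
        have h1 : (N : ℝ) * (μ + 2 * δ) ≤ ∑ n : Fin N, f (x n.succ) := by
          have := mul_le_mul_of_nonneg_left hE (le_of_lt hNR)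
          rw [← mul_assoc] at this
          field_simp at this
          linarith
        have h2 := mul_le_mul_of_nonneg_left h1 (le_of_lt hlam0)
        rw [hC]
        nlinarith
      calc pathMass P π₀ N x
          = pathMass P π₀ N x * 1 := (mul_one _).symm
        _ ≤ pathMass P π₀ N x *
            Real.exp (lam * (∑ n : Fin N, f (x n.succ)) - C) := by
            apply mul_le_mul_of_nonneg_left _ (hmass x)
            rw [← Real.exp_zero]
            exact Real.exp_le_exp.2 harg
        _ = Real.exp (-C) *
            (pathMass P π₀ N x * Real.exp (lam * ∑ n : Fin N, f (x n.succ))) := by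
            rw [Real.exp_sub, Real.exp_neg]
            ring
    · rw [if_neg hE]
      exact mul_nonneg (Real.exp_nonneg _) (mul_nonneg (hmass x) (Real.exp_nonneg _))
  -- Jensen step
  have step2 : ∑ x : Fin (N + 1) → Fin d,
        pathMass P π₀ N x * Real.exp (lam * ∑ n : Fin N, f (x n.succ))
      ≤ (1 / (T : ℝ)) * ∑ s : Fin T,
          ∑ x : Fin (N + 1) → Fin d, pathMass P π₀ N x * Real.exp (δ * S s x) := by
    have hptwise : ∀ x : Fin (N + 1) → Fin d,
        Real.exp (lam * ∑ n : Fin N, f (x n.succ))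
          ≤ (1 / (T : ℝ)) * ∑ s : Fin T, Real.exp (δ * S s x) := by
      intro x
      have e1 : lam * (∑ n : Fin N, f (x n.succ))
          = (1 / (T : ℝ)) * ∑ s : Fin T, δ * S s x := by
        rw [hdecomp x, ← Finset.mul_sum, hlam]
        ring
      rw [e1]
      exact exp_avg_le (by omega) _
    calc ∑ x : Fin (N + 1) → Fin d,
          pathMass P π₀ N x * Real.exp (lam * ∑ n : Fin N, f (x n.succ))
        ≤ ∑ x : Fin (N + 1) → Fin d,
          pathMass P π₀ N x * ((1 / (T : ℝ)) * ∑ s : Fin T, Real.exp (δ * S s x)) :=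
          Finset.sum_le_sum fun x _ =>
            mul_le_mul_of_nonneg_left (hptwise x) (hmass x)
      _ = (1 / (T : ℝ)) * ∑ x : Fin (N + 1) → Fin d,
          ∑ s : Fin T, pathMass P π₀ N x * Real.exp (δ * S s x) := by
          conv_rhs => rw [Finset.mul_sum]
          apply Finset.sum_congr rfl
          intro x _
          simp only [Finset.mul_sum]
          apply Finset.sum_congr rfl
          intro s _
          ring
      _ = (1 / (T : ℝ)) * ∑ s : Fin T,
          ∑ x : Fin (N + 1) → Fin d, pathMass P π₀ N x * Real.exp (δ * S s x) := by
          rw [Finset.sum_comm]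
  -- per-class MGF bound
  have step3 : ∀ s : Fin T,
      ∑ x : Fin (N + 1) → Fin d, pathMass P π₀ N x * Real.exp (δ * S s x) ≤ B ^ K := by
    intro s
    have := pathExp_class_mgf P hP π₀ f hπ₀ hf (le_of_lt hδ) T K N hT hK hN
      (s : ℕ) s.isLt hrowsT hinitrow (hidx s)
    rw [pathExp] at this
    exact this
  -- combine
  have hBK : (1 / (T : ℝ)) * ∑ s : Fin T,
      (∑ x : Fin (N + 1) → Fin d, pathMass P π₀ N x * Real.exp (δ * S s x)) ≤ B ^ K := by
    calc (1 / (T : ℝ)) * ∑ s : Fin T,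
        (∑ x : Fin (N + 1) → Fin d, pathMass P π₀ N x * Real.exp (δ * S s x))
        ≤ (1 / (T : ℝ)) * ∑ _s : Fin T, B ^ K := by
          apply mul_le_mul_of_nonneg_left _ (by positivity)
          exact Finset.sum_le_sum fun s _ => step3 s
      _ = B ^ K := by
          rw [Finset.sum_const, Finset.card_univ, Fintype.card_fin, nsmul_eq_mul]
          field_simp
  have final : Real.exp (-C) * B ^ K = Real.exp (-(δ ^ 2 * N) / (2 * T)) := by
    rw [hBdef, ← Real.exp_nat_mul, ← Real.exp_add]
    congr 1
    have hNT : (N : ℝ) = (K : ℝ) * (T : ℝ) := by exact_mod_cast congrArg Nat.cast hN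
    rw [hC, hlam, hNT]
    field_simp
    ring
  calc pathProb P π₀ N
        (fun x => μ + 2 * δ ≤ (1 / (N : ℝ)) * ∑ n : Fin N, f (x n.succ))
      ≤ Real.exp (-C) *
        ∑ x : Fin (N + 1) → Fin d,
          pathMass P π₀ N x * Real.exp (lam * ∑ n : Fin N, f (x n.succ)) := step1
    _ ≤ Real.exp (-C) * (B ^ K) := by
        apply mul_le_mul_of_nonneg_left _ (Real.exp_nonneg _)
        exact le_trans step2 hBK
    _ = Real.exp (-(δ ^ 2 * N) / (2 * T)) := final

end HSBAux

namespace HSBAux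

variable {d : ℕ}

lemma mulVec_apply' (M : Matrix (Fin d) (Fin d) ℝ) (v : Fin d → ℝ) (i : Fin d) :
    M.mulVec v i = ∑ j, M i j * v j := by
  simp [Matrix.mulVec, dotProduct]

lemma spectral_disc
    (hd : 0 < d)
    (P : Matrix (Fin d) (Fin d) ℝ) (π f : Fin d → ℝ)
    (hπ : IsStationaryDist P π)
    (hf : ∀ i, f i ∈ Set.Icc (0 : ℝ) 1)
    (μ : ℝ) (hμ : μ = ∑ i, π i * f i)
    (πmin : ℝ) (hπmin : πmin = Finset.univ.inf' ⟨⟨0, hd⟩, Finset.mem_univ _⟩ π)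
    (A : Matrix (Fin d) (Fin d) ℝ)
    (hA : ∀ i j, A i j = Real.sqrt (π i) * P i j / Real.sqrt (π j))
    (lam : Fin d → ℝ) (γ : Fin d → Fin d → ℝ)
    (horth : ∀ j k, ∑ i, γ j i * γ k i = if j = k then (1 : ℝ) else 0)
    (heig : ∀ j, A.mulVec (γ j) = lam j • γ j)
    (hlam0 : lam ⟨0, hd⟩ = 1)
    (hlt1 : ∀ j : Fin d, j ≠ ⟨0, hd⟩ → lam j < 1) (hgtm1 : ∀ j, (-1 : ℝ) < lam j)
    (hγ0 : ∀ i, γ ⟨0, hd⟩ i = Real.sqrt (π i))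
    (q : Fin d → Fin d → ℝ) (hq : ∀ j i, q j i = Real.sqrt (π i) * γ j i)
    (hv : Fin d → Fin d → ℝ) (hhv : ∀ j i, hv j i = γ j i / Real.sqrt (π i))
    (Jf : Finset (Fin d)) (hJf : ∀ j, j ∈ Jf ↔ (j ≠ ⟨0, hd⟩ ∧ ∑ i, q j i * f i ≠ 0))
    (J : Finset (Fin d)) (hJsub : J ⊆ Jf)
    (ΔJstar : ℝ)
    (hΔJstar : ΔJstar = if hne : J.Nonempty then
        2 * (J.card : ℝ) *
          (J.sup' hne fun j => Finset.univ.sup' ⟨⟨0, hd⟩, Finset.mem_univ _⟩ fun i => |hv j i|) *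
          (J.sup' hne fun j => |∑ i, q j i * f i|)
      else 0)
    (lamNegJ : ℝ)
    (hlamNegJ : lamNegJ =
      if hne : (Jf \ J).Nonempty then (Jf \ J).sup' hne (fun j => |lam j|) else 0)
    (ΔJ : ℝ) (hΔJ : ΔJstar ≤ ΔJ) :
    ∀ (n : ℕ) (i : Fin d), fDisc f (fun j => (P ^ n) i j) π ≤ ΔJ + lamNegJ ^ n / Real.sqrt πmin := by
  have hπpos : ∀ i, 0 < π i := hπ.1
  have hsq : ∀ i, 0 < Real.sqrt (π i) := fun i => Real.sqrt_pos.2 (hπpos i)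
  have hπminpos : 0 < πmin := by
    rw [hπmin]
    exact (Finset.lt_inf'_iff _).2 fun i _ => hπpos i
  have hπminle : ∀ i, πmin ≤ π i := by
    intro i
    rw [hπmin]
    exact Finset.inf'_le _ (Finset.mem_univ i)
  have hsqmin : 0 < Real.sqrt πmin := Real.sqrt_pos.2 hπminpos
  set z : Fin d := ⟨0, hd⟩ with hz
  set c : Fin d → ℝ := fun j => ∑ k, q j k * f k with hc
  -- column orthonormality
  set Γ : Matrix (Fin d) (Fin d) ℝ := Matrix.of (fun j i => γ j i) with hΓ
  have hΓΓt : Γ * Γ.transpose = 1 := by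
    ext j k
    rw [Matrix.mul_apply, Matrix.one_apply]
    simp only [hΓ, Matrix.transpose_apply, Matrix.of_apply]
    exact horth j k
  have hΓtΓ : Γ.transpose * Γ = 1 := mul_eq_one_comm.mp hΓΓt
  have hcol : ∀ i k, ∑ j, γ j i * γ j k = if i = k then (1 : ℝ) else 0 := by
    intro i k
    calc ∑ j, γ j i * γ j k = (Γ.transpose * Γ) i k := by
          rw [Matrix.mul_apply]
          simp only [hΓ, Matrix.transpose_apply, Matrix.of_apply]
      _ = (1 : Matrix (Fin d) (Fin d) ℝ) i k := by rw [hΓtΓ]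
      _ = if i = k then (1 : ℝ) else 0 := Matrix.one_apply
  -- Parseval
  have parseval : ∀ v : Fin d → ℝ, ∑ j, (∑ k, γ j k * v k) ^ 2 = ∑ k, v k ^ 2 := by
    intro v
    have e1 : ∀ j : Fin d, (∑ k, γ j k * v k) ^ 2
        = ∑ k, ∑ l, (v k * v l) * (γ j k * γ j l) := by
      intro j
      rw [sq, Finset.sum_mul_sum]
      apply Finset.sum_congr rfl; intro k _
      apply Finset.sum_congr rfl; intro l _
      ring
    rw [Finset.sum_congr rfl fun j _ => e1 j, Finset.sum_comm]
    have e2 : ∀ k : Fin d, (∑ j, ∑ l, (v k * v l) * (γ j k * γ j l)) = v k ^ 2 := by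
      intro k
      rw [Finset.sum_comm]
      have e3 : ∀ l : Fin d, (∑ j, (v k * v l) * (γ j k * γ j l))
          = (v k * v l) * (if k = l then (1 : ℝ) else 0) := by
        intro l
        rw [← hcol k l, Finset.mul_sum]
      rw [Finset.sum_congr rfl fun l _ => e3 l]
      simp [sq]
    rw [Finset.sum_congr rfl fun k _ => e2 k]
  -- eigenvalue powers
  have heign : ∀ (n : ℕ) (j : Fin d), (A ^ n).mulVec (γ j) = (lam j) ^ n • γ j := by
    intro n j
    induction n with
    | zero => simp [Matrix.one_mulVec]
    | succ n ih =>
      rw [pow_succ', ← Matrix.mulVec_mulVec, ih, Matrix.mulVec_smul, heig j, smul_smul,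
        ← pow_succ]
  -- conjugation identity
  have hconj : ∀ (n : ℕ) (i : Fin d),
      Real.sqrt (π i) * (P ^ n).mulVec f i
        = (A ^ n).mulVec (fun k => Real.sqrt (π k) * f k) i := by
    intro n
    induction n with
    | zero => intro i; simp [Matrix.one_mulVec]
    | succ n ih =>
      intro i
      rw [pow_succ', pow_succ', ← Matrix.mulVec_mulVec, ← Matrix.mulVec_mulVec,
        mulVec_apply', mulVec_apply', Finset.mul_sum]
      apply Finset.sum_congr rfl
      intro j _
      have hAij : A i j * Real.sqrt (π j) = Real.sqrt (π i) * P i j := by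
        rw [hA i j, div_mul_cancel₀]
        exact ne_of_gt (hsq j)
      calc Real.sqrt (π i) * (P i j * (P ^ n).mulVec f j)
          = (A i j * Real.sqrt (π j)) * (P ^ n).mulVec f j := by rw [hAij]; ring
        _ = A i j * (Real.sqrt (π j) * (P ^ n).mulVec f j) := by ring
        _ = A i j * (A ^ n).mulVec (fun k => Real.sqrt (π k) * f k) j := by rw [ih j]
  -- expansion in the eigenbasis
  have hexpand : ∀ (w : Fin d → ℝ) (i : Fin d),
      w i = ∑ j, (∑ k, γ j k * w k) * γ j i := by
    intro w i
    have e1 : ∑ j, (∑ k, γ j k * w k) * γ j i = ∑ k, w k * ∑ j, γ j k * γ j i := by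
      calc ∑ j, (∑ k, γ j k * w k) * γ j i
          = ∑ j, ∑ k, w k * (γ j k * γ j i) := by
            apply Finset.sum_congr rfl; intro j _
            rw [Finset.sum_mul]
            apply Finset.sum_congr rfl; intro k _
            ring
        _ = ∑ k, ∑ j, w k * (γ j k * γ j i) := Finset.sum_comm
        _ = ∑ k, w k * ∑ j, γ j k * γ j i := by
            apply Finset.sum_congr rfl; intro k _
            rw [Finset.mul_sum]
    rw [e1, Finset.sum_congr rfl fun k _ => by rw [hcol k i]]
    simp
  -- the main spectral formula
  have hmain : ∀ (n : ℕ) (i : Fin d),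
      Real.sqrt (π i) * (P ^ n).mulVec f i = ∑ j, (lam j) ^ n * c j * γ j i := by
    intro n i
    rw [hconj n i]
    have hcg : ∀ j, c j = ∑ k, γ j k * (Real.sqrt (π k) * f k) := by
      intro j
      rw [hc]
      apply Finset.sum_congr rfl; intro k _
      rw [hq j k]; ring
    calc (A ^ n).mulVec (fun k => Real.sqrt (π k) * f k) i
        = ∑ l, (A ^ n) i l * ∑ j, (∑ k, γ j k * (Real.sqrt (π k) * f k)) * γ j l := by
          rw [mulVec_apply']
          apply Finset.sum_congr rfl; intro l _
          rw [← hexpand (fun k => Real.sqrt (π k) * f k) l]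
      _ = ∑ l, ∑ j, c j * ((A ^ n) i l * γ j l) := by
          apply Finset.sum_congr rfl; intro l _
          rw [Finset.mul_sum]
          apply Finset.sum_congr rfl; intro j _
          rw [← hcg j]; ring
      _ = ∑ j, ∑ l, c j * ((A ^ n) i l * γ j l) := Finset.sum_comm
      _ = ∑ j, c j * ((A ^ n).mulVec (γ j) i) := by
          apply Finset.sum_congr rfl; intro j _
          rw [mulVec_apply', Finset.mul_sum]
      _ = ∑ j, (lam j) ^ n * c j * γ j i := by
          apply Finset.sum_congr rfl; intro j _
          rw [heign n j]
          simp only [Pi.smul_apply, smul_eq_mul]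
          ring
  -- first term
  have hc0 : c z = μ := by
    rw [hc, hμ]
    apply Finset.sum_congr rfl; intro k _
    rw [hq z k, hγ0 k, Real.mul_self_sqrt (le_of_lt (hπpos k))]
  -- ΔJ is nonnegative; and the supremum bounds
  intro n i
  set t : Fin d → ℝ := fun j => (lam j) ^ n * c j * γ j i with ht
  have hterm0 : t z = μ * Real.sqrt (π i) := by
    rw [ht]
    simp only [hlam0, hc0, hγ0 i, one_pow, one_mul]
  have hdiff : Real.sqrt (π i) * ((P ^ n).mulVec f i - μ)
      = ∑ j ∈ Finset.univ.erase z, t j := by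
    have hsum := hmain n i
    have := Finset.add_sum_erase Finset.univ t (Finset.mem_univ z)
    rw [mul_sub, hsum, ← this, hterm0]
    ring
  -- bound the J part
  have hJe : J ⊆ Finset.univ.erase z := by
    intro j hj
    exact Finset.mem_erase.2 ⟨((hJf j).mp (hJsub hj)).1, Finset.mem_univ j⟩
  have habs : ∀ j, |t j| = |lam j| ^ n * |c j| * |γ j i| := by
    intro j
    rw [ht]
    rw [abs_mul, abs_mul, abs_pow]
  have hJpart : ∑ j ∈ J, |t j| ≤ ΔJ * Real.sqrt (π i) := by
    by_cases hJne : J.Nonempty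
    · set H : ℝ := J.sup' hJne fun j =>
        Finset.univ.sup' ⟨⟨0, hd⟩, Finset.mem_univ _⟩ fun i => |hv j i| with hH
      set Q : ℝ := J.sup' hJne fun j => |∑ k, q j k * f k| with hQ
      have hbound : ∀ j ∈ J, |t j| ≤ Q * (H * Real.sqrt (π i)) := by
        intro j hj
        have hjne : j ≠ z := ((hJf j).mp (hJsub hj)).1
        have hlam1 : |lam j| ≤ 1 :=
          le_of_lt (abs_lt.2 ⟨hgtm1 j, hlt1 j hjne⟩)
        have hlamn : |lam j| ^ n ≤ 1 := pow_le_one₀ (abs_nonneg _) hlam1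
        have hcQ : |c j| ≤ Q := Finset.le_sup' (fun j => |∑ k, q j k * f k|) hj
        have hγH : |γ j i| ≤ H * Real.sqrt (π i) := by
          have hγeq : γ j i = hv j i * Real.sqrt (π i) := by
            rw [hhv j i, div_mul_cancel₀]
            exact ne_of_gt (hsq i)
          rw [hγeq, abs_mul, abs_of_pos (hsq i)]
          apply mul_le_mul_of_nonneg_right _ (le_of_lt (hsq i))
          calc |hv j i| ≤ Finset.univ.sup' ⟨⟨0, hd⟩, Finset.mem_univ _⟩
                (fun i => |hv j i|) := Finset.le_sup' (fun i => |hv j i|) (Finset.mem_univ i)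
            _ ≤ H := Finset.le_sup'
                (fun j => Finset.univ.sup' ⟨⟨0, hd⟩, Finset.mem_univ _⟩ fun i => |hv j i|) hj
        have hQ0 : 0 ≤ Q := le_trans (abs_nonneg _) hcQ
        rw [habs j]
        calc |lam j| ^ n * |c j| * |γ j i|
            ≤ (1 * Q) * (H * Real.sqrt (π i)) := by
              apply mul_le_mul _ hγH (abs_nonneg _)
              · positivity
              · exact mul_le_mul hlamn hcQ (abs_nonneg _) zero_le_one
          _ = Q * (H * Real.sqrt (π i)) := by ring
      have hH0 : 0 ≤ H := by
        obtain ⟨j0, hj0⟩ := hJne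
        calc (0 : ℝ) ≤ |hv j0 i| := abs_nonneg _
          _ ≤ Finset.univ.sup' ⟨⟨0, hd⟩, Finset.mem_univ _⟩ (fun i => |hv j0 i|) :=
            Finset.le_sup' (fun i => |hv j0 i|) (Finset.mem_univ i)
          _ ≤ H := Finset.le_sup'
                (fun j => Finset.univ.sup' ⟨⟨0, hd⟩, Finset.mem_univ _⟩ fun i => |hv j i|) hj0
      have hQ0 : 0 ≤ Q := by
        obtain ⟨j0, hj0⟩ := hJne
        exact le_trans (abs_nonneg _) (Finset.le_sup' (fun j => |∑ k, q j k * f k|) hj0)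
      calc ∑ j ∈ J, |t j| ≤ J.card • (Q * (H * Real.sqrt (π i))) :=
            Finset.sum_le_card_nsmul J _ _ hbound
        _ = (J.card : ℝ) * H * Q * Real.sqrt (π i) := by
            rw [nsmul_eq_mul]; ring
        _ ≤ ΔJ * Real.sqrt (π i) := by
            apply mul_le_mul_of_nonneg_right _ (le_of_lt (hsq i))
            have hstar : ΔJstar = 2 * (J.card : ℝ) * H * Q := by
              rw [hΔJstar, dif_pos hJne]
            have hcard0 : (0 : ℝ) ≤ (J.card : ℝ) := Nat.cast_nonneg _
            have h0 : 0 ≤ (J.card : ℝ) * H * Q := mul_nonneg (mul_nonneg hcard0 hH0) hQ0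
            nlinarith [hΔJ, h0]
    · rw [Finset.not_nonempty_iff_eq_empty.mp hJne]
      simp only [Finset.sum_empty]
      have hstar : ΔJstar = 0 := by rw [hΔJstar, dif_neg hJne]
      have hΔJ0 : 0 ≤ ΔJ := by linarith
      exact mul_nonneg hΔJ0 (le_of_lt (hsq i))
  -- lamNegJ is nonnegative
  have hlamNeg0 : 0 ≤ lamNegJ := by
    rw [hlamNegJ]
    by_cases hne : (Jf \ J).Nonempty
    · rw [dif_pos hne]
      obtain ⟨j0, hj0⟩ := hne
      exact le_trans (abs_nonneg (lam j0)) (Finset.le_sup' (fun j => |lam j|) hj0)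
    · rw [dif_neg hne]
  -- bound the tail part
  have htail : ∑ j ∈ Jf \ J, |t j| ≤ lamNegJ ^ n := by
    by_cases hne : (Jf \ J).Nonempty
    · have hlamle : ∀ j ∈ Jf \ J, |lam j| ≤ lamNegJ := by
        intro j hj
        rw [hlamNegJ, dif_pos hne]
        exact Finset.le_sup' (fun j => |lam j|) hj
      have hstep : ∑ j ∈ Jf \ J, |t j|
          ≤ lamNegJ ^ n * ∑ j ∈ Jf \ J, |c j| * |γ j i| := by
        rw [Finset.mul_sum]
        apply Finset.sum_le_sum
        intro j hj
        rw [habs j]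
        have h1 : |lam j| ^ n ≤ lamNegJ ^ n :=
          pow_le_pow_left₀ (abs_nonneg _) (hlamle j hj) n
        calc |lam j| ^ n * |c j| * |γ j i|
            = |lam j| ^ n * (|c j| * |γ j i|) := by ring
          _ ≤ lamNegJ ^ n * (|c j| * |γ j i|) :=
            mul_le_mul_of_nonneg_right h1 (mul_nonneg (abs_nonneg _) (abs_nonneg _))
      have hcs : ∑ j ∈ Jf \ J, |c j| * |γ j i| ≤ 1 := by
        have h1 := Real.sum_mul_le_sqrt_mul_sqrt (Jf \ J)
          (fun j => |c j|) (fun j => |γ j i|)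
        have h2 : ∑ j ∈ Jf \ J, |c j| ^ 2 ≤ 1 := by
          have hsub : ∑ j ∈ Jf \ J, |c j| ^ 2 ≤ ∑ j, |c j| ^ 2 :=
            Finset.sum_le_sum_of_subset_of_nonneg (Finset.subset_univ _)
              (fun j _ _ => sq_nonneg _)
          have hpars : ∑ j, |c j| ^ 2 = ∑ k, (Real.sqrt (π k) * f k) ^ 2 := by
            have e0 : ∀ j : Fin d, |c j| ^ 2 = (∑ k, γ j k * (Real.sqrt (π k) * f k)) ^ 2 := by
              intro j
              rw [sq_abs]
              congr 1
              rw [hc]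
              apply Finset.sum_congr rfl; intro k _
              rw [hq j k]; ring
            rw [Finset.sum_congr rfl fun j _ => e0 j]
            exact parseval _
          have hle1 : ∑ k, (Real.sqrt (π k) * f k) ^ 2 ≤ 1 := by
            calc ∑ k, (Real.sqrt (π k) * f k) ^ 2 ≤ ∑ k, π k := by
                  apply Finset.sum_le_sum
                  intro k _
                  rw [mul_pow, Real.sq_sqrt (le_of_lt (hπpos k))]
                  have hfk2 : f k ^ 2 ≤ 1 := by nlinarith [(hf k).1, (hf k).2]
                  nlinarith [hπpos k, hfk2]
              _ = 1 := hπ.2.1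
          rw [hpars] at hsub
          linarith
        have h3 : ∑ j ∈ Jf \ J, |γ j i| ^ 2 ≤ 1 := by
          have hsub : ∑ j ∈ Jf \ J, |γ j i| ^ 2 ≤ ∑ j, |γ j i| ^ 2 :=
            Finset.sum_le_sum_of_subset_of_nonneg (Finset.subset_univ _)
              (fun j _ _ => sq_nonneg _)
          have hone : ∑ j, |γ j i| ^ 2 = 1 := by
            have := hcol i i
            rw [if_pos rfl] at this
            rw [← this]
            apply Finset.sum_congr rfl; intro j _
            rw [sq_abs, sq]
          linarith
        calc ∑ j ∈ Jf \ J, |c j| * |γ j i|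
            ≤ Real.sqrt (∑ j ∈ Jf \ J, |c j| ^ 2) *
              Real.sqrt (∑ j ∈ Jf \ J, |γ j i| ^ 2) := h1
          _ ≤ Real.sqrt 1 * Real.sqrt 1 := by
              apply mul_le_mul (Real.sqrt_le_sqrt h2) (Real.sqrt_le_sqrt h3)
                (Real.sqrt_nonneg _) (Real.sqrt_nonneg _)
          _ = 1 := by rw [Real.sqrt_one, mul_one]
      calc ∑ j ∈ Jf \ J, |t j| ≤ lamNegJ ^ n * ∑ j ∈ Jf \ J, |c j| * |γ j i| := hstep
        _ ≤ lamNegJ ^ n * 1 := by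
            apply mul_le_mul_of_nonneg_left hcs (pow_nonneg hlamNeg0 n)
        _ = lamNegJ ^ n := mul_one _
    · rw [Finset.not_nonempty_iff_eq_empty.mp hne]
      simp only [Finset.sum_empty]
      exact pow_nonneg hlamNeg0 n
  -- vanishing outside Jf
  have hzero : ∀ j ∈ (Finset.univ.erase z) \ J, j ∉ Jf \ J → |t j| = 0 := by
    intro j hj hnj
    have hj1 := Finset.mem_sdiff.1 hj
    have hjz : j ≠ z := (Finset.mem_erase.1 hj1.1).1
    have hjnotJf : j ∉ Jf := by
      intro hjf
      exact hnj (Finset.mem_sdiff.2 ⟨hjf, hj1.2⟩)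
    have hcj : c j = 0 := by
      by_contra hcc
      exact hjnotJf ((hJf j).mpr ⟨hjz, hcc⟩)
    rw [habs j, hcj, abs_zero]
    ring
  -- combine
  have hsplit : ∑ j ∈ Finset.univ.erase z, |t j|
      = ∑ j ∈ J, |t j| + ∑ j ∈ (Finset.univ.erase z) \ J, |t j| :=
    by rw [← Finset.sum_sdiff hJe]; ring
  have hsd : ∑ j ∈ (Finset.univ.erase z) \ J, |t j| = ∑ j ∈ Jf \ J, |t j| := by
    apply (Finset.sum_subset _ _).symm
    · intro j hj
      have h1 := Finset.mem_sdiff.1 hj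
      refine Finset.mem_sdiff.2 ⟨Finset.mem_erase.2 ⟨((hJf j).mp h1.1).1, Finset.mem_univ j⟩, h1.2⟩
    · exact hzero
  have htotal : |Real.sqrt (π i) * ((P ^ n).mulVec f i - μ)|
      ≤ ΔJ * Real.sqrt (π i) + lamNegJ ^ n := by
    rw [hdiff]
    calc |∑ j ∈ Finset.univ.erase z, t j|
        ≤ ∑ j ∈ Finset.univ.erase z, |t j| := Finset.abs_sum_le_sum_abs _ _
      _ = ∑ j ∈ J, |t j| + ∑ j ∈ Jf \ J, |t j| := by rw [hsplit, hsd]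
      _ ≤ ΔJ * Real.sqrt (π i) + lamNegJ ^ n := add_le_add hJpart htail
  -- divide by sqrt(π i)
  have hfd : fDisc f (fun j => (P ^ n) i j) π = |(P ^ n).mulVec f i - μ| := by
    rw [fDisc, hμ, mulVec_apply']
  rw [hfd]
  have hABS : Real.sqrt (π i) * |(P ^ n).mulVec f i - μ|
      ≤ ΔJ * Real.sqrt (π i) + lamNegJ ^ n := by
    have h := htotal
    rw [abs_mul, abs_of_pos (hsq i)] at h
    exact h
  have hdivle : lamNegJ ^ n / Real.sqrt (π i) ≤ lamNegJ ^ n / Real.sqrt πmin := by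
    apply div_le_div_of_nonneg_left (pow_nonneg hlamNeg0 n) hsqmin
    exact Real.sqrt_le_sqrt (hπminle i)
  have step : |(P ^ n).mulVec f i - μ| ≤ ΔJ + lamNegJ ^ n / Real.sqrt (π i) := by
    rw [← le_div_iff₀' (hsq i)] at hABS
    calc |(P ^ n).mulVec f i - μ|
        ≤ (ΔJ * Real.sqrt (π i) + lamNegJ ^ n) / Real.sqrt (π i) := hABS
      _ = ΔJ + lamNegJ ^ n / Real.sqrt (π i) := by
          rw [add_div, mul_div_cancel_right₀ _ (ne_of_gt (hsq i))]
  linarith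

end HSBAux
/-- Hoeffding bound from the sharper `f`-discrepancy bound
(Corollary `cor:hoeffding-derived-Jf`). -/
theorem hoeffding_sharper_spectral_bound
    {d : ℕ} (hd : 0 < d)
    (P : Matrix (Fin d) (Fin d) ℝ) (π π₀ f : Fin d → ℝ)
    (hP : IsTransMat P) (hirr : IsIrreducibleMat P) (haper : IsAperiodicMat P)
    (hπ : IsStationaryDist P π) (hrev : IsReversibleMat P π) (hπ₀ : IsProbVec π₀)
    (hf : ∀ i, f i ∈ Set.Icc (0 : ℝ) 1)
    (μ : ℝ) (hμ : μ = ∑ i, π i * f i)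
    (πmin : ℝ) (hπmin : πmin = Finset.univ.inf' ⟨⟨0, hd⟩, Finset.mem_univ _⟩ π)
    (A : Matrix (Fin d) (Fin d) ℝ)
    (hA : ∀ i j, A i j = Real.sqrt (π i) * P i j / Real.sqrt (π j))
    (lam : Fin d → ℝ) (γ : Fin d → Fin d → ℝ)
    (horth : ∀ j k, ∑ i, γ j i * γ k i = if j = k then (1 : ℝ) else 0)
    (heig : ∀ j, A.mulVec (γ j) = lam j • γ j)
    (hlam0 : lam ⟨0, hd⟩ = 1) (hmono : ∀ j k : Fin d, j ≤ k → lam k ≤ lam j)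
    (hlt1 : ∀ j : Fin d, j ≠ ⟨0, hd⟩ → lam j < 1) (hgtm1 : ∀ j, (-1 : ℝ) < lam j)
    (hγ0 : ∀ i, γ ⟨0, hd⟩ i = Real.sqrt (π i))
    (q : Fin d → Fin d → ℝ) (hq : ∀ j i, q j i = Real.sqrt (π i) * γ j i)
    (hv : Fin d → Fin d → ℝ) (hhv : ∀ j i, hv j i = γ j i / Real.sqrt (π i))
    (Jf : Finset (Fin d))
    (hJf : ∀ j, j ∈ Jf ↔ (j ≠ ⟨0, hd⟩ ∧ ∑ i, q j i * f i ≠ 0))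
    (J : Finset (Fin d)) (hJsub : J ⊆ Jf)
    (ΔJstar : ℝ)
    (hΔJstar : ΔJstar = if hne : J.Nonempty then
        2 * (J.card : ℝ) *
          (J.sup' hne fun j => Finset.univ.sup' ⟨⟨0, hd⟩, Finset.mem_univ _⟩ fun i => |hv j i|) *
          (J.sup' hne fun j => |∑ i, q j i * f i|)
      else 0)
    (lamNegJ : ℝ)
    (hlamNegJ : lamNegJ =
      if hne : (Jf \ J).Nonempty then (Jf \ J).sup' hne (fun j => |lam j|) else 0)
    (ΔJ Δ : ℝ) (hΔJ : ΔJstar ≤ ΔJ) (hΔ : 0 < Δ)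
    (T : ℕ) (hT : T = fMixTime P π f (ΔJ + Δ))
    (hinit : ∀ t < T, fDisc f (Matrix.vecMul π₀ (P ^ t)) π ≤ ΔJ + Δ)
    (N : ℕ) (hN : 0 < N) (hdvd : T ∣ N) :
    (lamNegJ / Real.sqrt πmin < Δ →
      T = 1 ∧
      pathProb P π₀ N
          (fun x => μ + 2 * (ΔJ + Δ) ≤ (1 / (N : ℝ)) * ∑ n : Fin N, f (x n.succ)) ≤
        Real.exp (-((ΔJ + Δ) ^ 2 * (N : ℝ)) / 2)) ∧
    (Δ ≤ lamNegJ / Real.sqrt πmin →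
      T ≤ ⌈Real.log (1 / (Δ * Real.sqrt πmin)) / Real.log (1 / lamNegJ)⌉₊ ∧
      pathProb P π₀ N
          (fun x => μ + 2 * (ΔJ + Δ) ≤ (1 / (N : ℝ)) * ∑ n : Fin N, f (x n.succ)) ≤
        Real.exp (-((ΔJ + Δ) ^ 2 * (N : ℝ)) /
          (2 * (⌈Real.log (1 / (Δ * Real.sqrt πmin)) / Real.log (1 / lamNegJ)⌉₊ : ℝ)))) := by

  classical
  -- basic positivity facts
  have hπminpos : 0 < πmin := by
    rw [hπmin]
    exact (Finset.lt_inf'_iff _).2 fun i _ => hπ.1 i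
  have hsqmin : 0 < Real.sqrt πmin := Real.sqrt_pos.2 hπminpos
  have hΔJstar0 : 0 ≤ ΔJstar := by
    rw [hΔJstar]
    by_cases hne : J.Nonempty
    · rw [dif_pos hne]
      obtain ⟨j0, hj0⟩ := hne
      have hH0 : 0 ≤ J.sup' ⟨j0, hj0⟩ fun j =>
          Finset.univ.sup' ⟨⟨0, hd⟩, Finset.mem_univ _⟩ fun i => |hv j i| := by
        calc (0 : ℝ) ≤ |hv j0 ⟨0, hd⟩| := abs_nonneg _
          _ ≤ Finset.univ.sup' ⟨⟨0, hd⟩, Finset.mem_univ _⟩ (fun i => |hv j0 i|) :=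
            Finset.le_sup' (fun i => |hv j0 i|) (Finset.mem_univ _)
          _ ≤ _ := Finset.le_sup'
              (fun j => Finset.univ.sup' ⟨⟨0, hd⟩, Finset.mem_univ _⟩ fun i => |hv j i|) hj0
      have hQ0 : 0 ≤ J.sup' ⟨j0, hj0⟩ fun j => |∑ i, q j i * f i| :=
        le_trans (abs_nonneg _) (Finset.le_sup' (fun j => |∑ i, q j i * f i|) hj0)
      have hc0 : (0 : ℝ) ≤ (J.card : ℝ) := Nat.cast_nonneg _
      positivity
    · rw [dif_neg hne]
  have hδpos : 0 < ΔJ + Δ := by linarith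
  have hlamNeg0 : 0 ≤ lamNegJ := by
    rw [hlamNegJ]
    by_cases hne : (Jf \ J).Nonempty
    · rw [dif_pos hne]
      obtain ⟨j0, hj0⟩ := hne
      exact le_trans (abs_nonneg (lam j0)) (Finset.le_sup' (fun j => |lam j|) hj0)
    · rw [dif_neg hne]
  have hlamlt1 : lamNegJ < 1 := by
    rw [hlamNegJ]
    by_cases hne : (Jf \ J).Nonempty
    · rw [dif_pos hne, Finset.sup'_lt_iff]
      intro j hj
      have hjJf : j ∈ Jf := (Finset.mem_sdiff.1 hj).1
      have hjz : j ≠ ⟨0, hd⟩ := ((hJf j).mp hjJf).1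
      exact abs_lt.2 ⟨hgtm1 j, hlt1 j hjz⟩
    · rw [dif_neg hne]; norm_num
  -- the spectral discrepancy bound
  have hspec := HSBAux.spectral_disc hd P π f hπ hf μ hμ πmin hπmin A hA lam γ horth heig
    hlam0 hlt1 hgtm1 hγ0 q hq hv hhv Jf hJf J hJsub ΔJstar hΔJstar lamNegJ hlamNegJ ΔJ hΔJ
  -- membership criterion for the mixing set
  set S : Set ℕ := {n : ℕ | 1 ≤ n ∧ ∀ i, fDisc f (fun j => (P ^ n) i j) π ≤ ΔJ + Δ} with hS
  have hmem_of : ∀ n : ℕ, 1 ≤ n → lamNegJ ^ n / Real.sqrt πmin ≤ Δ → n ∈ S := by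
    intro n h1 h2
    exact ⟨h1, fun i => le_trans (hspec n i) (by linarith)⟩
  have hTsInf : T = sInf S := hT
  -- given that T belongs to the mixing set, we get the Hoeffding bound
  have mkcore : T ∈ S →
      pathProb P π₀ N
          (fun x => μ + 2 * (ΔJ + Δ) ≤ (1 / (N : ℝ)) * ∑ n : Fin N, f (x n.succ)) ≤
        Real.exp (-((ΔJ + Δ) ^ 2 * (N : ℝ)) / (2 * (T : ℝ))) := by
    intro hTmem
    obtain ⟨hT1, hTdisc⟩ := hTmem
    have hrowsT : ∀ j, ∑ i, (P ^ T) j i * f i ≤ μ + (ΔJ + Δ) := by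
      intro j
      have := hTdisc j
      rw [fDisc] at this
      have h2 := (abs_le.1 this).2
      rw [hμ]
      linarith
    have hinitrow : ∀ t, 1 ≤ t → t ≤ T →
        ∑ i, Matrix.vecMul π₀ (P ^ t) i * f i ≤ μ + (ΔJ + Δ) := by
      intro t ht1 ht2
      rcases lt_or_eq_of_le ht2 with hlt | heq
      · have := hinit t hlt
        rw [fDisc] at this
        have h2 := (abs_le.1 this).2
        rw [hμ]
        linarith
      · subst heq
        calc ∑ i, Matrix.vecMul π₀ (P ^ t) i * f i
            = ∑ j, π₀ j * ∑ i, (P ^ t) j i * f i := by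
              simp_rw [HSBAux.vecMul_apply, Finset.sum_mul]
              rw [Finset.sum_comm]
              apply Finset.sum_congr rfl; intro j _
              rw [Finset.mul_sum]
              apply Finset.sum_congr rfl; intro i _
              ring
          _ ≤ ∑ j, π₀ j * (μ + (ΔJ + Δ)) :=
              Finset.sum_le_sum fun j _ =>
                mul_le_mul_of_nonneg_left (hrowsT j) (hπ₀.1 j)
          _ = μ + (ΔJ + Δ) := by rw [← Finset.sum_mul, hπ₀.2, one_mul]
    set K : ℕ := N / T with hK
    have hKT : N = K * T := (Nat.div_mul_cancel hdvd).symm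
    have hK1 : 1 ≤ K := Nat.one_le_iff_ne_zero.2 (by
      intro h0
      rw [h0, Nat.zero_mul] at hKT
      omega)
    exact HSBAux.hoeffding_core P hP π₀ f hπ₀ hf μ (ΔJ + Δ) hδpos T K N hT1 hK1 hKT
      hrowsT hinitrow
  constructor
  · -- case (i)
    intro hcase
    have h1mem : 1 ∈ S := by
      apply hmem_of 1 le_rfl
      rw [pow_one]
      exact le_of_lt hcase
    have hTle : T ≤ 1 := by
      rw [hTsInf]
      exact Nat.sInf_le h1mem
    have hTmem : T ∈ S := by
      rw [hTsInf]
      exact Nat.sInf_mem ⟨1, h1mem⟩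
    have hT1 : T = 1 := le_antisymm hTle hTmem.1
    refine ⟨hT1, ?_⟩
    calc pathProb P π₀ N
          (fun x => μ + 2 * (ΔJ + Δ) ≤ (1 / (N : ℝ)) * ∑ n : Fin N, f (x n.succ))
        ≤ Real.exp (-((ΔJ + Δ) ^ 2 * (N : ℝ)) / (2 * (T : ℝ))) := mkcore hTmem
      _ = Real.exp (-((ΔJ + Δ) ^ 2 * (N : ℝ)) / 2) := by
          rw [hT1]
          norm_num
  · -- case (ii)
    intro hcase
    have hlampos : 0 < lamNegJ := by
      rcases lt_or_eq_of_le hlamNeg0 with h | h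
      · exact h
      · exfalso
        rw [← h] at hcase
        rw [zero_div] at hcase
        linarith
    have hzlt : Δ * Real.sqrt πmin ≤ lamNegJ := (le_div_iff₀ hsqmin).1 hcase
    have hzpos : 0 < Δ * Real.sqrt πmin := mul_pos hΔ hsqmin
    have hz1 : Δ * Real.sqrt πmin < 1 := lt_of_le_of_lt hzlt hlamlt1
    set x : ℝ := Real.log (1 / (Δ * Real.sqrt πmin)) with hx
    set y : ℝ := Real.log (1 / lamNegJ) with hy
    have hxpos : 0 < x := Real.log_pos (one_lt_one_div hzpos hz1)
    have hypos : 0 < y := Real.log_pos (one_lt_one_div hlampos hlamlt1)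
    set M : ℕ := ⌈x / y⌉₊ with hM
    have hM1 : 1 ≤ M := Nat.one_le_ceil_iff.2 (div_pos hxpos hypos)
    have hMx : x / y ≤ (M : ℝ) := Nat.le_ceil _
    have hMy : x ≤ (M : ℝ) * y := by
      rw [div_le_iff₀ hypos] at hMx
      linarith
    have hylog : y = -Real.log lamNegJ := by
      rw [hy, one_div, Real.log_inv]
    have hxlog : x = -Real.log (Δ * Real.sqrt πmin) := by
      rw [hx, one_div, Real.log_inv]
    have hpow : lamNegJ ^ M ≤ Δ * Real.sqrt πmin := by
      have hlog : Real.log (lamNegJ ^ M) ≤ Real.log (Δ * Real.sqrt πmin) := by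
        rw [Real.log_pow]
        have h1 : (M : ℝ) * Real.log lamNegJ = -((M : ℝ) * y) := by
          rw [hylog]; ring
        have h2 : Real.log (Δ * Real.sqrt πmin) = -x := by
          rw [hxlog]; ring
        rw [h1, h2]
        linarith
      exact (Real.log_le_log_iff (pow_pos hlampos M) hzpos).1 hlog
    have hMcond : lamNegJ ^ M / Real.sqrt πmin ≤ Δ := by
      rw [div_le_iff₀ hsqmin]
      linarith
    have hMmem : M ∈ S := hmem_of M hM1 hMcond
    have hTleM : T ≤ M := by
      rw [hTsInf]
      exact Nat.sInf_le hMmem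
    have hTmem : T ∈ S := by
      rw [hTsInf]
      exact Nat.sInf_mem ⟨M, hMmem⟩
    refine ⟨hTleM, ?_⟩
    calc pathProb P π₀ N
          (fun x => μ + 2 * (ΔJ + Δ) ≤ (1 / (N : ℝ)) * ∑ n : Fin N, f (x n.succ))
        ≤ Real.exp (-((ΔJ + Δ) ^ 2 * (N : ℝ)) / (2 * (T : ℝ))) := mkcore hTmem
      _ ≤ Real.exp (-((ΔJ + Δ) ^ 2 * (N : ℝ)) / (2 * (M : ℝ))) := by
          apply Real.exp_le_exp.2
          have hTpos : (0 : ℝ) < (T : ℝ) := by exact_mod_cast hTmem.1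
          have hMpos : (0 : ℝ) < (M : ℝ) := by exact_mod_cast hM1
          have hTM : (T : ℝ) ≤ (M : ℝ) := by exact_mod_cast hTleM
          have hnum : 0 ≤ (ΔJ + Δ) ^ 2 * (N : ℝ) := by positivity
          have hdivs : ((ΔJ + Δ) ^ 2 * (N : ℝ)) / (2 * (M : ℝ))
              ≤ ((ΔJ + Δ) ^ 2 * (N : ℝ)) / (2 * (T : ℝ)) := by
            gcongr
          rw [neg_div, neg_div]
          linarith
end

section
/- For every initial probability vector π₀ and every n ∈ ℕ, d_f(π₀ᵀ Pⁿ, π) ≤ √( (∑_i π i · (f i)²) / πmin ) · λ_fⁿ. -/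
open Finset

/-- simple spectral bound on the `f`-discrepancy (equation `eq:mix-gap`,
in the form stated). -/
theorem f_disc_spectral_decay
    {d : ℕ} (hd : 0 < d)
    (P : Matrix (Fin d) (Fin d) ℝ) (π f : Fin d → ℝ)
    (hP : IsTransMat P) (hirr : IsIrreducibleMat P) (haper : IsAperiodicMat P)
    (hπ : IsStationaryDist P π) (hrev : IsReversibleMat P π)
    (hf : ∀ i, f i ∈ Set.Icc (0 : ℝ) 1)
    (πmin : ℝ) (hπmin : πmin = Finset.univ.inf' ⟨⟨0, hd⟩, Finset.mem_univ _⟩ π)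
    (A : Matrix (Fin d) (Fin d) ℝ)
    (hA : ∀ i j, A i j = Real.sqrt (π i) * P i j / Real.sqrt (π j))
    (lam : Fin d → ℝ) (γ : Fin d → Fin d → ℝ)
    (horth : ∀ j k, ∑ i, γ j i * γ k i = if j = k then (1 : ℝ) else 0)
    (heig : ∀ j, A.mulVec (γ j) = lam j • γ j)
    (hlam0 : lam ⟨0, hd⟩ = 1) (hmono : ∀ j k : Fin d, j ≤ k → lam k ≤ lam j)
    (hlt1 : ∀ j : Fin d, j ≠ ⟨0, hd⟩ → lam j < 1) (hgtm1 : ∀ j, (-1 : ℝ) < lam j)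
    (hγ0 : ∀ i, γ ⟨0, hd⟩ i = Real.sqrt (π i))
    (q : Fin d → Fin d → ℝ) (hq : ∀ j i, q j i = Real.sqrt (π i) * γ j i)
    (Jf : Finset (Fin d))
    (hJf : ∀ j, j ∈ Jf ↔ (j ≠ ⟨0, hd⟩ ∧ ∑ i, q j i * f i ≠ 0))
    (lamf : ℝ)
    (hlamf : lamf = if hne : Jf.Nonempty then Jf.sup' hne (fun j => |lam j|) else 0) :
    ∀ π₀ : Fin d → ℝ, IsProbVec π₀ → ∀ n : ℕ,
      fDisc f (Matrix.vecMul π₀ (P ^ n)) π ≤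
        Real.sqrt ((∑ i, π i * f i ^ 2) / πmin) * lamf ^ n := by
  intro π₀ hπ₀ n
  obtain ⟨hπpos, hπsum, hπstat⟩ := hπ
  have hsqpos : ∀ i, 0 < Real.sqrt (π i) := fun i => Real.sqrt_pos.mpr (hπpos i)
  have hsqne : ∀ i, Real.sqrt (π i) ≠ 0 := fun i => (hsqpos i).ne'
  set j₀ : Fin d := ⟨0, hd⟩ with hj₀
  set g : Fin d → ℝ := fun i => π₀ i / Real.sqrt (π i) with hg
  set h : Fin d → ℝ := fun i => Real.sqrt (π i) * f i with hh
  set b : Fin d → ℝ := fun j => ∑ i, γ j i * h i with hb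
  set c : Fin d → ℝ := fun j => ∑ i, g i * γ j i with hc
  -- completeness of the eigenbasis
  have hcomp : ∀ i k, ∑ j, γ j i * γ j k = if i = k then (1 : ℝ) else 0 := by
    intro i k
    set G : Matrix (Fin d) (Fin d) ℝ := Matrix.of γ with hG
    have h1 : G * G.transpose = 1 := by
      ext j k'
      simpa [Matrix.mul_apply, Matrix.one_apply, hG] using horth j k'
    have h2 : G.transpose * G = 1 := mul_eq_one_comm.mp h1
    have h3 := congrArg (fun M : Matrix (Fin d) (Fin d) ℝ => M i k) h2
    simpa [Matrix.mul_apply, Matrix.one_apply, hG, mul_comm] using h3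
  -- powers of A on the eigenbasis
  have heign : ∀ (m : ℕ) (j), (A ^ m).mulVec (γ j) = (lam j ^ m) • γ j := by
    intro m j
    induction m with
    | zero => simp [Matrix.one_mulVec]
    | succ m ih =>
      rw [pow_succ, ← Matrix.mulVec_mulVec, heig, Matrix.mulVec_smul, ih, smul_smul,
        pow_succ, mul_comm]
  have hAγ : ∀ (l : Fin d) i, ∑ j, (A ^ n) i j * γ l j = lam l ^ n * γ l i := by
    intro l i
    have := congrFun (heign n l) i
    simpa [Matrix.mulVec, dotProduct, smul_eq_mul] using this
  -- expansion of h in the eigenbasis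
  have hexp : ∀ i, h i = ∑ j, b j * γ j i := by
    intro i
    have e1 : ∑ j, b j * γ j i = ∑ k, h k * (∑ j, γ j k * γ j i) := by
      simp only [hb, Finset.sum_mul]
      rw [Finset.sum_comm]
      refine Finset.sum_congr rfl fun k _ => ?_
      rw [Finset.mul_sum]
      exact Finset.sum_congr rfl fun j _ => by ring
    rw [e1]
    simp [hcomp, Finset.sum_ite_eq]
  -- entries of A^m
  have hAn : ∀ (m : ℕ) i k, (A ^ m) i k = Real.sqrt (π i) * (P ^ m) i k / Real.sqrt (π k) := by
    intro m
    induction m with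
    | zero =>
      intro i k
      rw [pow_zero, pow_zero]
      by_cases hik : i = k
      · subst hik
        rw [Matrix.one_apply_eq, mul_one, div_self (hsqne i)]
      · rw [Matrix.one_apply_ne hik]
        simp
    | succ m ih =>
      intro i k
      rw [pow_succ, pow_succ, Matrix.mul_apply, Matrix.mul_apply]
      have hterm : ∀ m' : Fin d, (A ^ m) i m' * A m' k
          = Real.sqrt (π i) * ((P ^ m) i m' * P m' k) / Real.sqrt (π k) := by
        intro m'
        rw [ih, hA, div_mul_div_comm,
          show Real.sqrt (π i) * (P ^ m) i m' * (Real.sqrt (π m') * P m' k)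
            = Real.sqrt (π m') * (Real.sqrt (π i) * ((P ^ m) i m' * P m' k)) from by ring,
          mul_div_mul_left _ _ (hsqne m')]
      rw [Finset.sum_congr rfl fun m' _ => hterm m', ← Finset.sum_div, ← Finset.mul_sum]
  -- main spectral identity
  have hmain : ∑ j, (Matrix.vecMul π₀ (P ^ n)) j * f j = ∑ l, lam l ^ n * (c l * b l) := by
    have step1 : ∑ j, (Matrix.vecMul π₀ (P ^ n)) j * f j
        = ∑ i, ∑ j, g i * ((A ^ n) i j * h j) := by
      simp only [Matrix.vecMul, dotProduct, Finset.sum_mul]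
      rw [Finset.sum_comm]
      refine Finset.sum_congr rfl fun i _ => Finset.sum_congr rfl fun j _ => ?_
      rw [hAn n i j]
      simp only [hg, hh]
      field_simp [hsqne i, hsqne j]
    rw [step1]
    have step2 : ∀ i, ∑ j, g i * ((A ^ n) i j * h j)
        = ∑ l, g i * (b l * (lam l ^ n * γ l i)) := by
      intro i
      rw [← Finset.mul_sum, ← Finset.mul_sum]
      congr 1
      have e2 : ∑ j, (A ^ n) i j * h j = ∑ j, ∑ l, b l * ((A ^ n) i j * γ l j) := by
        refine Finset.sum_congr rfl fun j _ => ?_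
        rw [hexp j, Finset.mul_sum]
        exact Finset.sum_congr rfl fun l _ => by ring
      rw [e2, Finset.sum_comm]
      refine Finset.sum_congr rfl fun l _ => ?_
      rw [← Finset.mul_sum, hAγ l i]
    rw [Finset.sum_congr rfl fun i _ => step2 i, Finset.sum_comm]
    refine Finset.sum_congr rfl fun l _ => ?_
    simp only [hc, Finset.sum_mul, Finset.mul_sum]
    exact Finset.sum_congr rfl fun i _ => by ring
  -- the top eigenvector contributes the stationary expectation
  have hcj0 : c j₀ = 1 := by
    simp only [hc, hg, hγ0]
    rw [Finset.sum_congr rfl fun i _ => div_mul_cancel₀ (π₀ i) (hsqne i)]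
    exact hπ₀.2
  have hbj0 : b j₀ = ∑ i, π i * f i := by
    simp only [hb, hh, hγ0]
    refine Finset.sum_congr rfl fun i _ => ?_
    rw [← mul_assoc, Real.mul_self_sqrt (hπpos i).le]
  have hbq : ∀ l, b l = ∑ i, q l i * f i := by
    intro l
    refine Finset.sum_congr rfl fun i _ => ?_
    rw [hq]
    simp only [hh]
    ring
  have hdiff : (∑ j, Matrix.vecMul π₀ (P ^ n) j * f j) - (∑ i, π i * f i)
      = ∑ l ∈ Jf, lam l ^ n * (c l * b l) := by
    rw [hmain]
    have hterm : lam j₀ ^ n * (c j₀ * b j₀) = ∑ i, π i * f i := by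
      rw [hlam0, hcj0, hbj0]; ring
    rw [← hterm, ← Finset.sum_erase_add Finset.univ _ (Finset.mem_univ j₀),
      add_sub_cancel_right]
    symm
    refine Finset.sum_subset ?_ ?_
    · intro l hl
      exact Finset.mem_erase.mpr ⟨((hJf l).mp hl).1, Finset.mem_univ l⟩
    · intro l hl hlnot
      have hlne : l ≠ j₀ := (Finset.mem_erase.mp hl).1
      have hz : ∑ i, q l i * f i = 0 := by
        by_contra hne
        exact hlnot ((hJf l).mpr ⟨hlne, hne⟩)
      rw [hbq l, hz, mul_zero, mul_zero]
  -- positivity facts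
  have hπminpos : 0 < πmin := by
    rw [hπmin]
    exact (Finset.lt_inf'_iff _).mpr fun i _ => hπpos i
  have hπminle : ∀ i, πmin ≤ π i := by
    intro i; rw [hπmin]; exact Finset.inf'_le _ (Finset.mem_univ i)
  have hlamf0 : 0 ≤ lamf := by
    rw [hlamf]
    split
    · next hne =>
      obtain ⟨j, hj⟩ := hne
      exact le_trans (abs_nonneg (lam j)) (Finset.le_sup' (fun j => |lam j|) hj)
    · exact le_refl 0
  have hlamle : ∀ l ∈ Jf, |lam l| ≤ lamf := by
    intro l hl
    rw [hlamf, dif_pos ⟨l, hl⟩]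
    exact Finset.le_sup' (fun j => |lam j|) hl
  -- Parseval
  have parseval : ∀ v : Fin d → ℝ, ∑ l, (∑ i, v i * γ l i) ^ 2 = ∑ i, v i ^ 2 := by
    intro v
    have e : ∀ l : Fin d, (∑ i, v i * γ l i) ^ 2
        = ∑ i, ∑ k, v i * v k * (γ l i * γ l k) := by
      intro l
      rw [sq, Finset.sum_mul_sum]
      exact Finset.sum_congr rfl fun i _ => Finset.sum_congr rfl fun k _ => by ring
    rw [Finset.sum_congr rfl fun l _ => e l, Finset.sum_comm]
    have e2 : ∀ i : Fin d, (∑ l : Fin d, ∑ k, v i * v k * (γ l i * γ l k)) = v i ^ 2 := by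
      intro i
      rw [Finset.sum_comm]
      have e3 : ∀ k : Fin d, (∑ l : Fin d, v i * v k * (γ l i * γ l k))
          = v i * v k * (if i = k then (1 : ℝ) else 0) := by
        intro k
        rw [← Finset.mul_sum, hcomp]
      rw [Finset.sum_congr rfl fun k _ => e3 k]
      simp [Finset.sum_ite_eq, sq, mul_ite]
    exact Finset.sum_congr rfl fun i _ => e2 i
  have hpc : ∑ l, c l ^ 2 = ∑ i, g i ^ 2 := parseval g
  have hpb : ∑ l, b l ^ 2 = ∑ i, h i ^ 2 := by
    rw [← parseval h]
    refine Finset.sum_congr rfl fun l _ => ?_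
    congr 1
    exact Finset.sum_congr rfl fun i _ => mul_comm _ _
  have hgsum : ∑ i, g i ^ 2 ≤ 1 / πmin := by
    have hterm : ∀ i, g i ^ 2 ≤ π₀ i / πmin := by
      intro i
      have h1 : g i ^ 2 = π₀ i ^ 2 / π i := by
        simp only [hg, div_pow]
        rw [Real.sq_sqrt (hπpos i).le]
      rw [h1]
      have hπ₀le1 : π₀ i ≤ 1 := by
        rw [← hπ₀.2]
        exact Finset.single_le_sum (fun j _ => hπ₀.1 j) (Finset.mem_univ i)
      have h2 : π₀ i ^ 2 ≤ π₀ i := by nlinarith [hπ₀.1 i]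
      exact div_le_div₀ (hπ₀.1 i) h2 hπminpos (hπminle i)
    calc ∑ i, g i ^ 2 ≤ ∑ i, π₀ i / πmin := Finset.sum_le_sum fun i _ => hterm i
      _ = 1 / πmin := by rw [← Finset.sum_div, hπ₀.2]
  have hhsum : ∑ i, h i ^ 2 = ∑ i, π i * f i ^ 2 := by
    refine Finset.sum_congr rfl fun i _ => ?_
    simp only [hh]
    rw [mul_pow, Real.sq_sqrt (hπpos i).le]
  have hLHS : fDisc f (Matrix.vecMul π₀ (P ^ n)) π = |∑ l ∈ Jf, lam l ^ n * (c l * b l)| := by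
    rw [fDisc, hdiff]
  rw [hLHS]
  calc |∑ l ∈ Jf, lam l ^ n * (c l * b l)|
      ≤ ∑ l ∈ Jf, |lam l ^ n * (c l * b l)| := Finset.abs_sum_le_sum_abs _ _
    _ ≤ ∑ l ∈ Jf, lamf ^ n * (|c l| * |b l|) := by
        refine Finset.sum_le_sum fun l hl => ?_
        rw [abs_mul, abs_mul, abs_pow]
        have hpow : |lam l| ^ n ≤ lamf ^ n := pow_le_pow_left₀ (abs_nonneg _) (hlamle l hl) n
        exact mul_le_mul_of_nonneg_right hpow (mul_nonneg (abs_nonneg _) (abs_nonneg _))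
    _ = lamf ^ n * ∑ l ∈ Jf, |c l| * |b l| := by rw [Finset.mul_sum]
    _ ≤ lamf ^ n * (Real.sqrt (∑ l ∈ Jf, |c l| ^ 2) * Real.sqrt (∑ l ∈ Jf, |b l| ^ 2)) := by
        refine mul_le_mul_of_nonneg_left ?_ (pow_nonneg hlamf0 n)
        exact Real.sum_mul_le_sqrt_mul_sqrt _ _ _
    _ ≤ lamf ^ n * (Real.sqrt (∑ l, c l ^ 2) * Real.sqrt (∑ l, b l ^ 2)) := by
        refine mul_le_mul_of_nonneg_left ?_ (pow_nonneg hlamf0 n)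
        refine mul_le_mul (Real.sqrt_le_sqrt ?_) (Real.sqrt_le_sqrt ?_)
          (Real.sqrt_nonneg _) (Real.sqrt_nonneg _)
        · simp only [sq_abs]
          exact Finset.sum_le_sum_of_subset_of_nonneg (Finset.subset_univ _)
            fun i _ _ => sq_nonneg _
        · simp only [sq_abs]
          exact Finset.sum_le_sum_of_subset_of_nonneg (Finset.subset_univ _)
            fun i _ _ => sq_nonneg _
    _ ≤ lamf ^ n * (Real.sqrt (1 / πmin) * Real.sqrt (∑ i, π i * f i ^ 2)) := by
        refine mul_le_mul_of_nonneg_left ?_ (pow_nonneg hlamf0 n)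
        rw [hpc, hpb, hhsum]
        exact mul_le_mul_of_nonneg_right (Real.sqrt_le_sqrt hgsum) (Real.sqrt_nonneg _)
    _ = Real.sqrt ((∑ i, π i * f i ^ 2) / πmin) * lamf ^ n := by
        rw [← Real.sqrt_mul (by positivity : (0 : ℝ) ≤ 1 / πmin), one_div_mul_eq_div]
        ring
end

section
/- For every initial probability vector π₀ and every n ∈ ℕ, d_TV(π₀ᵀ Pⁿ, π) ≤ λ_*ⁿ / √πmin, where λ_* := max(λ₂, |λ_d|). -/
open Finset

/-- Auxiliary: Parseval-type identity for an orthonormal family of rows. -/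
lemma sum_sq_ortho {d : ℕ} (g : Fin d → Fin d → ℝ)
    (h : ∀ j k, ∑ i, g j i * g k i = if j = k then (1 : ℝ) else 0)
    (s : Finset (Fin d)) (b : Fin d → ℝ) :
    ∑ i, (∑ k ∈ s, b k * g k i) ^ 2 = ∑ k ∈ s, (b k) ^ 2 := by
  calc ∑ i, (∑ k ∈ s, b k * g k i) ^ 2
      = ∑ i, ∑ k ∈ s, ∑ l ∈ s, (b k * g k i) * (b l * g l i) := by
        refine Finset.sum_congr rfl fun i _ => ?_
        rw [sq, Finset.sum_mul_sum]
    _ = ∑ k ∈ s, ∑ l ∈ s, b k * b l * ∑ i, g k i * g l i := by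
        rw [Finset.sum_comm]
        refine Finset.sum_congr rfl fun k _ => ?_
        rw [Finset.sum_comm]
        refine Finset.sum_congr rfl fun l _ => ?_
        rw [Finset.mul_sum]
        exact Finset.sum_congr rfl fun i _ => by ring
    _ = ∑ k ∈ s, (b k) ^ 2 := by
        refine Finset.sum_congr rfl fun k hk => ?_
        calc ∑ l ∈ s, b k * b l * ∑ i, g k i * g l i
            = ∑ l ∈ s, if k = l then b k * b l else 0 := by
              refine Finset.sum_congr rfl fun l _ => ?_
              rw [h k l]; split_ifs with hkl <;> ring
          _ = (b k) ^ 2 := by rw [Finset.sum_ite_eq s k (fun l => b k * b l)]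
                              simp [hk, sq]

set_option maxHeartbeats 2000000 in
/-- uniform total-variation decay (equation `eq:mix-TV`, in the form stated). -/
theorem tv_spectral_decay
    {d : ℕ} (hd : 2 ≤ d)
    (P : Matrix (Fin d) (Fin d) ℝ) (π : Fin d → ℝ)
    (hP : IsTransMat P) (hirr : IsIrreducibleMat P) (haper : IsAperiodicMat P)
    (hπ : IsStationaryDist P π) (hrev : IsReversibleMat P π)
    (πmin : ℝ) (hπmin : πmin = Finset.univ.inf' ⟨⟨0, by omega⟩, Finset.mem_univ _⟩ π)
    (A : Matrix (Fin d) (Fin d) ℝ)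
    (hA : ∀ i j, A i j = Real.sqrt (π i) * P i j / Real.sqrt (π j))
    (lam : Fin d → ℝ) (γ : Fin d → Fin d → ℝ)
    (horth : ∀ j k, ∑ i, γ j i * γ k i = if j = k then (1 : ℝ) else 0)
    (heig : ∀ j, A.mulVec (γ j) = lam j • γ j)
    (hlam0 : lam ⟨0, by omega⟩ = 1) (hmono : ∀ j k : Fin d, j ≤ k → lam k ≤ lam j)
    (hlt1 : ∀ j : Fin d, j ≠ ⟨0, by omega⟩ → lam j < 1) (hgtm1 : ∀ j, (-1 : ℝ) < lam j)
    (hγ0 : ∀ i, γ ⟨0, by omega⟩ i = Real.sqrt (π i)) :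
    ∀ π₀ : Fin d → ℝ, IsProbVec π₀ → ∀ n : ℕ,
      tvDist (Matrix.vecMul π₀ (P ^ n)) π ≤
        (max (lam ⟨1, by omega⟩) |lam ⟨d - 1, by omega⟩|) ^ n / Real.sqrt πmin := by
  obtain ⟨hπpos, hπsum, -⟩ := hπ
  intro π₀ hπ₀ n
  obtain ⟨hπ₀pos, hπ₀sum⟩ := hπ₀
  set k0 : Fin d := ⟨0, by omega⟩ with hk0
  set k1 : Fin d := ⟨1, by omega⟩ with hk1
  set kd : Fin d := ⟨d - 1, by omega⟩ with hkd
  set lstar : ℝ := max (lam k1) |lam kd| with hlstar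
  have hlstar0 : 0 ≤ lstar := le_trans (abs_nonneg _) (le_max_right _ _)
  set sq : Fin d → ℝ := fun i => Real.sqrt (π i) with hsqdef
  have hsqpos : ∀ i, 0 < sq i := fun i => Real.sqrt_pos.2 (hπpos i)
  have hsqne : ∀ i, sq i ≠ 0 := fun i => (hsqpos i).ne'
  have hsqsq : ∀ i, sq i * sq i = π i := fun i => Real.mul_self_sqrt (hπpos i).le
  have hπminle : ∀ i, πmin ≤ π i := by
    intro i; rw [hπmin]; exact Finset.inf'_le _ (Finset.mem_univ i)
  have hπminpos : 0 < πmin := by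
    rw [hπmin]; exact (Finset.lt_inf'_iff _).2 fun i _ => hπpos i
  -- A = D P D⁻¹ and its powers
  set Dm : Matrix (Fin d) (Fin d) ℝ := Matrix.diagonal sq with hDm
  set Em : Matrix (Fin d) (Fin d) ℝ := Matrix.diagonal (fun i => (sq i)⁻¹) with hEm
  have hDE : Dm * Em = 1 := by
    rw [hDm, hEm, Matrix.diagonal_mul_diagonal]
    have : (fun i => sq i * (sq i)⁻¹) = fun _ => (1 : ℝ) :=
      funext fun i => mul_inv_cancel₀ (hsqne i)
    rw [this, Matrix.diagonal_one]
  have hED : Em * Dm = 1 := by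
    rw [hEm, hDm, Matrix.diagonal_mul_diagonal]
    have : (fun i => (sq i)⁻¹ * sq i) = fun _ => (1 : ℝ) :=
      funext fun i => inv_mul_cancel₀ (hsqne i)
    rw [this, Matrix.diagonal_one]
  have hAeq : A = Dm * P * Em := by
    ext i j
    rw [hA, Matrix.mul_diagonal, Matrix.diagonal_mul, div_eq_mul_inv]
  have hApow : ∀ m : ℕ, A ^ m = Dm * P ^ m * Em := by
    intro m
    induction m with
    | zero => simp [pow_zero, Matrix.mul_one, hDE]
    | succ m ih =>
        have hkey : Em * (Dm * (P * Em)) = P * Em := by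
          rw [← Matrix.mul_assoc, hED, Matrix.one_mul]
        rw [pow_succ, pow_succ, ih, hAeq]
        simp only [Matrix.mul_assoc, hkey]
  have hAn : ∀ i j, (A ^ n) i j = sq i * ((P ^ n) i j * (sq j)⁻¹) := by
    intro i j
    rw [hApow n, Matrix.mul_diagonal, Matrix.diagonal_mul, mul_assoc]
  -- symmetry
  have hAsymm : A.transpose = A := by
    ext i j
    rw [Matrix.transpose_apply, hA, hA]
    rw [div_eq_div_iff (hsqne i) (hsqne j)]
    have h1 : π i * P i j = π j * P j i := hrev i j
    rw [← hsqsq i, ← hsqsq j] at h1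
    linear_combination -h1
  have hAnsymm : ∀ i j, (A ^ n) i j = (A ^ n) j i := by
    intro i j
    have h : (A ^ n).transpose = A ^ n := by rw [Matrix.transpose_pow, hAsymm]
    exact congrFun (congrFun h j) i
  -- eigenvectors of powers
  have hpowEig : ∀ (m : ℕ) k, (A ^ m).mulVec (γ k) = (lam k ^ m) • γ k := by
    intro m k
    induction m with
    | zero => simp [pow_zero, Matrix.one_mulVec]
    | succ m ih =>
        rw [pow_succ, ← Matrix.mulVec_mulVec, heig k, Matrix.mulVec_smul, ih,
          smul_smul, pow_succ]
        ring_nf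
  -- column orthonormality
  have hcol : ∀ i j, ∑ k, γ k i * γ k j = if i = j then (1 : ℝ) else 0 := by
    set G : Matrix (Fin d) (Fin d) ℝ := Matrix.of γ with hG
    have hGG : G * G.transpose = 1 := by
      ext j k
      rw [Matrix.mul_apply, Matrix.one_apply]
      simpa [hG] using horth j k
    have hGG' : G.transpose * G = 1 := mul_eq_one_comm.mp hGG
    intro i j
    have := congrFun (congrFun hGG' i) j
    rw [Matrix.mul_apply, Matrix.one_apply] at this
    simpa [hG] using this
  -- coordinates
  set w : Fin d → ℝ := fun i => π₀ i / sq i with hw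
  set c : Fin d → ℝ := fun k => ∑ i, w i * γ k i with hc
  have hwdecomp : ∀ i, w i = ∑ k, c k * γ k i := by
    intro i
    calc w i = ∑ j, w j * (if j = i then (1 : ℝ) else 0) := by
          simp [mul_ite]
      _ = ∑ j, w j * ∑ k, γ k j * γ k i := by
          refine Finset.sum_congr rfl fun j _ => ?_
          rw [hcol j i]
      _ = ∑ k, c k * γ k i := by
          simp only [hc, Finset.sum_mul, Finset.mul_sum]
          rw [Finset.sum_comm]
          exact Finset.sum_congr rfl fun k _ => Finset.sum_congr rfl fun j _ => by ring
  have hAnw : ∀ j, ∑ i, w i * (A ^ n) i j = ∑ k, c k * lam k ^ n * γ k j := by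
    intro j
    calc ∑ i, w i * (A ^ n) i j
        = ∑ i, (A ^ n) j i * ∑ k, c k * γ k i := by
          refine Finset.sum_congr rfl fun i _ => ?_
          rw [← hwdecomp i, hAnsymm i j, mul_comm]
      _ = ∑ k, c k * ∑ i, (A ^ n) j i * γ k i := by
          simp only [Finset.mul_sum]
          rw [Finset.sum_comm]
          exact Finset.sum_congr rfl fun k _ => Finset.sum_congr rfl fun i _ => by ring
      _ = ∑ k, c k * lam k ^ n * γ k j := by
          refine Finset.sum_congr rfl fun k _ => ?_
          have := congrFun (hpowEig n k) j
          rw [Matrix.mulVec, dotProduct] at this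
          rw [this]
          simp [mul_assoc]
  have hPnval : ∀ j, Matrix.vecMul π₀ (P ^ n) j = sq j * ∑ k, c k * lam k ^ n * γ k j := by
    intro j
    rw [← hAnw j, Matrix.vecMul, dotProduct, Finset.mul_sum]
    refine Finset.sum_congr rfl fun i _ => ?_
    rw [hAn i j, hw]
    field_simp [hsqne i, hsqne j]
  have hc0 : c k0 = 1 := by
    rw [hc]
    calc ∑ i, w i * γ k0 i = ∑ i, π₀ i := by
          refine Finset.sum_congr rfl fun i _ => ?_
          rw [hγ0 i, hw]
          exact div_mul_cancel₀ _ (hsqne i)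
      _ = 1 := hπ₀sum
  set e : Finset (Fin d) := Finset.univ.erase k0 with he
  set u : Fin d → ℝ := fun j => ∑ k ∈ e, c k * lam k ^ n * γ k j with hu
  have hdiff : ∀ j, Matrix.vecMul π₀ (P ^ n) j - π j = sq j * u j := by
    intro j
    rw [hPnval j, ← hsqsq j]
    have hsplit : ∑ k, c k * lam k ^ n * γ k j
        = c k0 * lam k0 ^ n * γ k0 j + u j := by
      rw [hu, he, ← Finset.add_sum_erase _ _ (Finset.mem_univ k0)]
    rw [hsplit, hc0, hlam0, hγ0 j]
    ring
  -- spectral bounds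
  have hbound_lam : ∀ k ∈ e, |lam k| ≤ lstar := by
    intro k hk
    have hkne : k ≠ k0 := (Finset.mem_erase.mp hk).1
    have hkval : k.val ≠ 0 := fun h => hkne (Fin.ext h)
    have hk1le : k1 ≤ k := by rw [Fin.le_def]; simp only [hk1]; omega
    have hkled : k ≤ kd := by
      rw [Fin.le_def]; simp only [hkd]; have := k.isLt; omega
    rw [abs_le]
    constructor
    · calc -lstar ≤ -|lam kd| := neg_le_neg (le_max_right _ _)
        _ ≤ lam kd := neg_abs_le _
        _ ≤ lam k := hmono k kd hkled
    · exact le_trans (hmono k1 k hk1le) (le_max_left _ _)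
  have hu2 : ∑ j, (u j) ^ 2 = ∑ k ∈ e, (c k * lam k ^ n) ^ 2 :=
    sum_sq_ortho γ horth e _
  have hc2 : ∑ k, (c k) ^ 2 = ∑ i, (w i) ^ 2 := by
    have := sum_sq_ortho (fun j k => γ k j) hcol Finset.univ w
    simpa [hc] using this.symm ▸ this
  have hw2 : ∑ i, (w i) ^ 2 ≤ 1 / πmin := by
    have hstep : ∀ i, (w i) ^ 2 ≤ π₀ i / πmin := by
      intro i
      have hwi : (w i) ^ 2 = π₀ i ^ 2 / π i := by
        rw [hw]; rw [div_pow, show (sq i) ^ 2 = π i from by rw [pow_two, hsqsq i]]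
      rw [hwi]
      have hle1 : π₀ i ≤ 1 := by
        rw [← hπ₀sum]
        exact Finset.single_le_sum (fun j _ => hπ₀pos j) (Finset.mem_univ i)
      have hsq : π₀ i ^ 2 ≤ π₀ i := by nlinarith [hπ₀pos i]
      exact div_le_div₀ (hπ₀pos i) hsq hπminpos (hπminle i)
    calc ∑ i, (w i) ^ 2 ≤ ∑ i, π₀ i / πmin := Finset.sum_le_sum fun i _ => hstep i
      _ = 1 / πmin := by rw [← Finset.sum_div, hπ₀sum]
  have husum : ∑ j, (u j) ^ 2 ≤ (lstar ^ n) ^ 2 / πmin := by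
    rw [hu2]
    have h1 : ∑ k ∈ e, (c k * lam k ^ n) ^ 2 ≤ ∑ k ∈ e, (lstar ^ n) ^ 2 * (c k) ^ 2 := by
      refine Finset.sum_le_sum fun k hk => ?_
      have habs : |lam k| ^ n ≤ lstar ^ n :=
        pow_le_pow_left₀ (abs_nonneg _) (hbound_lam k hk) n
      have : (lam k ^ n) ^ 2 ≤ (lstar ^ n) ^ 2 := by
        rw [← sq_abs (lam k ^ n), abs_pow]
        exact pow_le_pow_left₀ (by positivity) habs 2
      calc (c k * lam k ^ n) ^ 2 = (lam k ^ n) ^ 2 * (c k) ^ 2 := by ring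
        _ ≤ (lstar ^ n) ^ 2 * (c k) ^ 2 :=
            mul_le_mul_of_nonneg_right this (sq_nonneg _)
    have h2 : ∑ k ∈ e, (c k) ^ 2 ≤ ∑ k, (c k) ^ 2 :=
      Finset.sum_le_sum_of_subset_of_nonneg (Finset.subset_univ _)
        (fun k _ _ => sq_nonneg _)
    calc ∑ k ∈ e, (c k * lam k ^ n) ^ 2
        ≤ (lstar ^ n) ^ 2 * ∑ k ∈ e, (c k) ^ 2 := by rw [Finset.mul_sum]; exact h1
      _ ≤ (lstar ^ n) ^ 2 * (1 / πmin) := by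
          refine mul_le_mul_of_nonneg_left ?_ (by positivity)
          exact le_trans h2 (hc2 ▸ hw2)
      _ = (lstar ^ n) ^ 2 / πmin := by ring
  -- Cauchy–Schwarz
  have hCS : (∑ j, sq j * |u j|) ^ 2 ≤ ∑ j, (u j) ^ 2 := by
    have h1 := Finset.sum_mul_sq_le_sq_mul_sq Finset.univ sq (fun j => |u j|)
    have h2 : ∑ j, (sq j) ^ 2 = 1 := by
      rw [← hπsum]
      exact Finset.sum_congr rfl fun j _ => by rw [pow_two, hsqsq j]
    have h3 : ∑ j, |u j| ^ 2 = ∑ j, (u j) ^ 2 :=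
      Finset.sum_congr rfl fun j _ => sq_abs _
    calc (∑ j, sq j * |u j|) ^ 2 ≤ (∑ j, (sq j) ^ 2) * ∑ j, |u j| ^ 2 := h1
      _ = ∑ j, (u j) ^ 2 := by rw [h2, h3, one_mul]
  have hfinal : ∑ j, sq j * |u j| ≤ lstar ^ n / Real.sqrt πmin := by
    have hnn : 0 ≤ ∑ j, sq j * |u j| :=
      Finset.sum_nonneg fun j _ => mul_nonneg (hsqpos j).le (abs_nonneg _)
    have h1 : (∑ j, sq j * |u j|) ^ 2 ≤ (lstar ^ n) ^ 2 / πmin :=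
      le_trans hCS husum
    have h2 := Real.sqrt_le_sqrt h1
    rw [Real.sqrt_sq hnn] at h2
    calc ∑ j, sq j * |u j| ≤ Real.sqrt ((lstar ^ n) ^ 2 / πmin) := h2
      _ = lstar ^ n / Real.sqrt πmin := by
          rw [Real.sqrt_div (sq_nonneg _), Real.sqrt_sq (by positivity)]
  -- conclude
  have hTV : tvDist (Matrix.vecMul π₀ (P ^ n)) π = (1 / 2) * ∑ j, sq j * |u j| := by
    rw [tvDist]
    congr 1
    refine Finset.sum_congr rfl fun j _ => ?_
    rw [hdiff j, abs_mul, abs_of_pos (hsqpos j)]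
  rw [hTV]
  have hrhs : 0 ≤ lstar ^ n / Real.sqrt πmin := by positivity
  linarith
end
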